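/- arXiv:1703.01826 — 14 statements merged into one kernel-verified Lean document; each statement's English description precedes it below -/
import Mathlib

section
/- Let d ≥ 1 and let ω : Fin d → ℝ be injective. Let A^{x'|x}_{y'|y} ∈ ℂ (for x,x',y,y' ∈ Fin d) be coefficients such that the Choi-type matrix J indexed by pairs, J_{(x',x),(y',y)} := A^{x'|x}_{y'|y}, is positive semidefinite, and A^{x'|x}_{y'|y} = 0 whenever ω_{x'} − ω_x ≠ ω_{y'} − ω_y. Write A_{x'|x} := A^{x'|x}_{x'|x} (a nonnegative real), define L_{x'|x} := A_{x'|x} for x' ≠ x and L_{x|x} := −Σ_{z≠x} A_{z|x}, and set γ_{x'y'} := (|L_{x'|x'}| + |L_{y'|y'}|)/2. Suppose ρ : ℝ → Matrix (Fin d) (Fin d) ℂ is differentiable and satisfies, for all t and all x',y', the covariant Lindblad equation dρ_{x'y'}/dt = Σ_{(x,y) : ω_x − ω_y = ω_{x'} − ω_{y'}} [ A^{x'|x}_{y'|y} − (1/2)·Σ_z (A_{z|x} + A_{z|y})·δ_{x x'} δ_{y y'} ] ρ_{xy}. Let ρ̃ : ℝ → (Fin d × Fin d → ℝ) be differentiable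 and satisfy dρ̃_{x'y'}/dt = −γ_{x'y'} ρ̃_{x'y'} + Σ_{(x,y) : ω_x − ω_y = ω_{x'} − ω_{y'}, x ≠ x', y ≠ y'} √(L_{x'|x} L_{y'|y}) · ρ̃_{xy}, with initial condition ρ̃_{x'y'}(0) = |ρ_{x'y'}(0)|. Then |ρ_{x'y'}(t)| ≤ ρ̃_{x'y'}(t) for all t ≥ 0 and all x', y'. (Minimal decoherence theorem, Theorem 1.) -/
/-! Since `ω` is injective, the only pair `(x, y)` with `ω_x - ω_y = ω_{x'} - ω_{y'}` and `x = x'` or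
`y = y'` is `(x', y')` itself, so each coherence obeys `ρ̇_{x'y'} = a ρ_{x'y'} + Σ A^{x'|x}_{y'|y} ρ_{xy}`, the sum over
transport pairs `x ≠ x'`, `y ≠ y'`. Positivity of the 2 × 2 principal minors of the Choi matrix
gives `Re a ≤ -γ_{x'y'}` and `|A^{x'|x}_{y'|y}| ≤ √(L_{x'|x} L_{y'|y})`. Hence the upper right
Dini derivative satisfies `D⁺|ρ_{x'y'}| ≤ -γ_{x'y'} |ρ_{x'y'}| + Σ √(L_{x'|x} L_{y'|y}) |ρ_{xy}|`,
while `ρ̃` satisfies the same relation with equality. As the transport rates are nonnegative, the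
maximum `m` of `|ρ_{xy}| - ρ̃_{xy}` obeys `D⁺m ≤ K |m|`, so `m ≤ ε e^{(K+1)t}` for every `ε > 0`,
and `m` never becomes positive. -/

open Matrix Finset Filter Topology
open scoped ComplexOrder InnerProductSpace

theorem Matrix.PosSemidef.norm_apply_sq_le {n : Type*} {J : Matrix n n ℂ} (hJ : J.PosSemidef)
    (a b : n) : ‖J a b‖ ^ 2 ≤ (J a a).re * (J b b).re := by
  have hdet := (hJ.submatrix ![a, b]).det_nonneg
  simp only [det_fin_two, submatrix_apply, cons_val_zero, cons_val_one] at hdet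
  rw [← hJ.isHermitian.apply b a, ← hJ.isHermitian.coe_re_apply_self a,
    ← hJ.isHermitian.coe_re_apply_self b, RCLike.star_def, Complex.mul_conj',
    RCLike.re_to_complex, RCLike.re_to_complex] at hdet
  exact Complex.real_le_real.1 (by push_cast; exact sub_nonneg.1 hdet)

/-- `D⁺f(t) ≤ b`, stated without `limsup` so that unbounded slopes need no junk value. -/
def UpperRightDiniLE (f : ℝ → ℝ) (t b : ℝ) : Prop :=
  ∀ r, b < r → ∀ᶠ z in 𝓝[>] t, slope f t z < r

theorem UpperRightDiniLE.mono {f : ℝ → ℝ} {t b b' : ℝ} (hf : UpperRightDiniLE f t b)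
    (hb : b ≤ b') : UpperRightDiniLE f t b' :=
  fun r hr => hf r (hb.trans_lt hr)

theorem HasDerivAt.upperRightDiniLE {f : ℝ → ℝ} {f' t : ℝ} (hf : HasDerivAt f f' t) :
    UpperRightDiniLE f t f' := fun _ hr =>
  (hf.tendsto_slope.mono_left (nhdsGT_le_nhdsNE t)).eventually_lt_const hr

theorem UpperRightDiniLE.sub_hasDerivAt {f g : ℝ → ℝ} {t b g' : ℝ} (hf : UpperRightDiniLE f t b)
    (hg : HasDerivAt g g' t) : UpperRightDiniLE (fun s => f s - g s) t (b - g') := by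
  intro r hr
  set δ := (r - (b - g')) / 2
  have hδ : 2 * δ = r - (b - g') := by simp only [δ]; ring
  have hg' : ∀ᶠ z in 𝓝[>] t, g' - δ < slope g t z :=
    (hg.tendsto_slope.mono_left (nhdsGT_le_nhdsNE t)).eventually_const_lt (by linarith)
  filter_upwards [hf (b + δ) (by linarith), hg'] with z hfz hgz
  rw [slope_def_field] at hfz hgz ⊢
  rw [sub_sub_sub_comm, sub_div]
  linarith

theorem HasDerivAt.upperRightDiniLE_norm_of_eq_zero {E : Type*} [NormedAddCommGroup E]
    [NormedSpace ℝ E] {f : ℝ → E} {f' : E} {t : ℝ} (hf : HasDerivAt f f' t) (h0 : f t = 0) :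
    UpperRightDiniLE (‖f ·‖) t ‖f'‖ := by
  intro r hr
  have hslope := (hf.tendsto_slope.mono_left (nhdsGT_le_nhdsNE t)).norm.eventually_lt_const hr
  filter_upwards [hslope, self_mem_nhdsWithin] with z hz (hzt : t < z)
  rw [slope_def_module, h0, sub_zero, norm_smul, norm_inv, Real.norm_of_nonneg (sub_pos.2 hzt).le,
    ← div_eq_inv_mul] at hz
  rwa [slope_def_field, h0, norm_zero, sub_zero]

theorem HasDerivAt.norm {F : Type*} [NormedAddCommGroup F] [InnerProductSpace ℝ F] {f : ℝ → F}
    {f' : F} {t : ℝ} (hf : HasDerivAt f f' t) (h0 : f t ≠ 0) :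
    HasDerivAt (‖f ·‖) (⟪f t, f'⟫_ℝ / ‖f t‖) t := by
  have hsq := hf.norm_sq.sqrt (by positivity)
  simp only [Real.sqrt_sq (norm_nonneg _)] at hsq
  convert hsq using 1
  field_simp

theorem upperRightDiniLE_norm_of_hasDerivAt {f : ℝ → ℂ} {a g : ℂ} {t : ℝ}
    (hf : HasDerivAt f (a * f t + g) t) :
    UpperRightDiniLE (‖f ·‖) t (a.re * ‖f t‖ + ‖g‖) := by
  by_cases h0 : f t = 0
  · simpa [h0] using hf.upperRightDiniLE_norm_of_eq_zero h0
  refine (hf.norm h0).upperRightDiniLE.mono ?_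
  have hpos : 0 < ‖f t‖ := norm_pos_iff.2 h0
  rw [div_le_iff₀ hpos, Complex.inner, add_mul, Complex.add_re, mul_assoc, Complex.mul_conj',
    ← Complex.ofReal_pow, Complex.re_mul_ofReal]
  have := (Complex.re_le_norm (g * (starRingEnd ℂ) (f t))).trans_eq
    (by rw [norm_mul, Complex.norm_conj])
  nlinarith

section Comparison

variable {ι : Type*} [Fintype ι] [Nonempty ι]

theorem upperRightDiniLE_sup' {W : ι → ℝ → ℝ} {t b : ℝ} (hWc : ∀ i, ContinuousAt (W i) t)
    (hW : ∀ i, W i t = univ.sup' univ_nonempty (W · t) → UpperRightDiniLE (W i) t b) :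
    UpperRightDiniLE (fun s => univ.sup' univ_nonempty (W · s)) t b := by
  intro r hr
  set m := univ.sup' univ_nonempty (W · t)
  have hline : ∀ i, ∀ᶠ z in 𝓝[>] t, W i z < m + r * (z - t) := by
    intro i
    rcases (le_sup' (W · t) (mem_univ i)).eq_or_lt with hi | hi
    · filter_upwards [hW i hi r hr, self_mem_nhdsWithin] with z hz (hzt : t < z)
      rw [slope_def_field, div_lt_iff₀ (sub_pos.2 hzt)] at hz
      linarith
    · have hlim : Tendsto (fun z => m + r * (z - t)) (𝓝[>] t) (𝓝 m) := by
        apply tendsto_nhdsWithin_of_tendsto_nhds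
        simpa using ((continuous_sub_right t).const_mul r |>.const_add m).tendsto t
      exact (hWc i).tendsto.mono_left nhdsWithin_le_nhds |>.eventually_lt hlim hi
  filter_upwards [eventually_all.2 hline, self_mem_nhdsWithin] with z hz (hzt : t < z)
  rw [slope_def_field, div_lt_iff₀ (sub_pos.2 hzt)]
  linarith [(sup'_lt_iff univ_nonempty).2 fun i _ => hz i]

theorem nonpos_of_upperRightDiniLE {W : ι → ℝ → ℝ} (hWc : ∀ i, Continuous (W i))
    (a : ι → ℝ) (s : ι → Finset ι) (c : ι → ι → ℝ) (hc : ∀ i j, 0 ≤ c i j)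
    (hW : ∀ i, ∀ t ≥ 0, UpperRightDiniLE (W i) t (a i * W i t + ∑ j ∈ s i, c i j * W j t))
    (h0 : ∀ i, W i 0 ≤ 0) {t : ℝ} (ht : 0 ≤ t) (i : ι) : W i t ≤ 0 := by
  set m := fun u => univ.sup' univ_nonempty (W · u)
  set K := ∑ i, (|a i| + ∑ j ∈ s i, c i j)
  have hm : ∀ u ≥ 0, UpperRightDiniLE m u (K * |m u|) := by
    intro u hu
    refine upperRightDiniLE_sup' (fun i => (hWc i).continuousAt) fun i hi => (hW i u hu).mono ?_
    have hrow : |a i| + ∑ j ∈ s i, c i j ≤ K :=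
      single_le_sum (f := fun i => |a i| + ∑ j ∈ s i, c i j)
        (fun i _ => add_nonneg (abs_nonneg _) (sum_nonneg fun j _ => hc i j)) (mem_univ i)
    have hsum : ∑ j ∈ s i, c i j * W j u ≤ (∑ j ∈ s i, c i j) * |m u| := by
      rw [sum_mul]
      exact sum_le_sum fun j _ => mul_le_mul_of_nonneg_left
        ((le_sup' (W · u) (mem_univ j)).trans (le_abs_self _)) (hc i j)
    have hdiag : a i * W i u ≤ |a i| * |m u| := by
      rw [hi, ← abs_mul]
      exact le_abs_self _
    nlinarith [abs_nonneg (m u)]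
  have hgrowth : ∀ ε > 0, m t ≤ ε * Real.exp ((K + 1) * t) := by
    intro ε hε
    refine image_le_of_liminf_slope_right_lt_deriv_boundary (f' := fun u => K * |m u|)
      (Continuous.finset_sup'_apply _ fun i _ => hWc i).continuousOn
      (fun u hu r hr => (hm u hu.1 r hr).frequently) ?_
      (fun u => ((hasDerivAt_id u).const_mul (K + 1)).exp.const_mul ε) ?_ ⟨ht, le_rfl⟩
    · exact (sup'_le _ _ fun i _ => h0 i).trans (by positivity)
    · intro u _ hu
      have hpos : 0 < m u := (by positivity : 0 < ε * Real.exp ((K + 1) * id u)).trans_eq hu.symm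
      rw [abs_of_pos hpos, mul_one, ← mul_assoc, ← hu]
      nlinarith
  refine (le_sup' (W · t) (mem_univ i)).trans (le_of_forall_pos_le_add fun δ hδ => ?_)
  have := hgrowth (δ * Real.exp (-((K + 1) * t))) (by positivity)
  rw [mul_assoc, ← Real.exp_add, neg_add_cancel, Real.exp_zero, mul_one] at this
  rwa [zero_add]

end Comparison

section Lindblad

variable {ι : Type*} {A : ι → ι → ι → ι → ℂ}

def choiMatrix (A : ι → ι → ι → ι → ℂ) : Matrix (ι × ι) (ι × ι) ℂ :=
  Matrix.of fun p q => A p.1 p.2 q.1 q.2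

theorem re_diag_nonneg (hA : (choiMatrix A).PosSemidef) (x' x : ι) :
    0 ≤ (A x' x x' x).re :=
  (Complex.le_def.1 (hA.diag_nonneg (i := (x', x)))).1

theorem norm_le_sqrt_mul_re (hA : (choiMatrix A).PosSemidef) (x' x y' y : ι) :
    ‖A x' x y' y‖ ≤ √((A x' x x' x).re * (A y' y y' y).re) := by
  rw [← Real.sqrt_sq (norm_nonneg _)]
  exact Real.sqrt_le_sqrt (hA.norm_apply_sq_le (x', x) (y', y))

variable [Fintype ι] [DecidableEq ι]

def transferRate (A : ι → ι → ι → ι → ℂ) (x' x : ι) : ℝ :=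
  if x' = x then -∑ z ∈ univ.filter (fun z => z ≠ x), (A z x z x).re else (A x' x x' x).re

theorem transferRate_of_ne {x' x : ι} (h : x' ≠ x) : transferRate A x' x = (A x' x x' x).re :=
  if_neg h

theorem abs_transferRate_self (hA : (choiMatrix A).PosSemidef) (x : ι) :
    |transferRate A x x| = ∑ z ∈ univ.filter (fun z => z ≠ x), (A z x z x).re := by
  rw [transferRate, if_pos rfl, abs_neg,
    abs_of_nonneg (sum_nonneg fun z _ => re_diag_nonneg hA z x)]

noncomputable def dampingCoeff (A : ι → ι → ι → ι → ℂ) (x y : ι) : ℂ :=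
  A x x y y - 1 / 2 * ∑ z, (A z x z x + A z y z y)

theorem re_dampingCoeff_le (hA : (choiMatrix A).PosSemidef) (x y : ι) :
    (dampingCoeff A x y).re ≤ -((|transferRate A x x| + |transferRate A y y|) / 2) := by
  have hsplit : ∀ w, ∑ z, (A z w z w).re
      = (A w w w w).re + ∑ z ∈ univ.filter (fun z => z ≠ w), (A z w z w).re := fun w => by
    rw [filter_ne']
    exact (add_sum_erase _ (fun z => (A z w z w).re) (mem_univ w)).symm
  have hx := re_diag_nonneg hA x x
  have hy := re_diag_nonneg hA y y
  have hxy : (A x x y y).re ≤ ((A x x x x).re + (A y y y y).re) / 2 := by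
    have := (Complex.re_le_norm _).trans (norm_le_sqrt_mul_re hA x x y y)
    nlinarith [Real.sq_sqrt (mul_nonneg hx hy), Real.sqrt_nonneg ((A x x x x).re * (A y y y y).re),
      sq_nonneg ((A x x x x).re - (A y y y y).re)]
  have hhalf : (1 / 2 * ∑ z, (A z x z x + A z y z y)).re
      = (∑ z, (A z x z x).re + ∑ z, (A z y z y).re) / 2 := by
    rw [show (1 / 2 : ℂ) = ((1 / 2 : ℝ) : ℂ) by norm_num, Complex.re_ofReal_mul, Complex.re_sum]
    simp only [Complex.add_re, sum_add_distrib]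
    ring
  rw [dampingCoeff, Complex.sub_re, hhalf, abs_transferRate_self hA, abs_transferRate_self hA,
    hsplit x, hsplit y]
  linarith

noncomputable def transportPairs (ω : ι → ℝ) (x' y' : ι) : Finset (ι × ι) :=
  univ.filter fun p => ω p.1 - ω p.2 = ω x' - ω y' ∧ p.1 ≠ x' ∧ p.2 ≠ y'

theorem filter_eq_insert_transportPairs {ω : ι → ℝ} (hω : Function.Injective ω) (x' y' : ι) :
    univ.filter (fun p : ι × ι => ω p.1 - ω p.2 = ω x' - ω y')
      = insert (x', y') (transportPairs ω x' y') := by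
  ext ⟨x, y⟩
  simp only [transportPairs, mem_filter, mem_insert, mem_univ, true_and, Prod.mk.injEq]
  constructor
  · intro h
    by_cases hx : x = x'
    · subst hx
      exact Or.inl ⟨rfl, hω (by linarith)⟩
    · refine Or.inr ⟨h, hx, fun hy => hx (hω ?_)⟩
      subst hy
      linarith
  · rintro (⟨rfl, rfl⟩ | ⟨h, -⟩)
    · rfl
    · exact h

theorem sum_filter_eq_dampingCoeff_add {ω : ι → ℝ} (hω : Function.Injective ω)
    (r : Matrix ι ι ℂ) (x' y' : ι) :
    ∑ p ∈ univ.filter (fun p : ι × ι => ω p.1 - ω p.2 = ω x' - ω y'),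
        (A x' p.1 y' p.2 - (1 / 2) * (∑ z, (A z p.1 z p.1 + A z p.2 z p.2))
          * (if p.1 = x' ∧ p.2 = y' then 1 else 0)) * r p.1 p.2
      = dampingCoeff A x' y' * r x' y'
        + ∑ p ∈ transportPairs ω x' y', A x' p.1 y' p.2 * r p.1 p.2 := by
  rw [filter_eq_insert_transportPairs hω, sum_insert (by simp [transportPairs]),
    if_pos ⟨rfl, rfl⟩, mul_one, dampingCoeff]
  congr 1
  refine sum_congr rfl fun p hp => ?_
  simp only [transportPairs, mem_filter] at hp
  rw [if_neg (by tauto), mul_zero, sub_zero]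

theorem norm_sum_transportPairs_le (hA : (choiMatrix A).PosSemidef) (ω : ι → ℝ)
    (r : Matrix ι ι ℂ) (x' y' : ι) :
    ‖∑ p ∈ transportPairs ω x' y', A x' p.1 y' p.2 * r p.1 p.2‖
      ≤ ∑ p ∈ transportPairs ω x' y',
          √(transferRate A x' p.1 * transferRate A y' p.2) * ‖r p.1 p.2‖ := by
  refine (norm_sum_le _ _).trans (sum_le_sum fun p hp => ?_)
  simp only [transportPairs, mem_filter] at hp
  rw [norm_mul, transferRate_of_ne (Ne.symm hp.2.2.1), transferRate_of_ne (Ne.symm hp.2.2.2)]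
  exact mul_le_mul_of_nonneg_right (norm_le_sqrt_mul_re hA _ _ _ _) (norm_nonneg _)

theorem upperRightDiniLE_norm_coherence (hA : (choiMatrix A).PosSemidef) {ω : ι → ℝ}
    (hω : Function.Injective ω) {ρ : ℝ → Matrix ι ι ℂ} {t : ℝ} {x' y' : ι}
    (hρ : HasDerivAt (fun s => ρ s x' y')
      (∑ p ∈ univ.filter (fun p : ι × ι => ω p.1 - ω p.2 = ω x' - ω y'),
        (A x' p.1 y' p.2 - (1 / 2) * (∑ z, (A z p.1 z p.1 + A z p.2 z p.2))
          * (if p.1 = x' ∧ p.2 = y' then 1 else 0)) * ρ t p.1 p.2) t) :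
    UpperRightDiniLE (‖ρ · x' y'‖) t
      (-((|transferRate A x' x'| + |transferRate A y' y'|) / 2) * ‖ρ t x' y'‖
        + ∑ p ∈ transportPairs ω x' y',
            √(transferRate A x' p.1 * transferRate A y' p.2) * ‖ρ t p.1 p.2‖) := by
  rw [sum_filter_eq_dampingCoeff_add hω] at hρ
  refine (upperRightDiniLE_norm_of_hasDerivAt hρ).mono (add_le_add ?_ ?_)
  · exact mul_le_mul_of_nonneg_right (re_dampingCoeff_le hA x' y') (norm_nonneg _)
  · exact norm_sum_transportPairs_le hA ω (ρ t) x' y'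

end Lindblad

theorem minimal_decoherence_general
    (d : ℕ) (ω : Fin d → ℝ) (hω : Function.Injective ω)
    (A : Fin d → Fin d → Fin d → Fin d → ℂ)
    (J : Matrix (Fin d × Fin d) (Fin d × Fin d) ℂ)
    (hJ : ∀ x' x y' y, J (x', x) (y', y) = A x' x y' y)
    (hPSD : J.PosSemidef)
    (L : Fin d → Fin d → ℝ)
    (hL : ∀ x' x, L x' x =
      if x' = x then -∑ z ∈ Finset.univ.filter (fun z => z ≠ x), (A z x z x).re
      else (A x' x x' x).re)
    (γ : Fin d → Fin d → ℝ)
    (hγ : ∀ x' y', γ x' y' = (|L x' x'| + |L y' y'|) / 2)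
    (ρ : ℝ → Matrix (Fin d) (Fin d) ℂ)
    (hρ : ∀ t x' y', HasDerivAt (fun s => ρ s x' y')
      (∑ p ∈ Finset.univ.filter
          (fun p : Fin d × Fin d => ω p.1 - ω p.2 = ω x' - ω y'),
        (A x' p.1 y' p.2
          - (1 / 2) * (∑ z, (A z p.1 z p.1 + A z p.2 z p.2))
            * (if p.1 = x' ∧ p.2 = y' then 1 else 0)) * ρ t p.1 p.2) t)
    (ρt : ℝ → Fin d × Fin d → ℝ)
    (hρt : ∀ t x' y', HasDerivAt (fun s => ρt s (x', y'))
      (-γ x' y' * ρt t (x', y')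
        + ∑ p ∈ Finset.univ.filter
            (fun p : Fin d × Fin d =>
              ω p.1 - ω p.2 = ω x' - ω y' ∧ p.1 ≠ x' ∧ p.2 ≠ y'),
          Real.sqrt (L x' p.1 * L y' p.2) * ρt t p) t)
    (h0 : ∀ x' y', ρt 0 (x', y') = ‖ρ 0 x' y'‖) :
    ∀ t ≥ (0 : ℝ), ∀ x' y', ‖ρ t x' y'‖ ≤ ρt t (x', y') := by
  intro t ht x' y'
  have : Nonempty (Fin d) := ⟨x'⟩
  obtain rfl : L = transferRate A := funext₂ hL
  have hA : (choiMatrix A).PosSemidef := by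
    convert hPSD
    ext ⟨x', x⟩ ⟨y', y⟩
    exact (hJ x' x y' y).symm
  refine sub_nonpos.1 (nonpos_of_upperRightDiniLE (W := fun i s => ‖ρ s i.1 i.2‖ - ρt s i)
    (fun i => ?_) (fun i => -γ i.1 i.2) (fun i => transportPairs ω i.1 i.2)
    (fun i p => √(transferRate A i.1 p.1 * transferRate A i.2 p.2))
    (fun _ _ => Real.sqrt_nonneg _) ?_ (fun i => sub_nonpos.2 (h0 i.1 i.2).ge) ht (x', y'))
  · exact continuous_iff_continuousAt.2 fun s =>
      (hρ s i.1 i.2).continuousAt.norm.sub (hρt s i.1 i.2).continuousAt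
  · rintro ⟨x', y'⟩ s -
    refine ((upperRightDiniLE_norm_coherence hA hω (hρ s x' y')).sub_hasDerivAt
      (hρt s x' y')).mono (le_of_eq ?_)
    simp only [hγ, transportPairs, mul_sub, sum_sub_distrib]
    ring

/-- **Minimal decoherence theorem (Theorem 1).** For a time-translation covariant
Markovian (Lindblad) evolution with population transfer rate matrix `L`, the magnitude of
every coherence element `ρ_{x'y'}(t)` is bounded by the solution `ρ̃_{x'y'}(t)` of the
optimal damping-and-transport equation. -/
theorem minimal_decoherence
    (d : ℕ) (hd : 1 ≤ d) (ω : Fin d → ℝ) (hω : Function.Injective ω)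
    (A : Fin d → Fin d → Fin d → Fin d → ℂ)
    (J : Matrix (Fin d × Fin d) (Fin d × Fin d) ℂ)
    (hJ : ∀ x' x y' y, J (x', x) (y', y) = A x' x y' y)
    (hPSD : J.PosSemidef)
    (hcov : ∀ x' x y' y, ω x' - ω x ≠ ω y' - ω y → A x' x y' y = 0)
    (L : Fin d → Fin d → ℝ)
    (hL : ∀ x' x, L x' x =
      if x' = x then -∑ z ∈ Finset.univ.filter (fun z => z ≠ x), (A z x z x).re
      else (A x' x x' x).re)
    (γ : Fin d → Fin d → ℝ)
    (hγ : ∀ x' y', γ x' y' = (|L x' x'| + |L y' y'|) / 2)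
    (ρ : ℝ → Matrix (Fin d) (Fin d) ℂ)
    (hρ : ∀ t x' y', HasDerivAt (fun s => ρ s x' y')
      (∑ p ∈ Finset.univ.filter
          (fun p : Fin d × Fin d => ω p.1 - ω p.2 = ω x' - ω y'),
        (A x' p.1 y' p.2
          - (1 / 2) * (∑ z, (A z p.1 z p.1 + A z p.2 z p.2))
            * (if p.1 = x' ∧ p.2 = y' then 1 else 0)) * ρ t p.1 p.2) t)
    (ρt : ℝ → Fin d × Fin d → ℝ)
    (hρt : ∀ t x' y', HasDerivAt (fun s => ρt s (x', y'))
      (-γ x' y' * ρt t (x', y')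
        + ∑ p ∈ Finset.univ.filter
            (fun p : Fin d × Fin d =>
              ω p.1 - ω p.2 = ω x' - ω y' ∧ p.1 ≠ x' ∧ p.2 ≠ y'),
          Real.sqrt (L x' p.1 * L y' p.2) * ρt t p) t)
    (h0 : ∀ x' y', ρt 0 (x', y') = ‖ρ 0 x' y'‖) :
    ∀ t ≥ (0 : ℝ), ∀ x' y', ‖ρ t x' y'‖ ≤ ρt t (x', y') :=
  minimal_decoherence_general d ω hω A J hJ hPSD L hL γ hγ ρ hρ ρt hρt h0
end

section
/- Let d ≥ 1, ω : Fin d → ℝ injective, and let L be a real d×d matrix with L_{x'|x} ≥ 0 for x' ≠ x and Σ_{x'} L_{x'|x} = 0 for every x. Let θ_{xy} (x,y ∈ Fin d) be complex numbers with |θ_{xy}| = 1, θ_{yx} = θ_{xy}*, θ_{xx} = 1, satisfying the Markovian phase-matching condition θ_{x'y'}θ_{xy}* = θ_{x'x}θ_{y'y}* for all x,y,x',y' with ω_{x'} − ω_{y'} = ω_x − ω_y. Define A^{x'|x}_{y'|y} := θ_{x'x} θ_{y'y}* √(L_{x'|x} L_{y'|y}) whenever ω_{x'} − ω_x = ω_{y'}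 − ω_y and x' ≠ x, and A^{x'|x}_{y'|y} := 0 otherwise. Then: (i) the Choi-type matrix J_{(x',x),(y',y)} := A^{x'|x}_{y'|y} is positive semidefinite and vanishes off the mode structure (A^{x'|x}_{y'|y} = 0 unless ω_{x'} − ω_x = ω_{y'} − ω_y); and (ii) if ρ̃ : ℝ → (Fin d × Fin d → ℝ) is differentiable with dρ̃_{x'y'}/dt = −γ_{x'y'} ρ̃_{x'y'} + Σ_{(x,y): ω_x−ω_y = ω_{x'}−ω_{y'}, x ≠ x', y ≠ y'} √(L_{x'|x} L_{y'|y}) ρ̃_{xy} (where γ_{x'y'} := (|L_{x'|x'}| + |L_{y'|y'}|)/2), with ρ̃_{x'y'}(0) ≥ 0 for all x',y', then the matrix-valued function ρ(t) defined entrywise by ρ_{x'y'}(t) := θ_{x'y'} ρ̃_{x'y'}(t) satisfies the covariant Lindblad equation dρ_{x'y'}/dt = Σ_{(x,y): ω_x−ω_y = ω_{x'}−ω_{y'}} [A^{x'|x}_{y'|y} − (1/2)Σ_z (A_{z|x}+A_{z|y}) δ_{x x'}δ_{y y'}] ρ_{xy}, and |ρ_{x'y'}(t)| = ρ̃_{x'y'}(t)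 for all t ≥ 0; in particular the bound of the minimal decoherence theorem is attained. (Tightness of Theorem 1.) -/
/-!
Write `g (x', x) = θ_{x'x} √L_{x'|x}` for `x' ≠ x` and `g (x, x) = 0`. Since `ω` is injective,
`x' = x ↔ y' = y` within a mode, so `A^{x'|x}_{y'|y} = g (x', x) g (y', y)*` on each mode and `0`
across modes: `J` is a sum over modes of rank-one matrices `g_w g_w*`, hence positive semidefinite.

Phase matching gives `A^{x'|x}_{y'|y} θ_{xy} = θ_{x'y'} √(L_{x'|x} L_{y'|y})`, and because the
columns of `L` sum to zero, the dissipative term at `(x', y')` is `-γ_{x'y'}`. Hence for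
`ρ = θ ⊙ ρ̃` the right-hand side of the Lindblad equation is `θ ⊙` the right-hand side of the
rate equation of `ρ̃`. That rate equation is
`ρ̃' = M ρ̃` for a Metzler matrix `M`, so `ρ̃ (t) = exp (t M) ρ̃ (0)` stays entrywise nonnegative
for `t ≥ 0`, which gives `|ρ_{x'y'}| = ρ̃_{x'y'}`.
-/

open Matrix Finset
open scoped ComplexOrder

namespace Matrix

variable {n : Type*}

def IsMetzler {α : Type*} [Zero α] [LE α] (M : Matrix n n α) : Prop :=
  ∀ i j, i ≠ j → 0 ≤ M i j

lemma IsMetzler.smul {M : Matrix n n ℝ} (hM : M.IsMetzler) {t : ℝ} (ht : 0 ≤ t) :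
    (t • M).IsMetzler :=
  fun i j hij => mul_nonneg ht (hM i j hij)

variable [Fintype n] [DecidableEq n]

open scoped Norms.Operator in
lemma exp_apply_nonneg {N : Matrix n n ℝ} (hN : ∀ i j, 0 ≤ N i j) (i j : n) :
    0 ≤ NormedSpace.exp N i j := by
  have hsum := Pi.hasSum.1 (Pi.hasSum.1 (NormedSpace.exp_series_hasSum_exp' (𝕂 := ℝ) N) i) j
  exact hsum.nonneg fun k => mul_nonneg (by positivity) (pow_apply_nonneg hN k i j)

/-- Shifting by the scalar `c = ∑ |M k k|` makes a Metzler matrix entrywise nonnegative, and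
`exp (M) = exp (M + c) * exp (-c)` since scalars commute. -/
lemma IsMetzler.exp_apply_nonneg {M : Matrix n n ℝ} (hM : M.IsMetzler) (i j : n) :
    0 ≤ NormedSpace.exp M i j := by
  set c : ℝ := ∑ k, |M k k|
  have hN : ∀ i j, 0 ≤ (M + scalar n c) i j := by
    intro i j
    rw [add_apply, scalar_apply, diagonal_apply]
    split_ifs with h
    · subst h
      have := single_le_sum (f := fun k => |M k k|) (fun _ _ => abs_nonneg _) (mem_univ i)
      linarith [neg_abs_le (M i i)]
    · simpa using hM i j h
  have hsplit : M = (M + scalar n c) + scalar n (-c) := by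
    rw [map_neg]; abel
  rw [hsplit, Matrix.exp_add_of_commute _ _ (scalar_commute _ (fun _ => .all _ _) _).symm,
    scalar_apply (-c), exp_diagonal, mul_diagonal, Pi.coe_exp, ← Real.exp_eq_exp_ℝ]
  exact mul_nonneg (Matrix.exp_apply_nonneg hN i j) (Real.exp_pos _).le

open scoped Norms.Operator in
lemma eq_exp_smul_mulVec_of_hasDerivAt {M : Matrix n n ℝ} {f : ℝ → n → ℝ}
    (hf : ∀ t, HasDerivAt f (M *ᵥ f t) t) (t : ℝ) :
    f t = NormedSpace.exp (t • M) *ᵥ f 0 := by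
  have hlin : LipschitzWith ‖M.mulVecLin.toContinuousLinearMap‖₊ (M *ᵥ ·) :=
    M.mulVecLin.toContinuousLinearMap.lipschitz
  have hexp : ∀ s : ℝ, HasDerivAt (fun s : ℝ => NormedSpace.exp (s • M) *ᵥ f 0)
      (M *ᵥ (NormedSpace.exp (s • M) *ᵥ f 0)) s := by
    intro s
    rw [mulVec_mulVec]
    exact ((LinearMap.applyₗ (f 0)).comp toLin'.toLinearMap).toContinuousLinearMap.hasFDerivAt
      |>.comp_hasDerivAt s (hasDerivAt_exp_smul_const' (𝕂 := ℝ) M s)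
  refine congrFun (ODE_solution_unique_univ (v := fun _ => (M *ᵥ ·)) (s := fun _ => Set.univ)
    (t₀ := 0) (fun _ => hlin.lipschitzOnWith) (fun s => ⟨hf s, trivial⟩)
    (fun s => ⟨hexp s, trivial⟩) ?_) t
  simp

lemma IsMetzler.apply_nonneg_of_hasDerivAt_mulVec {M : Matrix n n ℝ} (hM : M.IsMetzler)
    {f : ℝ → n → ℝ} (hf : ∀ t, HasDerivAt f (M *ᵥ f t) t) (h0 : ∀ i, 0 ≤ f 0 i)
    {t : ℝ} (ht : 0 ≤ t) (i : n) : 0 ≤ f t i := by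
  rw [eq_exp_smul_mulVec_of_hasDerivAt hf t]
  exact sum_nonneg fun j _ => mul_nonneg ((hM.smul ht).exp_apply_nonneg i j) (h0 j)

lemma posSemidef_of_ite_eq_mul_star {ι β R : Type*} [Fintype ι] [DecidableEq β] [Ring R]
    [PartialOrder R] [StarRing R] [StarOrderedRing R] (m : ι → β) (g : ι → R) :
    (of fun i j => if m i = m j then g i * star (g j) else 0).PosSemidef := by
  have hblocks : (of fun i j => if m i = m j then g i * star (g j) else 0) =
      ∑ w ∈ univ.image m, vecMulVec (fun i => if m i = w then g i else 0)
        (star fun i => if m i = w then g i else 0) := by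
    ext i j
    simp only [of_apply, sum_apply, vecMulVec_apply, Pi.star_apply]
    rw [sum_eq_single (m i)]
    · split_ifs <;> simp_all
    · intro w _ hw
      simp [Ne.symm hw]
    · simp
  rw [hblocks]
  exact posSemidef_sum _ fun w _ => posSemidef_vecMulVec_self_star _

end Matrix

lemma Function.Injective.eq_iff_of_sub_eq_sub {ι : Type*} {ω : ι → ℝ} (hω : Function.Injective ω)
    {a b c e : ι} (h : ω a - ω b = ω c - ω e) : a = b ↔ c = e :=
  ⟨fun hab => hω (by subst hab; linarith), fun hce => hω (by subst hce; linarith)⟩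

section OptimalGenerator

variable {ι : Type*} [DecidableEq ι]

/-- `optimalCoeff ω L θ x' x y' y` is `A^{x'|x}_{y'|y}`. -/
noncomputable def optimalCoeff (ω : ι → ℝ) (L : ι → ι → ℝ) (θ : ι → ι → ℂ) (x' x y' y : ι) : ℂ :=
  if ω x' - ω x = ω y' - ω y ∧ x' ≠ x then
    θ x' x * star (θ y' y) * (Real.sqrt (L x' x * L y' y) : ℂ)
  else 0

noncomputable def jumpAmp (L : ι → ι → ℝ) (θ : ι → ι → ℂ) (q : ι × ι) : ℂ :=
  if q.1 ≠ q.2 then θ q.1 q.2 * (Real.sqrt (L q.1 q.2) : ℂ) else 0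

/-- Within a mode, `x' = x ↔ y' = y`, so `A` factors through the jump amplitudes. -/
lemma optimalCoeff_eq_ite {ω : ι → ℝ} (hω : Function.Injective ω) {L : ι → ι → ℝ}
    (hLoff : ∀ x' x, x' ≠ x → 0 ≤ L x' x) (θ : ι → ι → ℂ) (x' x y' y : ι) :
    optimalCoeff ω L θ x' x y' y = if ω x' - ω x = ω y' - ω y then
      jumpAmp L θ (x', x) * star (jumpAmp L θ (y', y)) else 0 := by
  unfold optimalCoeff jumpAmp
  by_cases hmode : ω x' - ω x = ω y' - ω y
  · have hiff := hω.eq_iff_of_sub_eq_sub hmode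
    by_cases hx : x' = x
    · simp [hx, hiff.1 hx]
    · have hy : y' ≠ y := mt hiff.2 hx
      simp only [hmode, hx, hy, ne_eq, not_false_eq_true, and_self, if_true, star_mul',
        Complex.star_def, Complex.conj_ofReal, Real.sqrt_mul (hLoff x' x hx)]
      push_cast
      ring
  · simp [hmode]

/-- The phase-matching condition turns `θ_{x'x} θ*_{y'y}` into `θ_{x'y'} θ*_{xy}`, and
`θ*_{xy} θ_{xy} = 1`. -/
lemma optimalCoeff_mul_phase {ω : ι → ℝ} {L : ι → ι → ℝ} {θ : ι → ι → ℂ}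
    (hθabs : ∀ x y, ‖θ x y‖ = 1)
    (hpm : ∀ x' y' x y, ω x' - ω y' = ω x - ω y →
      θ x' y' * star (θ x y) = θ x' x * star (θ y' y))
    {x' y' x y : ι} (hmode : ω x - ω y = ω x' - ω y') (hx : x ≠ x') (r : ℝ) :
    optimalCoeff ω L θ x' x y' y * (θ x y * r) =
      θ x' y' * ((Real.sqrt (L x' x * L y' y) * r : ℝ) : ℂ) := by
  have hunit : star (θ x y) * θ x y = 1 := by
    rw [Complex.star_def, mul_comm, Complex.mul_conj', hθabs]
    simp
  rw [optimalCoeff, if_pos ⟨by linarith, hx.symm⟩, ← hpm x' y' x y hmode.symm]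
  push_cast
  linear_combination (θ x' y' * (Real.sqrt (L x' x * L y' y) : ℂ) * r) * hunit

/-- The generator of the rate equation satisfied by `ρ̃`. -/
noncomputable def magnitudeGenerator (ω : ι → ℝ) (L γ : ι → ι → ℝ) :
    Matrix (ι × ι) (ι × ι) ℝ :=
  diagonal (fun q => -γ q.1 q.2) + of fun q p =>
    if ω p.1 - ω p.2 = ω q.1 - ω q.2 ∧ p.1 ≠ q.1 ∧ p.2 ≠ q.2 then
      Real.sqrt (L q.1 p.1 * L q.2 p.2)
    else 0

lemma isMetzler_magnitudeGenerator (ω : ι → ℝ) (L γ : ι → ι → ℝ) :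
    (magnitudeGenerator ω L γ).IsMetzler := by
  intro q p hqp
  rw [magnitudeGenerator, Matrix.add_apply, diagonal_apply_ne _ hqp, zero_add, of_apply]
  split_ifs
  exacts [Real.sqrt_nonneg _, le_rfl]

variable [Fintype ι]

lemma sum_erase_eq_neg_diag {L : ι → ι → ℝ} (hLcol : ∀ x, ∑ x', L x' x = 0) (x : ι) :
    ∑ z ∈ univ.erase x, L z x = -L x x := by
  linarith [hLcol x, add_sum_erase univ (L · x) (mem_univ x)]

lemma diag_nonpos_of_sum_eq_zero {L : ι → ι → ℝ} (hLoff : ∀ x' x, x' ≠ x → 0 ≤ L x' x)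
    (hLcol : ∀ x, ∑ x', L x' x = 0) (x : ι) : L x x ≤ 0 := by
  have : 0 ≤ ∑ z ∈ univ.erase x, L z x := sum_nonneg fun z hz => hLoff z x (ne_of_mem_erase hz)
  linarith [sum_erase_eq_neg_diag hLcol x]

lemma sum_optimalCoeff_diag {L : ι → ι → ℝ} (hLoff : ∀ x' x, x' ≠ x → 0 ≤ L x' x)
    (hLcol : ∀ x, ∑ x', L x' x = 0) {θ : ι → ι → ℂ} (hθabs : ∀ x y, ‖θ x y‖ = 1)
    (ω : ι → ℝ) (x : ι) : ∑ z, optimalCoeff ω L θ z x z x = -L x x := by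
  have hoff : ∀ z ∈ univ.erase x, optimalCoeff ω L θ z x z x = L z x := by
    intro z hz
    have hzx := ne_of_mem_erase hz
    rw [optimalCoeff, if_pos ⟨rfl, hzx⟩, Real.sqrt_mul_self (hLoff z x hzx), Complex.star_def,
      Complex.mul_conj', hθabs]
    simp
  rw [← add_sum_erase _ _ (mem_univ x), sum_congr rfl hoff, optimalCoeff,
    if_neg fun h => h.2 rfl, zero_add, ← Complex.ofReal_sum, sum_erase_eq_neg_diag hLcol,
    Complex.ofReal_neg]

lemma filter_mode_erase {ω : ι → ℝ} (hω : Function.Injective ω) (x' y' : ι) :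
    (univ.filter fun p : ι × ι => ω p.1 - ω p.2 = ω x' - ω y').erase (x', y') =
      univ.filter fun p : ι × ι => ω p.1 - ω p.2 = ω x' - ω y' ∧ p.1 ≠ x' ∧ p.2 ≠ y' := by
  ext ⟨x, y⟩
  simp only [mem_erase, mem_filter, mem_univ, true_and, ne_eq, Prod.mk.injEq]
  constructor
  · rintro ⟨hne, hmode⟩
    have hiff := hω.eq_iff_of_sub_eq_sub (show ω x - ω x' = ω y - ω y' by linarith)
    exact ⟨hmode, fun hx => hne ⟨hx, hiff.1 hx⟩, fun hy => hne ⟨hiff.2 hy, hy⟩⟩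
  · rintro ⟨hmode, hx, -⟩
    exact ⟨fun h => hx h.1, hmode⟩

lemma sum_lindblad_mul_phase_eq {ω : ι → ℝ} (hω : Function.Injective ω) {L : ι → ι → ℝ}
    (hLoff : ∀ x' x, x' ≠ x → 0 ≤ L x' x) (hLcol : ∀ x, ∑ x', L x' x = 0)
    {θ : ι → ι → ℂ} (hθabs : ∀ x y, ‖θ x y‖ = 1)
    (hpm : ∀ x' y' x y, ω x' - ω y' = ω x - ω y →
      θ x' y' * star (θ x y) = θ x' x * star (θ y' y))
    (v : ι × ι → ℝ) (x' y' : ι) :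
    ∑ p ∈ univ.filter (fun p : ι × ι => ω p.1 - ω p.2 = ω x' - ω y'),
      (optimalCoeff ω L θ x' p.1 y' p.2
        - (1 / 2) * (∑ z, (optimalCoeff ω L θ z p.1 z p.1 + optimalCoeff ω L θ z p.2 z p.2))
          * (if p.1 = x' ∧ p.2 = y' then 1 else 0)) * (θ p.1 p.2 * v p)
    = θ x' y' * ((-((|L x' x'| + |L y' y'|) / 2) * v (x', y')
        + ∑ p ∈ univ.filter (fun p : ι × ι => ω p.1 - ω p.2 = ω x' - ω y' ∧ p.1 ≠ x' ∧ p.2 ≠ y'),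
            Real.sqrt (L x' p.1 * L y' p.2) * v p : ℝ) : ℂ) := by
  have hmem : (x', y') ∈ univ.filter fun p : ι × ι => ω p.1 - ω p.2 = ω x' - ω y' := by simp
  rw [← add_sum_erase _ _ hmem, filter_mode_erase hω, Complex.ofReal_add, Complex.ofReal_sum,
    mul_add]
  congr 1
  · dsimp only
    rw [optimalCoeff, if_neg fun h => h.2 rfl, sum_add_distrib,
      sum_optimalCoeff_diag hLoff hLcol hθabs, sum_optimalCoeff_diag hLoff hLcol hθabs,
      abs_of_nonpos (diag_nonpos_of_sum_eq_zero hLoff hLcol x'),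
      abs_of_nonpos (diag_nonpos_of_sum_eq_zero hLoff hLcol y'), if_pos ⟨rfl, rfl⟩]
    push_cast
    ring
  · rw [mul_sum]
    refine sum_congr rfl fun p hp => ?_
    obtain ⟨hmode, hx, -⟩ := (mem_filter.1 hp).2
    rw [if_neg fun h => hx h.1, mul_zero, sub_zero, optimalCoeff_mul_phase hθabs hpm hmode hx]

lemma magnitudeGenerator_mulVec_apply (ω : ι → ℝ) (L γ : ι → ι → ℝ) (v : ι × ι → ℝ)
    (x' y' : ι) :
    (magnitudeGenerator ω L γ *ᵥ v) (x', y') = -γ x' y' * v (x', y')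
      + ∑ p ∈ univ.filter (fun p : ι × ι => ω p.1 - ω p.2 = ω x' - ω y' ∧ p.1 ≠ x' ∧ p.2 ≠ y'),
          Real.sqrt (L x' p.1 * L y' p.2) * v p := by
  rw [magnitudeGenerator, add_mulVec, Pi.add_apply, mulVec_diagonal, sum_filter]
  simp only [mulVec, dotProduct, of_apply, ite_mul, zero_mul]

end OptimalGenerator

theorem minimal_decoherence_tight_general
    (d : ℕ) (ω : Fin d → ℝ) (hω : Function.Injective ω)
    (L : Fin d → Fin d → ℝ)
    (hLoff : ∀ x' x, x' ≠ x → 0 ≤ L x' x)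
    (hLcol : ∀ x, ∑ x', L x' x = 0)
    (θ : Fin d → Fin d → ℂ)
    (hθabs : ∀ x y, ‖θ x y‖ = 1)
    (hpm : ∀ x' y' x y, ω x' - ω y' = ω x - ω y →
      θ x' y' * star (θ x y) = θ x' x * star (θ y' y))
    (A : Fin d → Fin d → Fin d → Fin d → ℂ)
    (hA : ∀ x' x y' y, A x' x y' y =
      if ω x' - ω x = ω y' - ω y ∧ x' ≠ x then
        θ x' x * star (θ y' y) * (Real.sqrt (L x' x * L y' y) : ℂ)
      else 0)
    (γ : Fin d → Fin d → ℝ)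
    (hγ : ∀ x' y', γ x' y' = (|L x' x'| + |L y' y'|) / 2)
    (J : Matrix (Fin d × Fin d) (Fin d × Fin d) ℂ)
    (hJ : ∀ x' x y' y, J (x', x) (y', y) = A x' x y' y) :
    J.PosSemidef ∧
    (∀ x' x y' y, ω x' - ω x ≠ ω y' - ω y → A x' x y' y = 0) ∧
    (∀ ρt : ℝ → Fin d × Fin d → ℝ,
      (∀ t x' y', HasDerivAt (fun s => ρt s (x', y'))
        (-γ x' y' * ρt t (x', y')
          + ∑ p ∈ Finset.univ.filter
              (fun p : Fin d × Fin d =>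
                ω p.1 - ω p.2 = ω x' - ω y' ∧ p.1 ≠ x' ∧ p.2 ≠ y'),
            Real.sqrt (L x' p.1 * L y' p.2) * ρt t p) t) →
      (∀ x' y', 0 ≤ ρt 0 (x', y')) →
      ∀ ρ : ℝ → Matrix (Fin d) (Fin d) ℂ,
        (∀ t x' y', ρ t x' y' = θ x' y' * (ρt t (x', y') : ℂ)) →
        ((∀ t x' y', HasDerivAt (fun s => ρ s x' y')
            (∑ p ∈ Finset.univ.filter
                (fun p : Fin d × Fin d => ω p.1 - ω p.2 = ω x' - ω y'),
              (A x' p.1 y' p.2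
                - (1 / 2) * (∑ z, (A z p.1 z p.1 + A z p.2 z p.2))
                  * (if p.1 = x' ∧ p.2 = y' then 1 else 0)) * ρ t p.1 p.2) t) ∧
          (∀ t ≥ (0 : ℝ), ∀ x' y', ‖ρ t x' y'‖ = ρt t (x', y')))) := by
  obtain rfl : A = optimalCoeff ω L θ := by
    funext x' x y' y
    exact hA x' x y' y
  have hJ_eq : J = of fun q p => if ω q.1 - ω q.2 = ω p.1 - ω p.2 then
      jumpAmp L θ q * star (jumpAmp L θ p) else 0 := by
    ext ⟨x', x⟩ ⟨y', y⟩
    rw [hJ, optimalCoeff_eq_ite hω hLoff, of_apply]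
  refine ⟨hJ_eq ▸ posSemidef_of_ite_eq_mul_star _ _,
    fun x' x y' y hmode => if_neg fun h => hmode h.1, fun ρt hode h0 ρ hρ => ⟨?_, ?_⟩⟩
  · intro t x' y'
    simp only [hρ, Prod.mk.eta]
    rw [sum_lindblad_mul_phase_eq hω hLoff hLcol hθabs hpm, ← hγ]
    exact (hode t x' y').ofReal_comp.const_mul _
  · intro t ht x' y'
    have hode_vec : ∀ t, HasDerivAt ρt (magnitudeGenerator ω L γ *ᵥ ρt t) t := fun t =>
      hasDerivAt_pi.2 fun ⟨x', y'⟩ => by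
        rw [magnitudeGenerator_mulVec_apply]
        exact hode t x' y'
    have hnonneg := (isMetzler_magnitudeGenerator ω L γ).apply_nonneg_of_hasDerivAt_mulVec
      hode_vec (fun q => h0 q.1 q.2) ht (x', y')
    rw [hρ, norm_mul, hθabs, one_mul, Complex.norm_real, Real.norm_of_nonneg hnonneg]

/-- **Tightness of the minimal decoherence theorem (Theorem 1).** Given a population
transfer rate matrix `L` and phases `θ` satisfying the Markovian phase-matching condition,
the generator built from `A^{x'|x}_{y'|y} = θ_{x'x} θ*_{y'y} √(L_{x'|x}L_{y'|y})` is a valid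
covariant generator (positive semidefinite Choi-type matrix, mode structure), and the state
`ρ_{x'y'}(t) = θ_{x'y'} ρ̃_{x'y'}(t)` built from the optimal solution `ρ̃` satisfies the
covariant Lindblad equation while attaining `|ρ_{x'y'}(t)| = ρ̃_{x'y'}(t)`. -/
theorem minimal_decoherence_tight
    (d : ℕ) (hd : 1 ≤ d) (ω : Fin d → ℝ) (hω : Function.Injective ω)
    (L : Fin d → Fin d → ℝ)
    (hLoff : ∀ x' x, x' ≠ x → 0 ≤ L x' x)
    (hLcol : ∀ x, ∑ x', L x' x = 0)
    (θ : Fin d → Fin d → ℂ)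
    (hθabs : ∀ x y, ‖θ x y‖ = 1)
    (hθsym : ∀ x y, θ y x = star (θ x y))
    (hθdiag : ∀ x, θ x x = 1)
    (hpm : ∀ x' y' x y, ω x' - ω y' = ω x - ω y →
      θ x' y' * star (θ x y) = θ x' x * star (θ y' y))
    (A : Fin d → Fin d → Fin d → Fin d → ℂ)
    (hA : ∀ x' x y' y, A x' x y' y =
      if ω x' - ω x = ω y' - ω y ∧ x' ≠ x then
        θ x' x * star (θ y' y) * (Real.sqrt (L x' x * L y' y) : ℂ)
      else 0)
    (γ : Fin d → Fin d → ℝ)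
    (hγ : ∀ x' y', γ x' y' = (|L x' x'| + |L y' y'|) / 2)
    (J : Matrix (Fin d × Fin d) (Fin d × Fin d) ℂ)
    (hJ : ∀ x' x y' y, J (x', x) (y', y) = A x' x y' y) :
    J.PosSemidef ∧
    (∀ x' x y' y, ω x' - ω x ≠ ω y' - ω y → A x' x y' y = 0) ∧
    (∀ ρt : ℝ → Fin d × Fin d → ℝ,
      (∀ t x' y', HasDerivAt (fun s => ρt s (x', y'))
        (-γ x' y' * ρt t (x', y')
          + ∑ p ∈ Finset.univ.filter
              (fun p : Fin d × Fin d =>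
                ω p.1 - ω p.2 = ω x' - ω y' ∧ p.1 ≠ x' ∧ p.2 ≠ y'),
            Real.sqrt (L x' p.1 * L y' p.2) * ρt t p) t) →
      (∀ x' y', 0 ≤ ρt 0 (x', y')) →
      ∀ ρ : ℝ → Matrix (Fin d) (Fin d) ℂ,
        (∀ t x' y', ρ t x' y' = θ x' y' * (ρt t (x', y') : ℂ)) →
        ((∀ t x' y', HasDerivAt (fun s => ρ s x' y')
            (∑ p ∈ Finset.univ.filter
                (fun p : Fin d × Fin d => ω p.1 - ω p.2 = ω x' - ω y'),
              (A x' p.1 y' p.2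
                - (1 / 2) * (∑ z, (A z p.1 z p.1 + A z p.2 z p.2))
                  * (if p.1 = x' ∧ p.2 = y' then 1 else 0)) * ρ t p.1 p.2) t) ∧
          (∀ t ≥ (0 : ℝ), ∀ x' y', ‖ρ t x' y'‖ = ρt t (x', y')))) :=
  minimal_decoherence_tight_general d ω hω L hLoff hLcol θ hθabs hpm A hA γ hγ J hJ
end

section
/- Let d ≥ 1 and ω : Fin d → ℝ. Let C^{x'|x}_{y'|y} ∈ ℂ (for x,x',y,y' ∈ Fin d) be coefficients such that the matrix J indexed by pairs, J_{(x',x),(y',y)} := C^{x'|x}_{y'|y}, is positive semidefinite, and C^{x'|x}_{y'|y} = 0 whenever ω_{x'} − ω_x ≠ ω_{y'} − ω_y. Set P_{x'|x} := Re(C^{x'|x}_{x'|x}) (the diagonal entries of J, which are real and nonnegative). Then for every complex d×d matrix ρ, the matrix σ defined by σ_{x'y'} := Σ_{x,y} C^{x'|x}_{y'|y} ρ_{xy} satisfies, for all x',y': |σ_{x'y'}| ≤ Σ_{(x,y) : ω_x − ω_y = ω_{x'} − ω_{y'}} √(P_{x'|x} P_{y'|y}) · |ρ_{xy}|. (Theorem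 2, non-Markovian covariant decoherence bound.) -/
open Matrix Finset
open scoped ComplexOrder

/-!
Covariance kills every term of `σ x' y'` except those with `ω x - ω y = ω x' - ω y'`. On the
remaining terms, the positive semidefinite matrix `J` is a Gram matrix, so by Cauchy–Schwarz
`‖C x' x y' y‖ ≤ √(P x' x * P y' y)`.
-/

namespace Matrix

variable {𝕜 n : Type*} [RCLike 𝕜]

theorem norm_gram_apply_le_sqrt {E : Type*} [SeminormedAddCommGroup E] [InnerProductSpace 𝕜 E]
    (v : n → E) (i j : n) :
    ‖gram 𝕜 v i j‖ ≤ √(RCLike.re (gram 𝕜 v i i) * RCLike.re (gram 𝕜 v j j)) := by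
  simp only [gram_apply, inner_self_eq_norm_sq]
  rw [Real.sqrt_mul (sq_nonneg _), Real.sqrt_sq (norm_nonneg _), Real.sqrt_sq (norm_nonneg _)]
  exact norm_inner_le_norm (v i) (v j)

open scoped MatrixOrder in
theorem PosSemidef.exists_eq_gram [Fintype n] {A : Matrix n n 𝕜} (hA : A.PosSemidef) :
    ∃ v : n → EuclideanSpace 𝕜 n, A = gram 𝕜 v := by
  classical
  obtain ⟨B, rfl⟩ := CStarAlgebra.nonneg_iff_eq_star_mul_self.mp hA.nonneg
  refine ⟨fun i => WithLp.toLp 2 (fun k => B k i), ?_⟩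
  ext i j
  simp [mul_apply, PiLp.inner_apply, mul_comm]

theorem PosSemidef.norm_apply_le_sqrt [Fintype n] {A : Matrix n n 𝕜} (hA : A.PosSemidef)
    (i j : n) : ‖A i j‖ ≤ √(RCLike.re (A i i) * RCLike.re (A j j)) := by
  obtain ⟨v, rfl⟩ := hA.exists_eq_gram
  exact norm_gram_apply_le_sqrt v i j

end Matrix

theorem covariant_decoherence_bound_general
    (d : ℕ) (ω : Fin d → ℝ)
    (C : Fin d → Fin d → Fin d → Fin d → ℂ)
    (J : Matrix (Fin d × Fin d) (Fin d × Fin d) ℂ)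
    (hJ : ∀ x' x y' y, J (x', x) (y', y) = C x' x y' y)
    (hPSD : J.PosSemidef)
    (hcov : ∀ x' x y' y, ω x' - ω x ≠ ω y' - ω y → C x' x y' y = 0)
    (P : Fin d → Fin d → ℝ)
    (hP : ∀ x' x, P x' x = (C x' x x' x).re)
    (ρ σ : Matrix (Fin d) (Fin d) ℂ)
    (hσ : ∀ x' y', σ x' y' = ∑ x, ∑ y, C x' x y' y * ρ x y) :
    ∀ x' y', ‖σ x' y'‖ ≤
      ∑ p ∈ Finset.univ.filter
          (fun p : Fin d × Fin d => ω p.1 - ω p.2 = ω x' - ω y'),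
        Real.sqrt (P x' p.1 * P y' p.2) * ‖ρ p.1 p.2‖ := by
  intro x' y'
  have resonant : σ x' y' = ∑ p ∈ univ.filter
      (fun p : Fin d × Fin d => ω p.1 - ω p.2 = ω x' - ω y'), C x' p.1 y' p.2 * ρ p.1 p.2 := by
    rw [hσ, ← Fintype.sum_prod_type', sum_filter_of_ne]
    intro p _ hp
    by_contra hres
    exact left_ne_zero_of_mul hp (hcov x' p.1 y' p.2 fun h => hres (by linarith))
  rw [resonant]
  refine (norm_sum_le _ _).trans (sum_le_sum fun p _ => ?_)
  rw [norm_mul, hP, hP, ← hJ, ← hJ, ← hJ]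
  gcongr
  exact hPSD.norm_apply_le_sqrt (x', p.1) (y', p.2)

/-- **Theorem 2 (non-Markovian covariant decoherence bound).** For a time-translation
covariant completely positive map with coefficients `C^{x'|x}_{y'|y}` (positive
semidefinite Choi-type matrix, vanishing off the mode structure) and population transfer
coefficients `P_{x'|x} = C^{x'|x}_{x'|x}`, the output coherences obey
`|σ_{x'y'}| ≤ Σ_{ω_x−ω_y = ω_{x'}−ω_{y'}} √(P_{x'|x} P_{y'|y}) |ρ_{xy}|`. -/
theorem covariant_decoherence_bound
    (d : ℕ) (hd : 1 ≤ d) (ω : Fin d → ℝ)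
    (C : Fin d → Fin d → Fin d → Fin d → ℂ)
    (J : Matrix (Fin d × Fin d) (Fin d × Fin d) ℂ)
    (hJ : ∀ x' x y' y, J (x', x) (y', y) = C x' x y' y)
    (hPSD : J.PosSemidef)
    (hcov : ∀ x' x y' y, ω x' - ω x ≠ ω y' - ω y → C x' x y' y = 0)
    (P : Fin d → Fin d → ℝ)
    (hP : ∀ x' x, P x' x = (C x' x x' x).re)
    (ρ σ : Matrix (Fin d) (Fin d) ℂ)
    (hσ : ∀ x' y', σ x' y' = ∑ x, ∑ y, C x' x y' y * ρ x y) :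
    ∀ x' y', ‖σ x' y'‖ ≤
      ∑ p ∈ Finset.univ.filter
          (fun p : Fin d × Fin d => ω p.1 - ω p.2 = ω x' - ω y'),
        Real.sqrt (P x' p.1 * P y' p.2) * ‖ρ p.1 p.2‖ :=
  covariant_decoherence_bound_general d ω C J hJ hPSD hcov P hP ρ σ hσ
end

section
/- Let d ≥ 1, let ω : Fin d → ℝ be injective, and let P be a real d×d matrix with nonnegative entries and each column summing to 1 (a column-stochastic matrix). Let ρ be a complex d×d matrix satisfying the non-Markovian phase-matching condition: there exist complex numbers φ_x with |φ_x| = 1 such that ρ_{xy} = |ρ_{xy}| φ_x φ_y* for all x,y. For each ν ∈ ℝ define the matrix K_ν := Σ_{(x',x) : ω_{x'} − ω_x = ν} φ_x* √(P_{x'|x}) |x'⟩⟨x|. Then: (i) Σ_ν K_ν† K_ν = I (the sum runs over the finitely many ν for which K_ν ≠ 0); (ii) the matrix σ := Σ_ν K_ν ρ K_ν† satisfies σ_{x'y'} = Σ_{(x,y) : ω_x − ω_y = ω_{x'} − ω_{y'}} √(P_{x'|x} P_{y'|y}) |ρ_{xy}| for all x',y'; in particular |σ_{x'y'}| equals the right-hand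 side of the covariant decoherence bound, simultaneously for all x',y', and the populations transform as σ_{x'x'} = Σ_x P_{x'|x} ρ_{xx}. (Tightness of Theorem 2 under non-Markovian phase matching.) -/
/-!
A Kraus operator `K_ν` only sends `x` to `x'` with `ω x' - ω x = ν`, so in `∑_ν K_ν A K_ν†` the
entry `(x', y')` collects exactly the pairs `(x, y)` with `ω x' - ω x = ω y' - ω y`, i.e. with the
same Bohr frequency `ω x - ω y = ω x' - ω y'`. For `A = ρ` the phases `φ x*` carried by `K_ν`
cancel those of `ρ`, so every contribution `√(P x' x P y' y) |ρ x y|` is a nonnegative real and the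
bound is attained. For `K_ν† K_ν`, injectivity of `ω` leaves only diagonal terms, which sum to the
column sums of `P`.
-/

open Matrix Finset

section LevelPart

variable {m n β R : Type*} [DecidableEq β]

def Matrix.levelPart [Zero R] (g : m → n → β) (k : Matrix m n R) (ν : β) : Matrix m n R :=
  of fun i j => if g i j = ν then k i j else 0

variable [CommSemiring R] [StarRing R] {g : m → n → β} {F : Finset β}

theorem Matrix.sum_levelPart_conjTranspose_mul_self_apply [Fintype m] (hgF : ∀ i j, g i j ∈ F)
    (k : Matrix m n R) (i j : n) :
    (∑ ν ∈ F, (levelPart g k ν)ᴴ * levelPart g k ν) i j =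
      ∑ l, if g l i = g l j then star (k l i) * k l j else 0 := by
  simp only [sum_apply, mul_apply, conjTranspose_apply, levelPart, of_apply, apply_ite star,
    star_zero, ite_mul, zero_mul]
  rw [Finset.sum_comm]
  simp only [Finset.sum_ite_eq, hgF, if_true]
  simp only [mul_ite, mul_zero, eq_comm]

theorem Matrix.sum_levelPart_mul_mul_conjTranspose_apply [Fintype n] (hgF : ∀ i j, g i j ∈ F)
    (k : Matrix m n R) (A : Matrix n n R) (x y : m) :
    (∑ ν ∈ F, levelPart g k ν * A * (levelPart g k ν)ᴴ) x y =
      ∑ a, ∑ b, if g x a = g y b then k x a * A a b * star (k y b) else 0 := by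
  simp only [sum_apply, mul_apply, conjTranspose_apply, levelPart, of_apply, apply_ite star,
    star_zero, Finset.sum_mul, ite_mul, zero_mul]
  rw [Finset.sum_comm]
  simp only [Finset.sum_comm (s := F)]
  rw [Finset.sum_comm]
  simp only [Finset.sum_ite_eq, hgF, if_true]
  simp only [mul_ite, mul_zero, eq_comm]

end LevelPart

section CovariantKraus

variable {ι : Type*} [Fintype ι] {ω : ι → ℝ} {P : Matrix ι ι ℝ} {φ : ι → ℂ}

noncomputable def bohrFrequencies (ω : ι → ℝ) : Finset ℝ :=
  image (fun p : ι × ι => ω p.1 - ω p.2) univ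

theorem sub_mem_bohrFrequencies (ω : ι → ℝ) (x y : ι) : ω x - ω y ∈ bohrFrequencies ω :=
  mem_image_of_mem _ (mem_univ (x, y))

noncomputable def covariantKraus (ω : ι → ℝ) (P : Matrix ι ι ℝ) (φ : ι → ℂ) (ν : ℝ) :
    Matrix ι ι ℂ :=
  levelPart (fun x' x => ω x' - ω x) (of fun x' x => star (φ x) * (√(P x' x) : ℂ)) ν

theorem Complex.star_ofReal (r : ℝ) : star (r : ℂ) = r :=
  Complex.conj_ofReal r

theorem Complex.star_mul_self_of_norm_eq_one {z : ℂ} (hz : ‖z‖ = 1) : star z * z = 1 := by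
  rw [Complex.star_def, Complex.conj_mul', hz]
  norm_num

theorem sum_covariantKraus_conjTranspose_mul_self [DecidableEq ι] (hω : Function.Injective ω)
    (hPnn : ∀ x' x, 0 ≤ P x' x) (hPcol : ∀ x, ∑ x', P x' x = 1) (hφ : ∀ x, ‖φ x‖ = 1) :
    ∑ ν ∈ bohrFrequencies ω, (covariantKraus ω P φ ν)ᴴ * covariantKraus ω P φ ν = 1 := by
  ext i j
  simp only [covariantKraus,
    sum_levelPart_conjTranspose_mul_self_apply (sub_mem_bohrFrequencies ω), sub_right_inj,
    hω.eq_iff, eq_comm (a := i)]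
  by_cases hij : j = i
  · subst hij
    have hentry : ∀ l, star (star (φ j) * (√(P l j) : ℂ)) * (star (φ j) * √(P l j)) = P l j := by
      intro l
      have hsqrt : (√(P l j) : ℂ) * √(P l j) = P l j := by
        rw [← Complex.ofReal_mul, Real.mul_self_sqrt (hPnn l j)]
      rw [star_mul', star_star, Complex.star_ofReal]
      linear_combination
        (√(P l j) * √(P l j) : ℂ) * Complex.star_mul_self_of_norm_eq_one (hφ j) + hsqrt
    simp only [if_true, of_apply, hentry, one_apply_eq, ← Complex.ofReal_sum, hPcol,
      Complex.ofReal_one]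
  · simp [hij, one_apply_ne (Ne.symm hij)]

theorem covariantKraus_output_apply (hPnn : ∀ x' x, 0 ≤ P x' x) (hφ : ∀ x, ‖φ x‖ = 1)
    {ρ : Matrix ι ι ℂ} (hρ : ∀ x y, ρ x y = (‖ρ x y‖ : ℂ) * φ x * star (φ y)) (x' y' : ι) :
    (∑ ν ∈ bohrFrequencies ω, covariantKraus ω P φ ν * ρ * (covariantKraus ω P φ ν)ᴴ) x' y' =
      ((∑ p ∈ univ.filter (fun p : ι × ι => ω p.1 - ω p.2 = ω x' - ω y'),
        √(P x' p.1 * P y' p.2) * ‖ρ p.1 p.2‖ : ℝ) : ℂ) := by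
  have hgap : ∀ a b, ω x' - ω a = ω y' - ω b ↔ ω a - ω b = ω x' - ω y' := fun a b => by
    constructor <;> intro h <;> linarith
  simp only [covariantKraus,
    sum_levelPart_mul_mul_conjTranspose_apply (sub_mem_bohrFrequencies ω), hgap, of_apply,
    sum_filter, Fintype.sum_prod_type, Complex.ofReal_sum, apply_ite Complex.ofReal,
    Complex.ofReal_zero]
  refine sum_congr rfl fun a _ => sum_congr rfl fun b _ => if_congr Iff.rfl ?_ rfl
  conv_lhs => rw [hρ a b, star_mul', star_star, Complex.star_ofReal]
  push_cast [Real.sqrt_mul (hPnn x' a)]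
  linear_combination (√(P x' a) * √(P y' b) * ‖ρ a b‖ : ℂ) *
    (star (φ b) * φ b * Complex.star_mul_self_of_norm_eq_one (hφ a) +
      Complex.star_mul_self_of_norm_eq_one (hφ b))

theorem covariantKraus_output_apply_self (hω : Function.Injective ω)
    (hPnn : ∀ x' x, 0 ≤ P x' x) (hφ : ∀ x, ‖φ x‖ = 1)
    {ρ : Matrix ι ι ℂ} (hρ : ∀ x y, ρ x y = (‖ρ x y‖ : ℂ) * φ x * star (φ y)) (x' : ι) :
    (∑ ν ∈ bohrFrequencies ω, covariantKraus ω P φ ν * ρ * (covariantKraus ω P φ ν)ᴴ) x' x' =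
      ∑ x, (P x' x : ℂ) * ρ x x := by
  have hdiag : ∀ x, (‖ρ x x‖ : ℂ) = ρ x x := fun x => by
    linear_combination -hρ x x - (‖ρ x x‖ : ℂ) * Complex.star_mul_self_of_norm_eq_one (hφ x)
  classical
  rw [covariantKraus_output_apply hPnn hφ hρ]
  simp only [sum_filter, Fintype.sum_prod_type, sub_self, sub_eq_zero, hω.eq_iff, sum_ite_eq,
    mem_univ, if_true, Real.sqrt_mul_self (hPnn _ _)]
  simp only [Complex.ofReal_sum, Complex.ofReal_mul, hdiag]

end CovariantKraus

theorem covariant_decoherence_bound_tight_general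
    (d : ℕ) (ω : Fin d → ℝ) (hω : Function.Injective ω)
    (P : Matrix (Fin d) (Fin d) ℝ)
    (hPnn : ∀ x' x, 0 ≤ P x' x)
    (hPcol : ∀ x, ∑ x', P x' x = 1)
    (ρ : Matrix (Fin d) (Fin d) ℂ)
    (φ : Fin d → ℂ) (hφ : ∀ x, ‖φ x‖ = 1)
    (hρ : ∀ x y, ρ x y = (‖ρ x y‖ : ℂ) * φ x * star (φ y))
    (K : ℝ → Matrix (Fin d) (Fin d) ℂ)
    (hK : ∀ ν x' x, K ν x' x =
      if ω x' - ω x = ν then star (φ x) * (Real.sqrt (P x' x) : ℂ) else 0)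
    (F : Finset ℝ)
    (hF : F = Finset.image (fun p : Fin d × Fin d => ω p.1 - ω p.2) Finset.univ)
    (σ : Matrix (Fin d) (Fin d) ℂ)
    (hσ : σ = ∑ ν ∈ F, K ν * ρ * (K ν)ᴴ) :
    (∑ ν ∈ F, (K ν)ᴴ * K ν = 1) ∧
    (∀ x' y', σ x' y' =
      ((∑ p ∈ Finset.univ.filter
          (fun p : Fin d × Fin d => ω p.1 - ω p.2 = ω x' - ω y'),
        Real.sqrt (P x' p.1 * P y' p.2) * ‖ρ p.1 p.2‖ : ℝ) : ℂ)) ∧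
    (∀ x' y', ‖σ x' y'‖ =
      ∑ p ∈ Finset.univ.filter
          (fun p : Fin d × Fin d => ω p.1 - ω p.2 = ω x' - ω y'),
        Real.sqrt (P x' p.1 * P y' p.2) * ‖ρ p.1 p.2‖) ∧
    (∀ x', σ x' x' = ∑ x, (P x' x : ℂ) * ρ x x) := by
  obtain rfl : K = covariantKraus ω P φ := funext fun ν => ext fun x' x => hK ν x' x
  obtain rfl : F = bohrFrequencies ω := hF
  subst hσ
  have hσ_apply := covariantKraus_output_apply (ω := ω) hPnn hφ hρ
  refine ⟨sum_covariantKraus_conjTranspose_mul_self hω hPnn hPcol hφ, hσ_apply,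
    fun x' y' => ?_, covariantKraus_output_apply_self hω hPnn hφ hρ⟩
  rw [hσ_apply, Complex.norm_real, Real.norm_of_nonneg (sum_nonneg fun _ _ => by positivity)]

/-- **Tightness of Theorem 2 under non-Markovian phase matching.** For a column-stochastic
population transfer matrix `P` and a state `ρ` whose entries factorise as
`ρ_{xy} = |ρ_{xy}| φ_x φ*_y`, the Kraus operators
`K_ν = Σ_{ω_{x'}−ω_x = ν} φ*_x √(P_{x'|x}) |x'⟩⟨x|` define a CPTP map
(`Σ_ν K_ν† K_ν = 1`) whose output saturates the covariant decoherence bound simultaneously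
for all entries, while transforming populations by `P`. -/
theorem covariant_decoherence_bound_tight
    (d : ℕ) (hd : 1 ≤ d) (ω : Fin d → ℝ) (hω : Function.Injective ω)
    (P : Matrix (Fin d) (Fin d) ℝ)
    (hPnn : ∀ x' x, 0 ≤ P x' x)
    (hPcol : ∀ x, ∑ x', P x' x = 1)
    (ρ : Matrix (Fin d) (Fin d) ℂ)
    (φ : Fin d → ℂ) (hφ : ∀ x, ‖φ x‖ = 1)
    (hρ : ∀ x y, ρ x y = (‖ρ x y‖ : ℂ) * φ x * star (φ y))
    (K : ℝ → Matrix (Fin d) (Fin d) ℂ)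
    (hK : ∀ ν x' x, K ν x' x =
      if ω x' - ω x = ν then star (φ x) * (Real.sqrt (P x' x) : ℂ) else 0)
    (F : Finset ℝ)
    (hF : F = Finset.image (fun p : Fin d × Fin d => ω p.1 - ω p.2) Finset.univ)
    (σ : Matrix (Fin d) (Fin d) ℂ)
    (hσ : σ = ∑ ν ∈ F, K ν * ρ * (K ν)ᴴ) :
    (∑ ν ∈ F, (K ν)ᴴ * K ν = 1) ∧
    (∀ x' y', σ x' y' =
      ((∑ p ∈ Finset.univ.filter
          (fun p : Fin d × Fin d => ω p.1 - ω p.2 = ω x' - ω y'),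
        Real.sqrt (P x' p.1 * P y' p.2) * ‖ρ p.1 p.2‖ : ℝ) : ℂ)) ∧
    (∀ x' y', ‖σ x' y'‖ =
      ∑ p ∈ Finset.univ.filter
          (fun p : Fin d × Fin d => ω p.1 - ω p.2 = ω x' - ω y'),
        Real.sqrt (P x' p.1 * P y' p.2) * ‖ρ p.1 p.2‖) ∧
    (∀ x', σ x' x' = ∑ x, (P x' x : ℂ) * ρ x x) :=
  covariant_decoherence_bound_tight_general d ω hω P hPnn hPcol ρ φ hφ hρ K hK F hF σ hσ
end

section
/- Let d ≥ 2 and let ω : Fin d → ℝ have a non-degenerate Bohr spectrum, i.e., the map (x,y) ↦ ω_x − ω_y is injective on ordered pairs of distinct indices. Let A^{x'|x}_{y'|y} ∈ ℂ have positive semidefinite Choi-type matrix J_{(x',x),(y',y)} = A^{x'|x}_{y'|y} with A^{x'|x}_{y'|y} = 0 whenever ω_{x'} − ω_x ≠ ω_{y'} − ω_y; write A_{x'|x} := A^{x'|x}_{x'|x}, define L_{x'|x} := A_{x'|x} for x' ≠ x and L_{x|x} := −Σ_{z≠x} A_{z|x}, and for x ≠ y set α_{xy} := (1/2)Σ_z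 (A_{z|x} + A_{z|y}) − A^{x|x}_{y|y}. Assume 0 is a simple eigenvalue of L (algebraic multiplicity one). Then: every nonzero complex eigenvalue λ of L satisfies Re λ < 0; Re α_{xy} ≥ γ_{xy} := (|L_{x|x}| + |L_{y|y}|)/2 > 0 for all x ≠ y; and, defining decoherence times T₂^{xy} := 1/Re(α_{xy}) for the d(d−1)/2 unordered pairs x ≠ y and relaxation times T₁^i := 1/|Re λ_i| for the d−1 nonzero eigenvalues λ_i of L counted with algebraic multiplicity, the harmonic means satisfy ⟨T₂⟩_h ≤ (d/(d−1)) ⟨T₁⟩_h, where ⟨T₂⟩_h := (d(d−1)/2)/Σ_{x<y} (1/T₂^{xy}) and ⟨T₁⟩_h := (d−1)/Σ_i (1/T₁^i). (Corollary 2, generalisation of T₂ ≤ 2T₁.) -/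
/-!
Positivity of `J` makes the population rate matrix `L` a Markov generator acting on columns:
its off-diagonal entries `A_{x'|x}` are nonnegative and its columns sum to zero. Gershgorin's
theorem for the columns puts every eigenvalue in a disc `|λ - L_xx| ≤ |L_xx|`, which lies in the
closed left half-plane and meets the imaginary axis only at `0`; hence
`∑_i |Re λ_i| = -tr L = ∑_x |L_xx|`. The `2 × 2` principal minor of `J` on `(x,x), (y,y)` gives
`2 Re A^{x|x}_{y|y} ≤ A_{x|x} + A_{y|y}`, i.e. `Re α_xy ≥ γ_xy`, and summing over the pairs
`x < y` yields `∑ Re α_xy ≥ (d-1)/2 · ∑_x |L_xx|`, which is the harmonic-mean inequality.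
Positivity of the sums and of `γ_xy` comes from simplicity of the eigenvalue `0`: two vanishing
diagonal entries of `L` would give two vanishing columns, hence a two-dimensional kernel.
-/

open Matrix Finset Polynomial
open scoped ComplexOrder

theorem Matrix.card_le_rootMultiplicity_zero_charpoly {n K : Type*} [Fintype n] [DecidableEq n]
    [Field K] (M : Matrix n n K) (s : Finset n) (hs : ∀ j ∈ s, ∀ i, M i j = 0) :
    s.card ≤ M.charpoly.rootMultiplicity 0 := by
  have hind : LinearIndependent K (fun j : s => (Pi.single (j : n) 1 : n → K)) :=
    (Pi.linearIndependent_single_one n K).comp (fun j : s => (j : n)) Subtype.val_injective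
  have hker : Submodule.span K (Set.range fun j : s => (Pi.single (j : n) 1 : n → K)) ≤
      Module.End.eigenspace (toLin' M) 0 := by
    rw [Submodule.span_le, Module.End.eigenspace_zero]
    rintro _ ⟨j, rfl⟩
    ext i
    simp [hs j j.2]
  calc s.card = Module.finrank K (Submodule.span K
        (Set.range fun j : s => (Pi.single (j : n) 1 : n → K))) := by
        rw [finrank_span_eq_card hind, Fintype.card_coe]
    _ ≤ Module.finrank K (Module.End.eigenspace (toLin' M) 0) := Submodule.finrank_mono hker
    _ ≤ M.charpoly.rootMultiplicity 0 := by
        simpa [Matrix.charpoly_toLin'] using LinearMap.finrank_eigenspace_le (toLin' M) 0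

theorem Matrix.PosSemidef.two_mul_re_apply_le {m : Type*} [Fintype m] [DecidableEq m]
    {J : Matrix m m ℂ} (hJ : J.PosSemidef) (u w : m) :
    2 * (J u w).re ≤ (J u u).re + (J w w).re := by
  have hform : star (Pi.single u 1 - Pi.single w 1) ⬝ᵥ J *ᵥ (Pi.single u 1 - Pi.single w 1) =
      J u u - J w u - (J u w - J w w) := by
    simp [mulVec_sub, mulVec_single]
  have hherm : (J w u).re = (J u w).re := by
    rw [← hJ.isHermitian.apply u w]; simp
  have h := Complex.nonneg_iff.mp (hform ▸ hJ.dotProduct_mulVec_nonneg _)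
  simp only [Complex.sub_re, hherm] at h
  linarith

theorem Complex.re_nonpos_of_norm_sub_le {μ : ℂ} {c : ℝ} (hμ : ‖μ - c‖ ≤ -c) : μ.re ≤ 0 := by
  have := (abs_le.mp ((Complex.abs_re_le_norm _).trans hμ)).2
  rw [Complex.sub_re, Complex.ofReal_re] at this
  linarith

theorem Complex.re_neg_of_norm_sub_le {μ : ℂ} {c : ℝ} (hμ : ‖μ - c‖ ≤ -c) (hμ0 : μ ≠ 0) :
    μ.re < 0 := by
  have hsq : Complex.normSq (μ - c) ≤ c ^ 2 := by
    rw [Complex.normSq_eq_norm_sq, ← neg_sq c]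
    exact pow_le_pow_left₀ (norm_nonneg _) hμ 2
  have hpos := Complex.normSq_pos.mpr hμ0
  rw [Complex.normSq_apply] at hsq hpos
  simp only [Complex.sub_re, Complex.ofReal_re, Complex.sub_im, Complex.ofReal_im, sub_zero] at hsq
  nlinarith [norm_nonneg (μ - c)]

theorem Finset.sum_filter_lt_add {ι M : Type*} [Fintype ι] [LinearOrder ι] [AddCommMonoid M]
    (f : ι → M) :
    ∑ p ∈ univ.filter (fun p : ι × ι => p.1 < p.2), (f p.1 + f p.2) =
      (Fintype.card ι - 1) • ∑ i, f i := by
  have hswap : ∑ p ∈ univ.filter (fun p : ι × ι => p.1 < p.2), f p.2 =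
      ∑ p ∈ univ.filter (fun p : ι × ι => p.2 < p.1), f p.1 :=
    Finset.sum_equiv (Equiv.prodComm ι ι) (by simp) (by simp)
  have hsplit : univ.filter (fun p : ι × ι => p.1 ≠ p.2) =
      univ.filter (fun p : ι × ι => p.1 < p.2) ∪ univ.filter (fun p : ι × ι => p.2 < p.1) := by
    ext p; simp only [mem_filter, mem_univ, true_and, mem_union, ne_iff_lt_or_gt]
  have hdisj : Disjoint (univ.filter (fun p : ι × ι => p.1 < p.2))
      (univ.filter (fun p : ι × ι => p.2 < p.1)) :=
    disjoint_filter.mpr fun p _ h h' => lt_asymm h h'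
  rw [sum_add_distrib, hswap, ← sum_union hdisj, ← hsplit, sum_filter, Fintype.sum_prod_type,
    smul_sum]
  refine sum_congr rfl fun i _ => ?_
  rw [← sum_filter, filter_ne]
  simp [card_erase_of_mem]

structure Matrix.IsRateMatrix {n : Type*} [Fintype n] (L : Matrix n n ℝ) : Prop where
  nonneg_of_ne : ∀ i j, i ≠ j → 0 ≤ L i j
  sum_col_eq_zero : ∀ j, ∑ i, L i j = 0

namespace Matrix.IsRateMatrix

variable {n : Type*} [Fintype n] [DecidableEq n] {L : Matrix n n ℝ}

theorem diag_eq_neg_sum (hL : L.IsRateMatrix) (j : n) : L j j = -∑ i ∈ univ.erase j, L i j := by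
  rw [eq_neg_iff_add_eq_zero, add_sum_erase _ (fun i => L i j) (mem_univ j), hL.sum_col_eq_zero]

theorem diag_nonpos (hL : L.IsRateMatrix) (j : n) : L j j ≤ 0 := by
  rw [hL.diag_eq_neg_sum, neg_nonpos]
  exact sum_nonneg fun i hi => hL.nonneg_of_ne i j (ne_of_mem_erase hi)

theorem abs_diag (hL : L.IsRateMatrix) (j : n) : |L j j| = ∑ i ∈ univ.erase j, L i j := by
  rw [abs_of_nonpos (hL.diag_nonpos j), hL.diag_eq_neg_sum, neg_neg]

theorem eq_zero_of_diag_eq_zero (hL : L.IsRateMatrix) {j : n} (hj : L j j = 0) (i : n) :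
    L i j = 0 := by
  obtain rfl | hij := eq_or_ne i j
  · exact hj
  · have hsum := hL.abs_diag j
    rw [hj, abs_zero, eq_comm, sum_eq_zero_iff_of_nonneg] at hsum
    · exact hsum i (mem_erase.mpr ⟨hij, mem_univ i⟩)
    · exact fun i hi => hL.nonneg_of_ne i j (ne_of_mem_erase hi)

/-- Gershgorin's circle theorem applied to `Lᵀ`. -/
theorem exists_norm_sub_diag_le (hL : L.IsRateMatrix) {μ : ℂ}
    (hμ : (L.map Complex.ofReal).charpoly.IsRoot μ) : ∃ j, ‖μ - L j j‖ ≤ -L j j := by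
  have heig : Module.End.HasEigenvalue (toLin' (L.map Complex.ofReal)ᵀ) μ := by
    rwa [Module.End.hasEigenvalue_iff_isRoot_charpoly, charpoly_toLin', charpoly_transpose]
  obtain ⟨j, hj⟩ := eigenvalue_mem_ball heig
  rw [Metric.mem_closedBall, dist_eq_norm] at hj
  simp only [transpose_apply, map_apply, Complex.norm_real, Real.norm_eq_abs] at hj
  refine ⟨j, hj.trans_eq ?_⟩
  rw [← abs_of_nonpos (hL.diag_nonpos j), hL.abs_diag]
  exact sum_congr rfl fun i hi => abs_of_nonneg (hL.nonneg_of_ne i j (ne_of_mem_erase hi))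

theorem re_nonpos_of_isRoot (hL : L.IsRateMatrix) {μ : ℂ}
    (hμ : (L.map Complex.ofReal).charpoly.IsRoot μ) : μ.re ≤ 0 :=
  let ⟨_, hj⟩ := hL.exists_norm_sub_diag_le hμ
  Complex.re_nonpos_of_norm_sub_le hj

theorem re_neg_of_isRoot (hL : L.IsRateMatrix) {μ : ℂ}
    (hμ : (L.map Complex.ofReal).charpoly.IsRoot μ) (hμ0 : μ ≠ 0) : μ.re < 0 :=
  let ⟨_, hj⟩ := hL.exists_norm_sub_diag_le hμ
  Complex.re_neg_of_norm_sub_le hj hμ0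

theorem sum_abs_re_roots (hL : L.IsRateMatrix) :
    (((L.map Complex.ofReal).charpoly.roots.filter (· ≠ 0)).map (fun μ => |μ.re|)).sum =
      ∑ j, |L j j| := by
  set roots := (L.map Complex.ofReal).charpoly.roots
  have hzeros : ((roots.filter (¬ · ≠ 0)).map fun μ => |μ.re|).sum = 0 :=
    Multiset.sum_eq_zero fun a ha => by
      obtain ⟨μ, hμ, rfl⟩ := Multiset.mem_map.mp ha
      simp [not_not.mp (Multiset.mem_filter.mp hμ).2]
  have hre : ∀ μ ∈ roots, |μ.re| = -μ.re := fun μ hμ =>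
    abs_of_nonpos (hL.re_nonpos_of_isRoot (isRoot_of_mem_roots hμ))
  calc ((roots.filter (· ≠ 0)).map fun μ => |μ.re|).sum
      = (roots.map fun μ => |μ.re|).sum := by
        conv_rhs => rw [← Multiset.filter_add_not (· ≠ 0) roots]
        rw [Multiset.map_add, Multiset.sum_add, hzeros, add_zero]
    _ = -(roots.sum).re := by
        rw [Multiset.map_congr rfl hre, Multiset.sum_map_neg, ← Complex.coe_reAddGroupHom,
          map_multiset_sum]
    _ = ∑ j, |L j j| := by
        rw [← trace_eq_sum_roots_charpoly]
        simp [trace, abs_of_nonpos (hL.diag_nonpos _)]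

theorem eq_of_diag_eq_zero (hL : L.IsRateMatrix)
    (hsimple : (L.map Complex.ofReal).charpoly.rootMultiplicity 0 ≤ 1) {i j : n}
    (hi : L i i = 0) (hj : L j j = 0) : i = j := by
  by_contra hij
  have := (L.map Complex.ofReal).card_le_rootMultiplicity_zero_charpoly {i, j} (by
    simp only [mem_insert, mem_singleton, map_apply, Complex.ofReal_eq_zero]
    rintro k (rfl | rfl) <;> exact hL.eq_zero_of_diag_eq_zero ‹_›)
  rw [card_pair hij] at this
  omega

theorem abs_diag_add_abs_diag_pos (hL : L.IsRateMatrix)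
    (hsimple : (L.map Complex.ofReal).charpoly.rootMultiplicity 0 ≤ 1) {i j : n} (hij : i ≠ j) :
    0 < |L i i| + |L j j| := by
  refine (add_nonneg (abs_nonneg _) (abs_nonneg _)).lt_of_ne fun h => hij ?_
  obtain ⟨hi, hj⟩ := (add_eq_zero_iff_of_nonneg (abs_nonneg _) (abs_nonneg _)).mp h.symm
  exact hL.eq_of_diag_eq_zero hsimple (abs_eq_zero.mp hi) (abs_eq_zero.mp hj)

theorem sum_abs_diag_pos (hL : L.IsRateMatrix)
    (hsimple : (L.map Complex.ofReal).charpoly.rootMultiplicity 0 ≤ 1)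
    (hn : 1 < Fintype.card n) : 0 < ∑ j, |L j j| := by
  obtain ⟨i, j, hij⟩ := Fintype.exists_pair_of_one_lt_card hn
  calc 0 < |L i i| + |L j j| := hL.abs_diag_add_abs_diag_pos hsimple hij
    _ = ∑ k ∈ {i, j}, |L k k| := (sum_pair (f := fun k => |L k k|) hij).symm
    _ ≤ ∑ k, |L k k| := sum_le_sum_of_subset_of_nonneg (subset_univ _) fun k _ _ => abs_nonneg _

end Matrix.IsRateMatrix

section Lindbladian

variable {n : Type*} [Fintype n] [DecidableEq n]

def populationRates (A : n → n → n → n → ℂ) : Matrix n n ℝ := fun x' x =>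
  if x' = x then -∑ z ∈ univ.filter (fun z => z ≠ x), (A z x z x).re else (A x' x x' x).re

noncomputable def decoherenceRate (A : n → n → n → n → ℂ) (x y : n) : ℂ :=
  (1 / 2) * (∑ z, (A z x z x + A z y z y)) - A x x y y

variable {A : n → n → n → n → ℂ} {J : Matrix (n × n) (n × n) ℂ}

theorem isRateMatrix_populationRates (hJ : ∀ x' x y' y, J (x', x) (y', y) = A x' x y' y)
    (hPSD : J.PosSemidef) : (populationRates A).IsRateMatrix where
  nonneg_of_ne x' x hne := by
    rw [populationRates, if_neg hne, ← hJ, ← Complex.zero_re]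
    exact (Complex.le_def.mp hPSD.diag_nonneg).1
  sum_col_eq_zero x := by
    rw [← add_sum_erase _ _ (mem_univ x), ← filter_ne']
    dsimp only [populationRates]
    rw [if_pos rfl, neg_add_eq_zero]
    exact sum_congr rfl fun z hz => (if_neg (mem_filter.mp hz).2).symm

theorem half_abs_diag_add_le_re_decoherenceRate
    (hJ : ∀ x' x y' y, J (x', x) (y', y) = A x' x y' y) (hPSD : J.PosSemidef) (x y : n) :
    (|populationRates A x x| + |populationRates A y y|) / 2 ≤ (decoherenceRate A x y).re := by
  have hrate := isRateMatrix_populationRates hJ hPSD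
  have hcol : ∀ w, ∑ z, (A z w z w).re = (A w w w w).re + |populationRates A w w| := fun w => by
    rw [hrate.abs_diag, ← add_sum_erase _ _ (mem_univ w)]
    exact congrArg _ (sum_congr rfl fun z hz => (if_neg (ne_of_mem_erase hz)).symm)
  have hJxy := hPSD.two_mul_re_apply_le (x, x) (y, y)
  simp only [hJ] at hJxy
  have hre : (decoherenceRate A x y).re =
      (∑ z, (A z x z x).re + ∑ z, (A z y z y).re) / 2 - (A x x y y).re := by
    simp [decoherenceRate, Complex.re_sum, sum_add_distrib, div_eq_inv_mul]
  rw [hre, hcol x, hcol y]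
  linarith

end Lindbladian

theorem harmonic_mean_le_of_sum_inv_le {d S₁ S₂ : ℝ} (hd : 1 < d) (hS₁ : 0 < S₁)
    (h : (d - 1) / 2 * S₁ ≤ S₂) :
    d * (d - 1) / 2 / S₂ ≤ d / (d - 1) * ((d - 1) / S₁) := by
  have hd1 : 0 < d - 1 := sub_pos.mpr hd
  calc d * (d - 1) / 2 / S₂ ≤ d * (d - 1) / 2 / ((d - 1) / 2 * S₁) :=
        div_le_div_of_nonneg_left (by positivity) (by positivity) h
    _ = d / (d - 1) * ((d - 1) / S₁) := by field_simp

theorem generalised_T1_T2_general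
    (d : ℕ) (hd : 2 ≤ d)
    (A : Fin d → Fin d → Fin d → Fin d → ℂ)
    (J : Matrix (Fin d × Fin d) (Fin d × Fin d) ℂ)
    (hJ : ∀ x' x y' y, J (x', x) (y', y) = A x' x y' y)
    (hPSD : J.PosSemidef)
    (L : Matrix (Fin d) (Fin d) ℝ)
    (hL : ∀ x' x, L x' x =
      if x' = x then -∑ z ∈ Finset.univ.filter (fun z => z ≠ x), (A z x z x).re
      else (A x' x x' x).re)
    (α : Fin d → Fin d → ℂ)
    (hα : ∀ x y, α x y = (1 / 2) * (∑ z, (A z x z x + A z y z y)) - A x x y y)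
    (γ : Fin d → Fin d → ℝ)
    (hγ : ∀ x y, γ x y = (|L x x| + |L y y|) / 2)
    (hsimple : Polynomial.rootMultiplicity 0 (L.map Complex.ofReal).charpoly = 1)
    (T2invSum : ℝ)
    (hT2 : T2invSum =
      ∑ p ∈ Finset.univ.filter (fun p : Fin d × Fin d => p.1 < p.2), (α p.1 p.2).re)
    (T1invSum : ℝ)
    (hT1 : T1invSum =
      ((((L.map Complex.ofReal).charpoly.roots.filter (fun μ => μ ≠ 0)).map
        (fun μ => |μ.re|)).sum)) :
    (∀ lam ∈ (L.map Complex.ofReal).charpoly.roots, lam ≠ 0 → lam.re < 0) ∧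
    (∀ x y : Fin d, x ≠ y → γ x y ≤ (α x y).re ∧ 0 < γ x y) ∧
    (d * (d - 1) / 2 : ℝ) / T2invSum ≤ ((d : ℝ) / (d - 1)) * ((d - 1 : ℝ) / T1invSum) := by
  obtain rfl : L = populationRates A := Matrix.ext hL
  obtain rfl : α = decoherenceRate A := funext₂ hα
  have hrate := isRateMatrix_populationRates hJ hPSD
  have hγα x y : γ x y ≤ (decoherenceRate A x y).re :=
    (hγ x y).trans_le (half_abs_diag_add_le_re_decoherenceRate hJ hPSD x y)
  have hT1' : T1invSum = ∑ x, |populationRates A x x| := hT1.trans hrate.sum_abs_re_roots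
  have hT1pos : 0 < T1invSum :=
    hT1' ▸ hrate.sum_abs_diag_pos hsimple.le (by rw [Fintype.card_fin]; omega)
  have hT2ge : ((d : ℝ) - 1) / 2 * T1invSum ≤ T2invSum := by
    have hγsum := sum_filter_lt_add fun x => |populationRates A x x|
    rw [hT2, hT1']
    calc ((d : ℝ) - 1) / 2 * ∑ x, |populationRates A x x|
        = ∑ p ∈ univ.filter (fun p : Fin d × Fin d => p.1 < p.2), γ p.1 p.2 := by
          simp only [hγ, ← sum_div, hγsum, nsmul_eq_mul, Fintype.card_fin]
          push_cast [Nat.cast_sub (by omega : 1 ≤ d)]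
          ring
      _ ≤ _ := sum_le_sum fun p _ => hγα p.1 p.2
  refine ⟨fun μ hμ hμ0 => hrate.re_neg_of_isRoot (isRoot_of_mem_roots hμ) hμ0,
    fun x y hxy => ⟨hγα x y, ?_⟩,
    harmonic_mean_le_of_sum_inv_le (by exact_mod_cast hd) hT1pos hT2ge⟩
  rw [hγ]
  exact half_pos (hrate.abs_diag_add_abs_diag_pos hsimple.le hxy)

/-- **Corollary 2 (generalisation of `T₂ ≤ 2T₁`).** For a covariant Lindbladian on a system
with non-degenerate Bohr spectrum whose population transfer rate matrix `L` has `0` as a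
simple eigenvalue: every nonzero eigenvalue of `L` has negative real part, the decoherence
rates satisfy `Re α_{xy} ≥ γ_{xy} > 0`, and the harmonic means of the decoherence times
`T₂^{xy} = 1/Re α_{xy}` and relaxation times `T₁^i = 1/|Re λ_i|` obey
`⟨T₂⟩_h ≤ (d/(d−1)) ⟨T₁⟩_h`. -/
theorem generalised_T1_T2
    (d : ℕ) (hd : 2 ≤ d) (ω : Fin d → ℝ)
    (hBohr : ∀ x y x' y' : Fin d, x ≠ y → x' ≠ y' →
      ω x - ω y = ω x' - ω y' → x = x' ∧ y = y')
    (A : Fin d → Fin d → Fin d → Fin d → ℂ)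
    (J : Matrix (Fin d × Fin d) (Fin d × Fin d) ℂ)
    (hJ : ∀ x' x y' y, J (x', x) (y', y) = A x' x y' y)
    (hPSD : J.PosSemidef)
    (hcov : ∀ x' x y' y, ω x' - ω x ≠ ω y' - ω y → A x' x y' y = 0)
    (L : Matrix (Fin d) (Fin d) ℝ)
    (hL : ∀ x' x, L x' x =
      if x' = x then -∑ z ∈ Finset.univ.filter (fun z => z ≠ x), (A z x z x).re
      else (A x' x x' x).re)
    (α : Fin d → Fin d → ℂ)
    (hα : ∀ x y, α x y = (1 / 2) * (∑ z, (A z x z x + A z y z y)) - A x x y y)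
    (γ : Fin d → Fin d → ℝ)
    (hγ : ∀ x y, γ x y = (|L x x| + |L y y|) / 2)
    (hsimple : Polynomial.rootMultiplicity 0 (L.map Complex.ofReal).charpoly = 1)
    (T2invSum : ℝ)
    (hT2 : T2invSum =
      ∑ p ∈ Finset.univ.filter (fun p : Fin d × Fin d => p.1 < p.2), (α p.1 p.2).re)
    (T1invSum : ℝ)
    (hT1 : T1invSum =
      ((((L.map Complex.ofReal).charpoly.roots.filter (fun μ => μ ≠ 0)).map
        (fun μ => |μ.re|)).sum)) :
    (∀ lam ∈ (L.map Complex.ofReal).charpoly.roots, lam ≠ 0 → lam.re < 0) ∧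
    (∀ x y : Fin d, x ≠ y → γ x y ≤ (α x y).re ∧ 0 < γ x y) ∧
    (d * (d - 1) / 2 : ℝ) / T2invSum ≤ ((d : ℝ) / (d - 1)) * ((d - 1 : ℝ) / T1invSum) :=
  generalised_T1_T2_general d hd A J hJ hPSD L hL α hα γ hγ hsimple T2invSum hT2 T1invSum hT1
end

section
/- Let d ≥ 1 and ω : Fin d → ℝ injective. Let L be a real d×d matrix with L_{x'|x} ≥ 0 for x' ≠ x and Σ_{x'} L_{x'|x} = 0 for every x; assume L is diagonalizable over ℂ and has 0 as a simple eigenvalue, with a corresponding eigenvector π that is a probability vector with π_x > 0 for all x. Write P(s) := exp(sL). Suppose ρ : [0,∞) → Matrix (Fin d) (Fin d) ℂ satisfies, for all s, t ≥ 0 and all x', y': |ρ_{x'y'}(t+s)| ≤ Σ_{(x,y) : ω_x − ω_y = ω_{x'} − ω_{y'}} √(P(s)_{x'|x} P(s)_{y'|y}) · |ρ_{xy}(t)|. Then for every x' ≠ y', |ρ_{x'y'}(t)| → 0 as t → ∞. (Corollary 4, part 2: complete loss of coherence under ergodic covariant Markovian dynamics.) -/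
open Matrix Finset Polynomial

attribute [local instance] Matrix.linftyOpNormedAddCommGroup Matrix.linftyOpNormedRing
  Matrix.linftyOpNormedAlgebra

open Filter Topology

/-!
Diagonalising `L = U diag(D) U⁻¹`, Gershgorin's theorem (applied to `Lᵀ`, whose rows sum to
zero) puts every eigenvalue other than the simple zero in the open left half-plane, so `exp(sL)`
converges to the rank-one projection `pr 1ᵀ`.

Fix `x' ≠ y'` and let `C` be the set of pairs with the Bohr frequency `δ = ω x' - ω y' ≠ 0`.
Both coordinate projections are injective on `C`, and the first one misses an extremal level of
`ω`, so its image `S` has stationary weight `pr(S) < 1`. By Cauchy–Schwarz the kernel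
`√(P x' x * P y' y)` restricted to `C` has column sums at most `√(pr(S))` in the limit. Hence
`∑_{(x,y) ∈ C} |ρ_{xy}|` contracts by a fixed factor `q < 1` over every long enough time step, and
tends to zero.
-/

theorem Complex.eq_zero_or_re_neg_of_norm_sub_ofReal_le {μ : ℂ} {c : ℝ} (h : ‖μ - c‖ ≤ -c) :
    μ = 0 ∨ μ.re < 0 := by
  have hc : 0 ≤ -c := (norm_nonneg _).trans h
  have hsq : (μ.re - c) ^ 2 + μ.im ^ 2 ≤ c ^ 2 := by
    have := pow_le_pow_left₀ (norm_nonneg _) h 2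
    rwa [Complex.sq_norm, Complex.normSq_apply, neg_sq, Complex.sub_re, Complex.ofReal_re,
      Complex.sub_im, Complex.ofReal_im, sub_zero, ← sq, ← sq] at this
  rcases lt_or_ge μ.re 0 with hre | hre
  · exact .inr hre
  · left
    apply Complex.ext <;> simp only [Complex.zero_re, Complex.zero_im] <;> nlinarith

theorem Complex.tendsto_exp_ofReal_mul_atTop_of_re_neg {μ : ℂ} (hμ : μ.re < 0) :
    Tendsto (fun s : ℝ => Complex.exp (s * μ)) atTop (𝓝 0) := by
  rw [Complex.tendsto_exp_nhds_zero_iff]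
  simpa using tendsto_id.atTop_mul_const_of_neg hμ

section Diagonalizable

variable {K n : Type*} [Field K] [Fintype n] [DecidableEq n] {U : Matrix n n K} {D : n → K}
  {i₀ : n}

theorem roots_charpoly_conj_diagonal (hU : IsUnit U.det) :
    (U * diagonal D * U⁻¹).charpoly.roots = univ.val.map D := by
  obtain ⟨u, rfl⟩ := (isUnit_iff_isUnit_det U).2 hU
  have hprod : ∏ i, (X - C (D i)) = ((univ.val.map D).map fun a => X - C a).prod := by
    rw [Multiset.map_map]; rfl
  rw [charpoly_units_conj, charpoly_diagonal, hprod, roots_multiset_prod_X_sub_C]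

theorem exists_eq_and_ne_of_rootMultiplicity_eq_one (hU : IsUnit U.det) {a : K}
    (h : rootMultiplicity a (U * diagonal D * U⁻¹).charpoly = 1) :
    ∃ i₀, D i₀ = a ∧ ∀ i, i ≠ i₀ → D i ≠ a := by
  classical
  rw [← count_roots, roots_charpoly_conj_diagonal hU, Multiset.count_map] at h
  obtain ⟨i₀, hi₀⟩ := Finset.card_eq_one.1 (show (univ.filter fun i => a = D i).card = 1 from h)
  have hmem : ∀ i, a = D i ↔ i = i₀ := fun i => by
    simpa using Finset.ext_iff.1 hi₀ i
  exact ⟨i₀, ((hmem i₀).2 rfl).symm, fun i hi h => hi ((hmem i).1 h.symm)⟩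

theorem eq_smul_col_of_conj_diagonal_mulVec_eq_zero (hU : IsUnit U.det)
    (hD : ∀ i, i ≠ i₀ → D i ≠ 0) {v : n → K} (hv : (U * diagonal D * U⁻¹) *ᵥ v = 0) :
    v = (U⁻¹ *ᵥ v) i₀ • fun x => U x i₀ := by
  have hker : diagonal D *ᵥ (U⁻¹ *ᵥ v) = 0 := by
    have : diagonal D * U⁻¹ = U⁻¹ * (U * diagonal D * U⁻¹) := by
      rw [← mul_assoc, ← mul_assoc, nonsing_inv_mul U hU, one_mul]
    rw [mulVec_mulVec, this, ← mulVec_mulVec, hv, mulVec_zero]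
  have hzero : ∀ i, i ≠ i₀ → (U⁻¹ *ᵥ v) i = 0 := fun i hi =>
    (mul_eq_zero.1 (by simpa [mulVec_diagonal] using congrFun hker i)).resolve_left (hD i hi)
  ext x
  calc v x = (U *ᵥ (U⁻¹ *ᵥ v)) x := by rw [mulVec_mulVec, mul_nonsing_inv U hU, one_mulVec]
    _ = U x i₀ * (U⁻¹ *ᵥ v) i₀ :=
      Finset.sum_eq_single i₀ (fun i _ hi => by rw [hzero i hi, mul_zero]) (by simp)
    _ = _ := mul_comm _ _

theorem eq_smul_row_of_vecMul_conj_diagonal_eq_zero (hU : IsUnit U.det)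
    (hD : ∀ i, i ≠ i₀ → D i ≠ 0) {v : n → K} (hv : v ᵥ* (U * diagonal D * U⁻¹) = 0) :
    v = (v ᵥ* U) i₀ • U⁻¹ i₀ := by
  have hker : (v ᵥ* U) ᵥ* diagonal D = 0 := by
    have : U * diagonal D = U * diagonal D * U⁻¹ * U := by
      rw [mul_assoc _ U⁻¹, nonsing_inv_mul U hU, mul_one]
    rw [vecMul_vecMul, this, ← vecMul_vecMul, hv, zero_vecMul]
  have hzero : ∀ i, i ≠ i₀ → (v ᵥ* U) i = 0 := fun i hi =>
    (mul_eq_zero.1 (by simpa [vecMul_diagonal] using congrFun hker i)).resolve_right (hD i hi)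
  ext x
  calc v x = ((v ᵥ* U) ᵥ* U⁻¹) x := by rw [vecMul_vecMul, mul_nonsing_inv U hU, vecMul_one]
    _ = (v ᵥ* U) i₀ * U⁻¹ i₀ x :=
      Finset.sum_eq_single i₀ (fun i _ hi => by rw [hzero i hi, zero_mul]) (by simp)

/-- The left side is the spectral projection `U e_{i₀} e_{i₀}ᵀ U⁻¹` onto the kernel, which is
`p 1ᵀ` because the kernel is spanned by `p` and the left kernel by `1ᵀ`, with `1ᵀ p = 1`. -/
theorem conj_diagonal_proj_eq (hU : IsUnit U.det) (hD : ∀ i, i ≠ i₀ → D i ≠ 0) {p : n → K}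
    (hp : (U * diagonal D * U⁻¹) *ᵥ p = 0) (hone : 1 ᵥ* (U * diagonal D * U⁻¹) = 0)
    (hpsum : ∑ x, p x = 1) (x' x : n) :
    U x' i₀ * U⁻¹ i₀ x = p x' := by
  have hpcol := congrFun (eq_smul_col_of_conj_diagonal_mulVec_eq_zero hU hD hp)
  have honerow := congrFun (eq_smul_row_of_vecMul_conj_diagonal_eq_zero hU hD hone)
  simp only [Pi.smul_apply, smul_eq_mul, Pi.one_apply] at hpcol honerow
  have hab : (U⁻¹ *ᵥ p) i₀ * ((1 : n → K) ᵥ* U) i₀ = 1 := by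
    rw [← hpsum, Finset.sum_congr rfl fun x _ => hpcol x]
    simp [vecMul, dotProduct, Finset.mul_sum]
  rw [hpcol x']
  linear_combination (U x' i₀ * U⁻¹ i₀ x) * hab.symm - ((U⁻¹ *ᵥ p) i₀ * U x' i₀) * honerow x

end Diagonalizable

section RateMatrix

variable {n : Type*} [Fintype n] [DecidableEq n] {L : Matrix n n ℝ}

theorem eq_zero_or_re_neg_of_isRoot_charpoly (hLoff : ∀ x' x, x' ≠ x → 0 ≤ L x' x)
    (hLcol : ∀ x, ∑ x', L x' x = 0) {μ : ℂ} (hμ : (L.map Complex.ofReal).charpoly.IsRoot μ) :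
    μ = 0 ∨ μ.re < 0 := by
  rw [← charpoly_transpose, ← charpoly_toLin',
    ← Module.End.hasEigenvalue_iff_isRoot_charpoly] at hμ
  obtain ⟨k, hk⟩ := eigenvalue_mem_ball hμ
  refine Complex.eq_zero_or_re_neg_of_norm_sub_ofReal_le (c := L k k) ?_
  have hoff : ∑ j ∈ univ.erase k, L j k = -L k k := by
    rw [Finset.sum_erase_eq_sub (mem_univ k), hLcol k, zero_sub]
  rw [Metric.mem_closedBall, dist_eq_norm] at hk
  refine hk.trans_eq ?_
  rw [← hoff]
  refine Finset.sum_congr rfl fun j hj => ?_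
  simp [abs_of_nonneg (hLoff j k (ne_of_mem_erase hj))]

theorem exp_smul_apply_eq_sum {U : Matrix n n ℂ} {D : n → ℂ} (hU : IsUnit U.det)
    (hL : L.map Complex.ofReal = U * diagonal D * U⁻¹) (s : ℝ) (x' x : n) :
    (NormedSpace.exp (s • L) x' x : ℂ) = ∑ i, U x' i * Complex.exp (s * D i) * U⁻¹ i x := by
  have hmap : (NormedSpace.exp (s • L)).map Complex.ofReal
      = NormedSpace.exp (U * diagonal (fun i => s * D i) * U⁻¹) := by
    have hsmul : (s • L).map Complex.ofReal = U * diagonal (fun i => s * D i) * U⁻¹ := by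
      rw [show (s • L).map Complex.ofReal = (s : ℂ) • L.map Complex.ofReal by ext; simp, hL,
        ← Matrix.smul_mul, ← Matrix.mul_smul, ← diagonal_smul]
      rfl
    rw [← hsmul]
    exact NormedSpace.map_exp Complex.ofRealHom.mapMatrix
      (continuous_id.matrix_map Complex.continuous_ofReal) _
  rw [exp_conj _ _ ((isUnit_iff_isUnit_det U).2 hU), exp_diagonal] at hmap
  rw [← Matrix.map_apply (f := Complex.ofReal), hmap, mul_apply]
  simp [mul_diagonal, Pi.exp_def, ← Complex.exp_eq_exp_ℂ]

theorem tendsto_exp_smul_apply_of_simple_zero (hLoff : ∀ x' x, x' ≠ x → 0 ≤ L x' x)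
    (hLcol : ∀ x, ∑ x', L x' x = 0)
    (hdiag : ∃ (U : Matrix n n ℂ) (D : n → ℂ),
      IsUnit U.det ∧ L.map Complex.ofReal = U * Matrix.diagonal D * U⁻¹)
    (hsimple : rootMultiplicity 0 (L.map Complex.ofReal).charpoly = 1)
    {pr : n → ℝ} (hprsum : ∑ x, pr x = 1) (hprfix : L *ᵥ pr = 0) (x' x : n) :
    Tendsto (fun s : ℝ => NormedSpace.exp (s • L) x' x) atTop (𝓝 (pr x')) := by
  obtain ⟨U, D, hU, hL⟩ := hdiag
  obtain ⟨i₀, hD₀, hD⟩ := exists_eq_and_ne_of_rootMultiplicity_eq_one hU (hL ▸ hsimple)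
  have hre : ∀ i, i ≠ i₀ → (D i).re < 0 := fun i hi =>
    (eq_zero_or_re_neg_of_isRoot_charpoly hLoff hLcol (isRoot_of_mem_roots (by
      rw [hL, roots_charpoly_conj_diagonal hU]
      exact Multiset.mem_map_of_mem D (mem_univ_val i)))).resolve_left (hD i hi)
  have hproj : U x' i₀ * U⁻¹ i₀ x = pr x' := by
    refine conj_diagonal_proj_eq hU hD (p := Complex.ofReal ∘ pr) ?_ ?_ ?_ x' x
    · ext y
      rw [← hL]
      exact (RingHom.map_mulVec Complex.ofRealHom L pr y).symm.trans (by simp [hprfix])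
    · ext y
      rw [← hL]
      simpa [vecMul, dotProduct, hLcol] using (RingHom.map_vecMul Complex.ofRealHom L 1 y).symm
    · simp [← Complex.ofReal_sum, hprsum]
  have hexp : ∀ i, Tendsto (fun s : ℝ => Complex.exp (s * D i)) atTop
      (𝓝 (if i = i₀ then 1 else 0)) := fun i => by
    split_ifs with hi
    · simp [hi, hD₀]
    · exact Complex.tendsto_exp_ofReal_mul_atTop_of_re_neg (hre i hi)
  rw [← Filter.tendsto_ofReal_iff, ← hproj]
  simp_rw [exp_smul_apply_eq_sum hU hL]
  convert tendsto_finsetSum univ fun i _ => (tendsto_const_nhds.mul (hexp i)).mul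
    (tendsto_const_nhds (x := U⁻¹ i x)) using 2
  simp

end RateMatrix

section BohrPairs

variable {ι : Type*} [Fintype ι]

noncomputable def bohrPairs (ω : ι → ℝ) (δ : ℝ) : Finset (ι × ι) :=
  univ.filter fun p => ω p.1 - ω p.2 = δ

variable {ω : ι → ℝ} {δ : ℝ}

theorem mem_bohrPairs {p : ι × ι} : p ∈ bohrPairs ω δ ↔ ω p.1 - ω p.2 = δ := by
  simp [bohrPairs]

theorem injOn_fst_bohrPairs (hω : Function.Injective ω) :
    Set.InjOn Prod.fst (bohrPairs ω δ : Set (ι × ι)) :=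
  fun p hp p' hp' h => Prod.ext h <| hω <| by
    have := (mem_bohrPairs.1 hp).trans (mem_bohrPairs.1 hp').symm
    rw [h] at this
    linarith

theorem injOn_snd_bohrPairs (hω : Function.Injective ω) :
    Set.InjOn Prod.snd (bohrPairs ω δ : Set (ι × ι)) :=
  fun p hp p' hp' h => Prod.ext (hω <| by
    have := (mem_bohrPairs.1 hp).trans (mem_bohrPairs.1 hp').symm
    rw [h] at this
    linarith) h

theorem exists_notMem_image_fst_bohrPairs [DecidableEq ι] [Nonempty ι] (hδ : δ ≠ 0) :
    ∃ z, z ∉ (bohrPairs ω δ).image Prod.fst := by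
  obtain ⟨z, hz⟩ : ∃ z, ∀ y, ω z - ω y ≠ δ := by
    rcases hδ.lt_or_gt with h | h
    · obtain ⟨z, hz⟩ := Finite.exists_max ω
      exact ⟨z, fun y => (by linarith [hz y] : δ < ω z - ω y).ne'⟩
    · obtain ⟨z, hz⟩ := Finite.exists_min ω
      exact ⟨z, fun y => (by linarith [hz y] : ω z - ω y < δ).ne⟩
  refine ⟨z, fun hmem => ?_⟩
  obtain ⟨p, hp, rfl⟩ := mem_image.1 hmem
  exact hz p.2 (mem_bohrPairs.1 hp)

end BohrPairs

section Contraction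

variable {ι : Type*} [Fintype ι] [DecidableEq ι] {C : Finset (ι × ι)}

theorem sum_sqrt_mul_le_of_injOn (hfst : Set.InjOn Prod.fst (C : Set (ι × ι)))
    (hsnd : Set.InjOn Prod.snd (C : Set (ι × ι))) (f g : ι → ℝ) :
    ∑ p ∈ C, √(f p.1 * g p.2) ≤ √(∑ u ∈ C.image Prod.fst, |f u|) * √(∑ u, |g u|) :=
  calc ∑ p ∈ C, √(f p.1 * g p.2) ≤ ∑ p ∈ C, √|f p.1| * √|g p.2| := sum_le_sum fun p _ => by
        rw [← Real.sqrt_mul (abs_nonneg _), ← abs_mul]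
        exact Real.sqrt_le_sqrt (le_abs_self _)
    _ ≤ √(∑ p ∈ C, |f p.1|) * √(∑ p ∈ C, |g p.2|) :=
        Real.sum_sqrt_mul_sqrt_le C (fun _ => abs_nonneg _) (fun _ => abs_nonneg _)
    _ ≤ √(∑ u ∈ C.image Prod.fst, |f u|) * √(∑ u, |g u|) := by
        rw [sum_image hfst, ← sum_image hsnd (f := fun u => |g u|)]
        gcongr
        exact subset_univ _

theorem exists_sum_sqrt_mul_le_lt_one {P : ℝ → Matrix ι ι ℝ} {pr : ι → ℝ}
    (hP : ∀ u a, Tendsto (fun s => P s u a) atTop (𝓝 (pr u))) (hpos : ∀ x, 0 < pr x)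
    (hsum : ∑ x, pr x = 1) (hfst : Set.InjOn Prod.fst (C : Set (ι × ι)))
    (hsnd : Set.InjOn Prod.snd (C : Set (ι × ι))) {z : ι} (hz : z ∉ C.image Prod.fst) :
    ∃ q, 0 ≤ q ∧ q < 1 ∧
      ∀ᶠ s in atTop, ∀ a b, ∑ p ∈ C, √(P s p.1 a * P s p.2 b) ≤ q := by
  set S := C.image Prod.fst
  have hcol : ∀ (T : Finset ι) a,
      Tendsto (fun s => √(∑ u ∈ T, |P s u a|)) atTop (𝓝 √(∑ u ∈ T, pr u)) := fun T a => by
    simpa [abs_of_pos (hpos _)] using (tendsto_finsetSum T fun u _ => (hP u a).abs).sqrt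
  have hS : √(∑ u ∈ S, pr u) < 1 := by
    rw [Real.sqrt_lt' one_pos, one_pow, ← hsum]
    exact sum_lt_sum_of_subset (subset_univ S) (mem_univ z) hz (hpos z) fun _ _ _ => (hpos _).le
  obtain ⟨q, hSq, hq1⟩ := exists_between hS
  refine ⟨q, (Real.sqrt_nonneg _).trans hSq.le, hq1, ?_⟩
  have hlim : ∀ a b, Tendsto (fun s => √(∑ u ∈ S, |P s u a|) * √(∑ u, |P s u b|)) atTop
      (𝓝 √(∑ u ∈ S, pr u)) := fun a b => by
    simpa [hsum] using (hcol S a).mul (hcol univ b)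
  filter_upwards [eventually_all.2 fun a => eventually_all.2 fun b =>
    (hlim a b).eventually (eventually_le_nhds hSq)] with s hs a b
  exact (sum_sqrt_mul_le_of_injOn hfst hsnd _ _).trans (hs a b)

end Contraction

theorem Finset.sum_le_mul_sum_of_le_sum_mul {κ : Type*} {C : Finset κ} {a b : κ → ℝ}
    {K : κ → κ → ℝ} {q : ℝ} (hb : ∀ p ∈ C, 0 ≤ b p) (hab : ∀ p' ∈ C, a p' ≤ ∑ p ∈ C, K p' p * b p)
    (hK : ∀ p ∈ C, ∑ p' ∈ C, K p' p ≤ q) :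
    ∑ p ∈ C, a p ≤ q * ∑ p ∈ C, b p :=
  calc ∑ p' ∈ C, a p' ≤ ∑ p' ∈ C, ∑ p ∈ C, K p' p * b p := sum_le_sum hab
    _ = ∑ p ∈ C, (∑ p' ∈ C, K p' p) * b p := by rw [sum_comm]; simp only [sum_mul]
    _ ≤ ∑ p ∈ C, q * b p := sum_le_sum fun p hp => mul_le_mul_of_nonneg_right (hK p hp) (hb p hp)
    _ = q * ∑ p ∈ C, b p := (mul_sum _ _ _).symm

theorem tendsto_zero_of_eventually_le_mul {A : ℝ → ℝ} {q : ℝ} (hA : ∀ t, 0 ≤ A t) (hq0 : 0 ≤ q)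
    (hq1 : q < 1) (h : ∀ᶠ s in atTop, ∀ t, 0 ≤ t → A (t + s) ≤ q * A t) :
    Tendsto A atTop (𝓝 0) := by
  obtain ⟨S₀, hS₀⟩ := eventually_atTop.1 (h.and (eventually_ge_atTop 0))
  have hiter : ∀ n : ℕ, ∀ s, S₀ ≤ s → A (n * s) ≤ q ^ n * A 0 := by
    intro n
    induction n with
    | zero => simp
    | succ n ih =>
      intro s hs
      obtain ⟨hstep, hs0⟩ := hS₀ s hs
      calc A ((n + 1 : ℕ) * s) = A (n * s + s) := by push_cast; ring_nf
        _ ≤ q * A (n * s) := hstep _ (by positivity)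
        _ ≤ q * (q ^ n * A 0) := by gcongr; exact ih s hs
        _ = q ^ (n + 1) * A 0 := by ring
  have hgeo : Tendsto (fun n : ℕ => q ^ n * A 0) atTop (𝓝 0) := by
    simpa using (tendsto_pow_atTop_nhds_zero_of_lt_one hq0 hq1).mul_const (A 0)
  refine tendsto_order.2 ⟨fun a ha => .of_forall fun t => ha.trans_le (hA t), fun a ha => ?_⟩
  obtain ⟨n, hn, hn0⟩ := ((hgeo.eventually (gt_mem_nhds ha)).and (eventually_gt_atTop 0)).exists
  have hn0' : (0 : ℝ) < n := by exact_mod_cast hn0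
  refine eventually_atTop.2 ⟨n * S₀, fun t ht => ?_⟩
  calc A t = A (n * (t / n)) := by rw [mul_div_cancel₀ t hn0'.ne']
    _ ≤ q ^ n * A 0 := hiter n _ ((le_div_iff₀ hn0').2 (by linarith))
    _ < a := hn

theorem coherence_vanishes_ergodic_general
    (d : ℕ) (ω : Fin d → ℝ) (hω : Function.Injective ω)
    (L : Matrix (Fin d) (Fin d) ℝ)
    (hLoff : ∀ x' x, x' ≠ x → 0 ≤ L x' x)
    (hLcol : ∀ x, ∑ x', L x' x = 0)
    (hdiag : ∃ (U : Matrix (Fin d) (Fin d) ℂ) (D : Fin d → ℂ),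
      IsUnit U.det ∧ L.map Complex.ofReal = U * Matrix.diagonal D * U⁻¹)
    (hsimple : Polynomial.rootMultiplicity 0 (L.map Complex.ofReal).charpoly = 1)
    (pr : Fin d → ℝ)
    (hprpos : ∀ x, 0 < pr x) (hprsum : ∑ x, pr x = 1)
    (hprfix : L *ᵥ pr = 0)
    (ρ : ℝ → Matrix (Fin d) (Fin d) ℂ)
    (hbound : ∀ s ≥ (0 : ℝ), ∀ t ≥ (0 : ℝ), ∀ x' y' : Fin d,
      ‖ρ (t + s) x' y'‖ ≤
        ∑ p ∈ Finset.univ.filter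
            (fun p : Fin d × Fin d => ω p.1 - ω p.2 = ω x' - ω y'),
          Real.sqrt (NormedSpace.exp (s • L) x' p.1 * NormedSpace.exp (s • L) y' p.2) *
            ‖ρ t p.1 p.2‖) :
    ∀ x' y' : Fin d, x' ≠ y' →
      Filter.Tendsto (fun t => ‖ρ t x' y'‖) Filter.atTop (nhds 0) := by
  intro x' y' hne
  have : Nonempty (Fin d) := ⟨x'⟩
  obtain ⟨z, hz⟩ := exists_notMem_image_fst_bohrPairs (ω := ω) (sub_ne_zero.2 (hω.ne hne))
  obtain ⟨q, hq0, hq1, hcontract⟩ := exists_sum_sqrt_mul_le_lt_one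
    (tendsto_exp_smul_apply_of_simple_zero hLoff hLcol hdiag hsimple hprsum hprfix) hprpos
    hprsum (injOn_fst_bohrPairs hω) (injOn_snd_bohrPairs hω) hz
  have hcoh : ∀ t, ‖ρ t x' y'‖ ≤ ∑ p ∈ bohrPairs ω (ω x' - ω y'), ‖ρ t p.1 p.2‖ := fun t =>
    single_le_sum (f := fun p => ‖ρ t p.1 p.2‖) (fun _ _ => norm_nonneg _)
      ((mem_bohrPairs (p := (x', y'))).2 rfl)
  refine squeeze_zero (fun _ => norm_nonneg _) hcoh (tendsto_zero_of_eventually_le_mul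
    (fun t => sum_nonneg fun _ _ => norm_nonneg _) hq0 hq1 ?_)
  filter_upwards [hcontract, eventually_ge_atTop 0] with s hs hs0 t ht
  refine sum_le_mul_sum_of_le_sum_mul (fun _ _ => norm_nonneg _) (fun p' hp' => ?_)
    fun p _ => hs p.1 p.2
  have := hbound s hs0 t ht p'.1 p'.2
  rwa [mem_bohrPairs.1 hp'] at this

/-- **Corollary 4, part 2.** Under ergodic covariant Markovian dynamics (the population
transfer rate matrix `L` is diagonalizable, has `0` as a simple eigenvalue, with a fully
supported stationary probability vector `pr`), every coherence element vanishes in the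
long-time limit: `|ρ_{x'y'}(t)| → 0` as `t → ∞` for all `x' ≠ y'`. -/
theorem coherence_vanishes_ergodic
    (d : ℕ) (hd : 1 ≤ d) (ω : Fin d → ℝ) (hω : Function.Injective ω)
    (L : Matrix (Fin d) (Fin d) ℝ)
    (hLoff : ∀ x' x, x' ≠ x → 0 ≤ L x' x)
    (hLcol : ∀ x, ∑ x', L x' x = 0)
    (hdiag : ∃ (U : Matrix (Fin d) (Fin d) ℂ) (D : Fin d → ℂ),
      IsUnit U.det ∧ L.map Complex.ofReal = U * Matrix.diagonal D * U⁻¹)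
    (hsimple : Polynomial.rootMultiplicity 0 (L.map Complex.ofReal).charpoly = 1)
    (pr : Fin d → ℝ)
    (hprpos : ∀ x, 0 < pr x) (hprsum : ∑ x, pr x = 1)
    (hprfix : L *ᵥ pr = 0)
    (ρ : ℝ → Matrix (Fin d) (Fin d) ℂ)
    (hbound : ∀ s ≥ (0 : ℝ), ∀ t ≥ (0 : ℝ), ∀ x' y' : Fin d,
      ‖ρ (t + s) x' y'‖ ≤
        ∑ p ∈ Finset.univ.filter
            (fun p : Fin d × Fin d => ω p.1 - ω p.2 = ω x' - ω y'),
          Real.sqrt (NormedSpace.exp (s • L) x' p.1 * NormedSpace.exp (s • L) y' p.2) *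
            ‖ρ t p.1 p.2‖) :
    ∀ x' y' : Fin d, x' ≠ y' →
      Filter.Tendsto (fun t => ‖ρ t x' y'‖) Filter.atTop (nhds 0) :=
  coherence_vanishes_ergodic_general d ω hω L hLoff hLcol hdiag hsimple pr hprpos hprsum hprfix ρ
    hbound
end

section
/- Let d ≥ 1, ω : Fin d → ℝ injective, and fix ν ≠ 0 such that the mode M_ν := {(x,y) ∈ Fin d × Fin d : ω_x − ω_y = ν} is nonempty. Let P be a real d×d matrix with all entries strictly positive and each column summing to 1. Then: (i) for every (x,y) ∈ M_ν, B_{xy} := (1/2) Σ_{(x',y') ∈ M_ν} (P_{x'|x} + P_{y'|y}) < 1; and (ii) for any complex d×d matrices ρ, σ satisfying |σ_{x'y'}| ≤ Σ_{(x,y) ∈ M_ν} √(P_{x'|x} P_{y'|y}) |ρ_{xy}| for all (x',y') ∈ M_ν, one has Σ_{(x',y') ∈ M_ν} |σ_{x'y'}| ≤ (max_{(x,y) ∈ M_ν} B_{xy}) · Σ_{(x,y) ∈ M_ν} |ρ_{xy}|, a strict contraction of the mode-coherence Σ_{(x,y) ∈ M_ν}|ρ_{xy}| whenever it is nonzero.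 -/
/-!
Since `ω` is injective, a pair in the mode `M_ν` is determined by either of its coordinates, so
summing a column of `P` over the first (or second) coordinates of `M_ν` sums it over distinct
rows and gives at most `1`. As `ν ≠ 0`, the level minimising `ω` (if `ν > 0`) or maximising it
(if `ν < 0`) is never a first coordinate, and positivity of `P` makes that first sum strictly
less than `1`; hence `B < 1`. For the contraction, bound each `√(P_{x'|x} P_{y'|y})` by the
arithmetic mean and exchange the order of summation: the column sums of the resulting kernel
over `M_ν` are exactly the `B_{xy}`.
-/

open Finset

theorem Real.sqrt_mul_le_half_add {a b : ℝ} (ha : 0 ≤ a) (hb : 0 ≤ b) :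
    √(a * b) ≤ (a + b) / 2 := by
  rw [Real.sqrt_le_iff]
  constructor
  · positivity
  · nlinarith [four_mul_le_sq_add a b]

theorem Finset.sum_le_mul_sum_of_le_sum_mul_s6 {α : Type*} {s : Finset α} {f g : α → ℝ}
    {K : α → α → ℝ} {c : ℝ} (hg : ∀ q ∈ s, 0 ≤ g q)
    (hf : ∀ p ∈ s, f p ≤ ∑ q ∈ s, K p q * g q) (hK : ∀ q ∈ s, ∑ p ∈ s, K p q ≤ c) :
    ∑ p ∈ s, f p ≤ c * ∑ q ∈ s, g q :=
  calc ∑ p ∈ s, f p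
      ≤ ∑ p ∈ s, ∑ q ∈ s, K p q * g q := sum_le_sum hf
    _ = ∑ q ∈ s, (∑ p ∈ s, K p q) * g q := by
        rw [sum_comm]
        simp only [sum_mul]
    _ ≤ ∑ q ∈ s, c * g q :=
        sum_le_sum fun q hq => mul_le_mul_of_nonneg_right (hK q hq) (hg q hq)
    _ = c * ∑ q ∈ s, g q := (mul_sum ..).symm

theorem Finset.sum_comp_le_one_of_injOn {α ι : Type*} [Fintype ι] {s : Finset α} {f : α → ι}
    {w : ι → ℝ} (hf : Set.InjOn f s) (hw : ∀ i, 0 ≤ w i) (hw₁ : ∑ i, w i = 1) :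
    ∑ q ∈ s, w (f q) ≤ 1 := by
  classical
  rw [← sum_image hf, ← hw₁]
  exact sum_le_sum_of_subset_of_nonneg (subset_univ _) fun i _ _ => hw i

theorem Finset.sum_comp_lt_one_of_injOn {α ι : Type*} [Fintype ι] {s : Finset α} {f : α → ι}
    {w : ι → ℝ} (hf : Set.InjOn f s) (hw : ∀ i, 0 ≤ w i) (hw₁ : ∑ i, w i = 1) {z : ι}
    (hz : ∀ q ∈ s, f q ≠ z) (hwz : 0 < w z) :
    ∑ q ∈ s, w (f q) < 1 := by
  classical
  rw [← sum_image hf, ← hw₁]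
  refine sum_lt_sum_of_subset (subset_univ _) (mem_univ z) ?_ hwz fun i _ _ => hw i
  simpa only [mem_image, not_exists, not_and] using hz

noncomputable def mode {ι : Type*} [Fintype ι] (ω : ι → ℝ) (ν : ℝ) : Finset (ι × ι) :=
  univ.filter fun p => ω p.1 - ω p.2 = ν

section

variable {ι : Type*} [Fintype ι] {ω : ι → ℝ} {ν : ℝ}

theorem mem_mode {p : ι × ι} : p ∈ mode ω ν ↔ ω p.1 - ω p.2 = ν := by
  simp [mode]

namespace mode

theorem fst_injOn (hω : Function.Injective ω) : Set.InjOn Prod.fst (mode ω ν : Set (ι × ι)) := by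
  intro p hp q hq h
  have hp' := mem_mode.1 hp
  have hq' := mem_mode.1 hq
  exact Prod.ext h (hω (by rw [h] at hp'; linarith))

theorem snd_injOn (hω : Function.Injective ω) : Set.InjOn Prod.snd (mode ω ν : Set (ι × ι)) := by
  intro p hp q hq h
  have hp' := mem_mode.1 hp
  have hq' := mem_mode.1 hq
  exact Prod.ext (hω (by rw [h] at hp'; linarith)) h

theorem exists_forall_fst_ne [Nonempty ι] (hν : ν ≠ 0) : ∃ z, ∀ p ∈ mode ω ν, p.1 ≠ z := by
  rcases hν.lt_or_gt with hν | hν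
  · obtain ⟨z, hz⟩ := Finite.exists_max ω
    refine ⟨z, fun p hp h => ?_⟩
    have := mem_mode.1 hp
    linarith [hz p.2, h ▸ this]
  · obtain ⟨z, hz⟩ := Finite.exists_min ω
    refine ⟨z, fun p hp h => ?_⟩
    have := mem_mode.1 hp
    linarith [hz p.2, h ▸ this]

end mode

end

theorem mode_coherence_strict_contraction_general
    (d : ℕ) (ω : Fin d → ℝ) (hω : Function.Injective ω)
    (ν : ℝ) (hν : ν ≠ 0)
    (Mν : Finset (Fin d × Fin d))
    (hMν : Mν = Finset.univ.filter (fun p : Fin d × Fin d => ω p.1 - ω p.2 = ν))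
    (hne : Mν.Nonempty)
    (P : Matrix (Fin d) (Fin d) ℝ)
    (hPpos : ∀ x' x, 0 < P x' x)
    (hPcol : ∀ x, ∑ x', P x' x = 1)
    (B : Fin d × Fin d → ℝ)
    (hB : ∀ p, B p = (1 / 2) * ∑ q ∈ Mν, (P q.1 p.1 + P q.2 p.2)) :
    (∀ p ∈ Mν, B p < 1) ∧
    (∀ ρ σ : Matrix (Fin d) (Fin d) ℂ,
      (∀ p ∈ Mν, ‖σ p.1 p.2‖ ≤
        ∑ q ∈ Mν, Real.sqrt (P p.1 q.1 * P p.2 q.2) * ‖ρ q.1 q.2‖) →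
      ∑ p ∈ Mν, ‖σ p.1 p.2‖ ≤
        (Mν.sup' hne B) * ∑ p ∈ Mν, ‖ρ p.1 p.2‖) := by
  change Mν = mode ω ν at hMν
  subst hMν
  have : Nonempty (Fin d) := ⟨hne.choose.1⟩
  obtain ⟨z, hz⟩ := mode.exists_forall_fst_ne (ω := ω) hν
  have hPnonneg : ∀ x' x, 0 ≤ P x' x := fun x' x => (hPpos x' x).le
  refine ⟨fun p _ => ?_, fun ρ σ hσ => ?_⟩
  · have hfst := sum_comp_lt_one_of_injOn (mode.fst_injOn hω) (hPnonneg · p.1) (hPcol p.1) hz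
      (hPpos z p.1)
    have hsnd : ∑ q ∈ mode ω ν, P q.2 p.2 ≤ 1 :=
      sum_comp_le_one_of_injOn (mode.snd_injOn hω) (hPnonneg · p.2) (hPcol p.2)
    rw [hB, sum_add_distrib]
    linarith
  · refine sum_le_mul_sum_of_le_sum_mul_s6 (fun _ _ => norm_nonneg _) hσ fun q hq => ?_
    calc ∑ p ∈ mode ω ν, √(P p.1 q.1 * P p.2 q.2)
        ≤ ∑ p ∈ mode ω ν, (P p.1 q.1 + P p.2 q.2) / 2 :=
          sum_le_sum fun p _ => Real.sqrt_mul_le_half_add (hPnonneg _ _) (hPnonneg _ _)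
      _ = B q := by rw [hB, ← sum_div]; ring
      _ ≤ (mode ω ν).sup' hne B := le_sup' B hq

/-- **Strict contraction of mode coherence under strictly positive population transfer.**
For a nonzero mode `M_ν` and a column-stochastic matrix `P` with strictly positive entries,
the factors `B_{xy} = (1/2) Σ_{(x',y') ∈ M_ν} (P_{x'|x} + P_{y'|y})` are strictly below `1`,
and any pair `(ρ, σ)` obeying the covariant decoherence bound entrywise on the mode
satisfies `Σ_{M_ν} |σ| ≤ (max B) Σ_{M_ν} |ρ|`, a strict contraction. -/
theorem mode_coherence_strict_contraction
    (d : ℕ) (hd : 1 ≤ d) (ω : Fin d → ℝ) (hω : Function.Injective ω)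
    (ν : ℝ) (hν : ν ≠ 0)
    (Mν : Finset (Fin d × Fin d))
    (hMν : Mν = Finset.univ.filter (fun p : Fin d × Fin d => ω p.1 - ω p.2 = ν))
    (hne : Mν.Nonempty)
    (P : Matrix (Fin d) (Fin d) ℝ)
    (hPpos : ∀ x' x, 0 < P x' x)
    (hPcol : ∀ x, ∑ x', P x' x = 1)
    (B : Fin d × Fin d → ℝ)
    (hB : ∀ p, B p = (1 / 2) * ∑ q ∈ Mν, (P q.1 p.1 + P q.2 p.2)) :
    (∀ p ∈ Mν, B p < 1) ∧
    (∀ ρ σ : Matrix (Fin d) (Fin d) ℂ,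
      (∀ p ∈ Mν, ‖σ p.1 p.2‖ ≤
        ∑ q ∈ Mν, Real.sqrt (P p.1 q.1 * P p.2 q.2) * ‖ρ q.1 q.2‖) →
      ∑ p ∈ Mν, ‖σ p.1 p.2‖ ≤
        (Mν.sup' hne B) * ∑ p ∈ Mν, ‖ρ p.1 p.2‖) :=
  mode_coherence_strict_contraction_general d ω hω ν hν Mν hMν hne P hPpos hPcol B hB
end

section
/- Let T₁, T₂ > 0 and π ∈ [0,1]. Define P_{0|0}(t) := π + (1−π)e^{−t/T₁} and P_{1|1}(t) := (1−π) + π·e^{−t/T₁}. Then the inequality e^{−2t/T₂} ≤ P_{0|0}(t)·P_{1|1}(t) holds for all t ≥ 0 if and only if T₂ ≤ 2T₁. (Elementary qubit example: complete positivity of the Bloch relaxation–dephasing dynamics is equivalent to T₂ ≤ 2T₁.) -/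
/-- Quadratic upper bound on `exp (-s)` for `s ≥ 0`. -/
lemma exp_neg_le_quadratic {s : ℝ} (hs : 0 ≤ s) :
    Real.exp (-s) ≤ 1 - s + s ^ 2 := by
  have h1 : s + 1 ≤ Real.exp s := Real.add_one_le_exp s
  have h2 : Real.exp (-s) * Real.exp s = 1 := by
    rw [← Real.exp_add]; simp
  have h3 : 0 < Real.exp (-s) := Real.exp_pos _
  nlinarith [sq_nonneg s, sq_nonneg (1 - s), mul_pos h3 (Real.exp_pos s)]

/-- **Elementary qubit example: `T₂ ≤ 2T₁`.** For the Bloch relaxation–dephasing dynamics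
with relaxation time `T₁`, decoherence time `T₂` and stationary ground-state population `π`,
complete positivity, i.e. `e^{−2t/T₂} ≤ P_{0|0}(t)·P_{1|1}(t)` for all `t ≥ 0`, holds
if and only if `T₂ ≤ 2T₁`. -/
theorem qubit_T2_le_two_T1
    (T₁ T₂ : ℝ) (hT₁ : 0 < T₁) (hT₂ : 0 < T₂)
    (π : ℝ) (hπ : π ∈ Set.Icc (0 : ℝ) 1) :
    (∀ t ≥ (0 : ℝ), Real.exp (-2 * t / T₂) ≤
      (π + (1 - π) * Real.exp (-t / T₁)) * ((1 - π) + π * Real.exp (-t / T₁)))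
    ↔ T₂ ≤ 2 * T₁ := by
  obtain ⟨hπ0, hπ1⟩ := hπ
  constructor
  · -- forward: CP for all t implies T₂ ≤ 2T₁
    intro H
    by_contra hcon
    push_neg at hcon  -- 2T₁ < T₂
    set δ : ℝ := 1 / T₁ - 2 / T₂ with hδdef
    have hδ : 0 < δ := by
      have : 2 / T₂ < 2 / (2 * T₁) := by
        apply div_lt_div_of_pos_left (by norm_num) (by linarith) hcon
      have h2 : 2 / (2 * T₁) = 1 / T₁ := by field_simp
      simp only [hδdef]; linarith [h2 ▸ this]
    set t : ℝ := T₁ ^ 2 * δ / 2 with htdef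
    have ht : 0 < t := by positivity
    have Hspec := H t ht.le
    set s : ℝ := t / T₁ with hsdef
    have hs : 0 < s := by positivity
    set x : ℝ := Real.exp (-t / T₁) with hxdef
    have hxeq : x = Real.exp (-s) := by rw [hxdef, hsdef, neg_div]
    have hx1 : 1 - s ≤ x := by
      rw [hxeq]; linarith [Real.add_one_le_exp (-s)]
    have hx2 : x ≤ 1 - s + s ^ 2 := by rw [hxeq]; exact exp_neg_le_quadratic hs.le
    have hL : 1 - 2 * t / T₂ ≤ Real.exp (-2 * t / T₂) := by
      have := Real.add_one_le_exp (-2 * t / T₂)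
      have hne : -2 * t / T₂ = -(2 * t / T₂) := by ring
      linarith [hne ▸ this]
    -- the product is at most x + (1-x)²/4 ≤ (1 - s + s²) + s²/4
    have hprod : (π + (1 - π) * x) * ((1 - π) + π * x) ≤ 1 - s + 5 / 4 * s ^ 2 := by
      have hxpos : 0 < x := by rw [hxdef]; exact Real.exp_pos _
      have hx1' : 1 - x ≤ s := by linarith
      have hx0 : 1 - x ≥ 0 := by
        rw [hxeq]
        have := Real.exp_le_exp.2 (neg_nonpos_of_nonneg hs.le)
        simpa using this
      nlinarith [sq_nonneg (1 - 2 * π), sq_nonneg (1 - x), sq_nonneg s,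
        mul_nonneg (mul_nonneg hπ0 (by linarith : (0:ℝ) ≤ 1 - π)) (sq_nonneg (1 - x))]
    -- strict comparison: 1 - 2t/T₂ > 1 - s + 5/4 s² since t < 4T₁²δ/5
    have hst : s = t / T₁ := hsdef
    have hkey : 1 - s + 5 / 4 * s ^ 2 < 1 - 2 * t / T₂ := by
      have h1 : s - 2 * t / T₂ = t * δ := by
        rw [hst, hδdef]; field_simp
      have h2 : s ^ 2 = t ^ 2 / T₁ ^ 2 := by rw [hst]; field_simp
      have h3 : t * δ - 5 / 4 * (t ^ 2 / T₁ ^ 2) > 0 := by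
        rw [htdef]
        have hT₁2 : (0:ℝ) < T₁ ^ 2 := by positivity
        field_simp
        nlinarith [mul_pos (mul_pos hT₁2 hδ) (mul_pos hT₁2 hδ)]
      linarith [h1, h2 ▸ h3]
    linarith
  · -- backward: T₂ ≤ 2T₁ implies CP
    intro hT t ht
    set x : ℝ := Real.exp (-t / T₁) with hxdef
    have hxpos : 0 < x := Real.exp_pos _
    have h1 : Real.exp (-2 * t / T₂) ≤ x := by
      rw [hxdef]
      apply Real.exp_le_exp.2
      rw [div_le_div_iff₀ hT₂ hT₁]
      nlinarith
    have h2 : x ≤ (π + (1 - π) * x) * ((1 - π) + π * x) := by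
      nlinarith [mul_nonneg (mul_nonneg hπ0 (by linarith : (0:ℝ) ≤ 1 - π)) (sq_nonneg (1 - x))]
    linarith
end

section
/- Let π ∈ (0,1) and g := π/(1−π). Let P be a real 2×2 matrix with nonnegative entries, columns summing to 1, and fixed point (π, 1−π)ᵀ, i.e., P_{0|0}π + P_{0|1}(1−π) = π. Given p ∈ [0,1], set p' := P_{0|0}·p + P_{0|1}(1−p), q := (1−p)·g, and q' := (1−p')·g. Then (p'−q)(p−q') = P_{0|0}·P_{1|1}·(p−q)². Consequently, if p ≠ π, then √(P_{0|0}P_{1|1}) = √((p'−q)(p−q'))/|p−q|, so the covariant qubit coherence bound |σ₀₁| ≤ √(P_{0|0}P_{1|1})|ρ₀₁| takes the generalised-thermal-operations form |σ₀₁| ≤ [√((p'−q)(p−q'))/|p−q|]·|ρ₀₁|. -/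
/-!
The fixed-point condition and the column sums give `P₀₁ = (1 - P₀₀) g` and `P₁₁ = 1 - P₀₁`, which
say exactly that `p' - q = P₀₀ (p - q)` and `p - q' = P₁₁ (p - q)`. Multiplying gives the identity;
since `p - q = (p - π)/(1 - π)` is nonzero away from the fixed point, one may divide by `|p - q|`.
-/

section GibbsRatio

variable {π p : ℝ}

lemma sub_one_sub_mul_gibbsRatio (hπ : π ≠ 1) :
    p - (1 - p) * (π / (1 - π)) = (p - π) / (1 - π) := by
  have h : 1 - π ≠ 0 := sub_ne_zero.2 hπ.symm
  field_simp
  ring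

variable {P : Matrix (Fin 2) (Fin 2) ℝ}

lemma transfer_offDiag_eq_of_fixed (hπ : π ≠ 1) (hfix : P 0 0 * π + P 0 1 * (1 - π) = π) :
    P 0 1 = (1 - P 0 0) * (π / (1 - π)) := by
  have h : 1 - π ≠ 0 := sub_ne_zero.2 hπ.symm
  field_simp
  linarith

variable {g : ℝ} (hP01 : P 0 1 = (1 - P 0 0) * g)
include hP01

lemma transfer_sub_one_sub_mul_eq :
    P 0 0 * p + P 0 1 * (1 - p) - (1 - p) * g = P 0 0 * (p - (1 - p) * g) := by
  rw [hP01]; ring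

lemma sub_one_sub_transfer_mul_eq (hcol : P 0 1 + P 1 1 = 1) :
    p - (1 - (P 0 0 * p + P 0 1 * (1 - p))) * g = P 1 1 * (p - (1 - p) * g) := by
  rw [eq_sub_of_add_eq' hcol, hP01]; ring

end GibbsRatio

lemma Real.sqrt_eq_sqrt_mul_sq_div_abs {a d : ℝ} (ha : 0 ≤ a) (hd : d ≠ 0) :
    √a = √(a * d ^ 2) / |d| := by
  rw [Real.sqrt_mul ha, Real.sqrt_sq_eq_abs, mul_div_cancel_right₀ _ (abs_ne_zero.2 hd)]

theorem qubit_gto_coherence_bound_form_general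
    (π : ℝ) (hπ : π ∈ Set.Ioo (0 : ℝ) 1)
    (g : ℝ) (hg : g = π / (1 - π))
    (P : Matrix (Fin 2) (Fin 2) ℝ)
    (hPnn : ∀ i j, 0 ≤ P i j)
    (hPcol : ∀ j, ∑ i, P i j = 1)
    (hfix : P 0 0 * π + P 0 1 * (1 - π) = π)
    (p : ℝ)
    (p' q q' : ℝ)
    (hp' : p' = P 0 0 * p + P 0 1 * (1 - p))
    (hq : q = (1 - p) * g)
    (hq' : q' = (1 - p') * g) :
    (p' - q) * (p - q') = P 0 0 * P 1 1 * (p - q) ^ 2 ∧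
    (p ≠ π →
      Real.sqrt (P 0 0 * P 1 1) = Real.sqrt ((p' - q) * (p - q')) / |p - q| ∧
      ∀ ρ01 σ01 : ℂ,
        ‖σ01‖ ≤ Real.sqrt (P 0 0 * P 1 1) * ‖ρ01‖ →
        ‖σ01‖ ≤ (Real.sqrt ((p' - q) * (p - q')) / |p - q|) * ‖ρ01‖) := by
  have hπ1 : π ≠ 1 := hπ.2.ne
  have hcol : P 0 1 + P 1 1 = 1 := by simpa [Fin.sum_univ_two] using hPcol 1
  have hP01 : P 0 1 = (1 - P 0 0) * g := hg ▸ transfer_offDiag_eq_of_fixed hπ1 hfix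
  have hid : (p' - q) * (p - q') = P 0 0 * P 1 1 * (p - q) ^ 2 := by
    rw [hq', hp', hq, transfer_sub_one_sub_mul_eq hP01, sub_one_sub_transfer_mul_eq hP01 hcol]
    ring
  refine ⟨hid, fun hne => ?_⟩
  have hpq : p - q ≠ 0 := by
    rw [hq, hg, sub_one_sub_mul_gibbsRatio hπ1]
    exact div_ne_zero (sub_ne_zero.2 hne) (sub_ne_zero.2 hπ1.symm)
  have heq : √(P 0 0 * P 1 1) = √((p' - q) * (p - q')) / |p - q| := by
    rw [hid]
    exact Real.sqrt_eq_sqrt_mul_sq_div_abs (mul_nonneg (hPnn 0 0) (hPnn 1 1)) hpq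
  exact ⟨heq, fun _ _ h => heq ▸ h⟩

/-- **Qubit generalised-thermal-operations form of the coherence bound.** For a qubit
column-stochastic population transfer matrix `P` with thermal fixed point `(π, 1−π)`
(Gibbs ratio `g = π/(1−π)`), the identity `(p'−q)(p−q') = P_{0|0}P_{1|1}(p−q)²` holds,
where `p' = P_{0|0}p + P_{0|1}(1−p)`, `q = (1−p)g` and `q' = (1−p')g`. Consequently, for
`p ≠ π`, `√(P_{0|0}P_{1|1}) = √((p'−q)(p−q'))/|p−q|` and the covariant qubit coherence
bound `|σ₀₁| ≤ √(P_{0|0}P_{1|1})|ρ₀₁|` takes the generalised-thermal-operations form. -/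
theorem qubit_gto_coherence_bound_form
    (π : ℝ) (hπ : π ∈ Set.Ioo (0 : ℝ) 1)
    (g : ℝ) (hg : g = π / (1 - π))
    (P : Matrix (Fin 2) (Fin 2) ℝ)
    (hPnn : ∀ i j, 0 ≤ P i j)
    (hPcol : ∀ j, ∑ i, P i j = 1)
    (hfix : P 0 0 * π + P 0 1 * (1 - π) = π)
    (p : ℝ) (hp : p ∈ Set.Icc (0 : ℝ) 1)
    (p' q q' : ℝ)
    (hp' : p' = P 0 0 * p + P 0 1 * (1 - p))
    (hq : q = (1 - p) * g)
    (hq' : q' = (1 - p') * g) :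
    (p' - q) * (p - q') = P 0 0 * P 1 1 * (p - q) ^ 2 ∧
    (p ≠ π →
      Real.sqrt (P 0 0 * P 1 1) = Real.sqrt ((p' - q) * (p - q')) / |p - q| ∧
      ∀ ρ01 σ01 : ℂ,
        ‖σ01‖ ≤ Real.sqrt (P 0 0 * P 1 1) * ‖ρ01‖ →
        ‖σ01‖ ≤ (Real.sqrt ((p' - q) * (p - q')) / |p - q|) * ‖ρ01‖) :=
  qubit_gto_coherence_bound_form_general π hπ g hg P hPnn hPcol hfix p p' q q' hp' hq hq'
end

section
/- Let L be a real 3×3 matrix with L_{x'|x} ≥ 0 for x' ≠ x and Σ_{x'} L_{x'|x} = 0 for every column x. Set γ₁₀ := (|L_{0|0}| + |L_{1|1}|)/2 and γ₂₁ := (|L_{1|1}| + |L_{2|2}|)/2. Let c₁, c₂ : ℝ → ℝ be differentiable functions satisfying c₁'(t) = −γ₁₀·c₁(t) + √(L_{0|1}L_{1|2})·c₂(t) and c₂'(t) = √(L_{1|0}L_{2|1})·c₁(t) − γ₂₁·c₂(t), with c₁(0) ≥ 0 and c₂(0) = 0. Then c₂(t) ≤ c₁(0)/√2 for all t ≥ 0.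 (Optimal Markovian coherence transfer for a qutrit with equidistant spectrum cannot exceed the fraction 1/√2.) -/
open Matrix

/-!
Writing `c = (γ₁₀ + γ₂₁)/2` and `e = (γ₁₀ - γ₂₁)/2`, the rates `a = √(L_{0|1}L_{1|2})` and
`b = √(L_{1|0}L_{2|1})` satisfy `ab ≤ γ₁₀γ₂₁`, so the eigenvalues of `Q` are the reals `-c ± d`
with `d = √(e² + ab) ≤ c`. Projecting on the left eigenvectors `(b, e ± d)` gives
`c₂(t) = b c₁(0) e^{-ct} sinh(dt)/d` (read `t` for `sinh(dt)/d` when `d = 0`). Since `sinh` is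
convex on `[0, ∞)`, `sinh(dt)/d ≤ sinh(ct)/c`, and `2 e^{-ct} sinh(ct) ≤ 1`; hence
`c₂(t) ≤ b c₁(0)/(2c)`. Finally `√2 b ≤ 2c` because `L_{2|1}` contributes to both decay rates.
-/

open Real Set

theorem convexOn_sinh : ConvexOn ℝ (Ici 0) sinh := by
  refine MonotoneOn.convexOn_of_deriv (convex_Ici 0) continuous_sinh.continuousOn
    differentiable_sinh.differentiableOn ?_
  rw [Real.deriv_sinh, interior_Ici]
  intro x hx y hy hxy
  exact cosh_le_cosh.2 (by rwa [abs_of_pos hx, abs_of_pos hy])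

theorem mul_sinh_mul_le_mul_sinh_mul {c d t : ℝ} (hd : 0 ≤ d) (hdc : d ≤ c) (ht : 0 ≤ t) :
    c * sinh (d * t) ≤ d * sinh (c * t) := by
  rcases hd.eq_or_lt with rfl | hd
  · simp
  have hc : 0 < c := hd.trans_le hdc
  have hconv := convexOn_sinh.2 (mem_Ici.2 le_rfl) (mem_Ici.2 (mul_nonneg hc.le ht))
    (sub_nonneg.2 ((div_le_one hc).2 hdc)) (div_nonneg hd.le hc.le) (sub_add_cancel 1 (d / c))
  simp only [smul_eq_mul, mul_zero, sinh_zero, zero_add] at hconv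
  rw [show d / c * (c * t) = d * t by field_simp] at hconv
  rwa [div_mul_eq_mul_div, le_div_iff₀' hc] at hconv

theorem two_mul_exp_neg_mul_sinh_le_one (x : ℝ) : 2 * (exp (-x) * sinh x) ≤ 1 := by
  have h : exp (-x) * exp x = 1 := by rw [← exp_add, neg_add_cancel, exp_zero]
  rw [sinh_eq]
  nlinarith [exp_pos (-x)]

theorem eq_add_mul_mul_exp_of_hasDerivAt {f : ℝ → ℝ} {k m : ℝ}
    (hf : ∀ t, HasDerivAt f (k * f t + m * exp (k * t)) t) (t : ℝ) :
    f t = (f 0 + m * t) * exp (k * t) := by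
  have hinv : ∀ s, exp (-k * s) * exp (k * s) = 1 := fun s => by
    rw [← exp_add, neg_mul, neg_add_cancel, exp_zero]
  have hg : ∀ s, HasDerivAt (fun s => exp (-k * s) * f s - m * s) 0 s := fun s =>
    ((((hasDerivAt_id' s).const_mul (-k)).exp.mul (hf s)).sub
      ((hasDerivAt_id' s).const_mul m)).congr_deriv (by linear_combination m * hinv s)
  have hconst := is_const_of_deriv_eq_zero (fun s => (hg s).differentiableAt)
    (fun s => (hg s).deriv) t 0
  simp only [mul_zero, exp_zero, one_mul, sub_zero] at hconst
  linear_combination exp (k * t) * hconst - f t * hinv t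

namespace CoherenceTransfer

variable {α β a b : ℝ} {c₁ c₂ : ℝ → ℝ}

theorem left_eigenmode_eq (hc₁ : ∀ t, HasDerivAt c₁ (-α * c₁ t + a * c₂ t) t)
    (hc₂ : ∀ t, HasDerivAt c₂ (b * c₁ t - β * c₂ t) t) (hc₂0 : c₂ 0 = 0)
    {μ : ℝ} (hμ : (μ + α) * (μ + β) = a * b) (t : ℝ) :
    b * c₁ t + (μ + α) * c₂ t = b * c₁ 0 * exp (μ * t) := by
  have h := eq_add_mul_mul_exp_of_hasDerivAt (f := fun t => b * c₁ t + (μ + α) * c₂ t)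
    (k := μ) (m := 0) (fun t => (((hc₁ t).const_mul b).add ((hc₂ t).const_mul (μ + α))).congr_deriv
      (by linear_combination (-c₂ t) * hμ)) t
  simpa [hc₂0] using h

theorem c₂_eq_of_double_eigenvalue (hc₁ : ∀ t, HasDerivAt c₁ (-α * c₁ t + a * c₂ t) t)
    (hc₂ : ∀ t, HasDerivAt c₂ (b * c₁ t - β * c₂ t) t) (hc₂0 : c₂ 0 = 0)
    (hdisc : (α - β) ^ 2 + 4 * (a * b) = 0) (t : ℝ) :
    c₂ t = b * c₁ 0 * t * exp (-((α + β) / 2) * t) := by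
  set μ := -((α + β) / 2)
  have hμ : (μ + α) * (μ + β) = a * b := by linear_combination (-1 / 4 : ℝ) * hdisc
  have h := eq_add_mul_mul_exp_of_hasDerivAt (f := c₂) (k := μ) (m := b * c₁ 0) (fun s =>
    (hc₂ s).congr_deriv (by linear_combination left_eigenmode_eq hc₁ hc₂ hc₂0 hμ s)) t
  rw [h, hc₂0, zero_add]

theorem c₂_le_mul_c₁_zero {κ : ℝ}
    (hc₁ : ∀ t, HasDerivAt c₁ (-α * c₁ t + a * c₂ t) t)
    (hc₂ : ∀ t, HasDerivAt c₂ (b * c₁ t - β * c₂ t) t) (hc₂0 : c₂ 0 = 0)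
    (hab : 0 ≤ a * b) (hb : 0 ≤ b) (habαβ : a * b ≤ α * β) (hαβ : 0 ≤ α + β)
    (hκ : 0 ≤ κ) (hbκ : b ≤ κ * (α + β)) (hc₁0 : 0 ≤ c₁ 0) {t : ℝ} (ht : 0 ≤ t) :
    c₂ t ≤ κ * c₁ 0 := by
  have hbc : b ≤ 2 * κ * ((α + β) / 2) := by linarith
  set c := (α + β) / 2 with hc_def
  set e := (α - β) / 2
  set d := √(e ^ 2 + a * b)
  have hc : 0 ≤ c := by positivity
  have hd : 0 ≤ d := sqrt_nonneg _
  have hd2 : d ^ 2 = e ^ 2 + a * b := sq_sqrt (by positivity)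
  have hdc : d ≤ c := (sqrt_le_left hc).2 (by linear_combination habαβ)
  have hct : 0 ≤ c * t := mul_nonneg hc ht
  suffices h : c₂ t ≤ 2 * κ * c₁ 0 * (exp (-(c * t)) * sinh (c * t)) by
    nlinarith [two_mul_exp_neg_mul_sinh_le_one (c * t), mul_nonneg hκ hc₁0]
  rcases hd.eq_or_lt with hd0 | hd0
  · have hdisc : (α - β) ^ 2 + 4 * (a * b) = 0 := by
      linear_combination 4 * hd2.symm + 4 * (by rw [← hd0]; ring : d ^ 2 = 0)
    have hsol := c₂_eq_of_double_eigenvalue hc₁ hc₂ hc₂0 hdisc t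
    rw [← hc_def, neg_mul] at hsol
    have hbt : b * t ≤ 2 * κ * sinh (c * t) := calc
      b * t ≤ 2 * κ * c * t := mul_le_mul_of_nonneg_right hbc ht
      _ ≤ 2 * κ * sinh (c * t) := by
        rw [mul_assoc _ c]
        exact mul_le_mul_of_nonneg_left (self_le_sinh_iff.2 hct) (by positivity)
    calc c₂ t = b * t * (c₁ 0 * exp (-(c * t))) := by rw [hsol]; ring
      _ ≤ 2 * κ * sinh (c * t) * (c₁ 0 * exp (-(c * t))) :=
        mul_le_mul_of_nonneg_right hbt (by positivity)
      _ = _ := by ring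
  · have hc0 : 0 < c := hd0.trans_le hdc
    have hplus := left_eigenmode_eq hc₁ hc₂ hc₂0 (μ := -c + d) (by linear_combination hd2) t
    have hminus := left_eigenmode_eq hc₁ hc₂ hc₂0 (μ := -c + -d) (by linear_combination hd2) t
    have hsplit : ∀ x, exp ((-c + x) * t) = exp (-(c * t)) * exp (x * t) := fun x => by
      rw [← exp_add]; ring_nf
    have hsol : d * c₂ t = c₁ 0 * exp (-(c * t)) * (b * sinh (d * t)) := by
      rw [hsplit, neg_mul] at hminus
      rw [hsplit] at hplus
      rw [sinh_eq]
      linear_combination (hplus - hminus) / 2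
    have hsinh : b * sinh (d * t) ≤ 2 * κ * d * sinh (c * t) := by
      refine le_of_mul_le_mul_left ?_ hc0
      calc c * (b * sinh (d * t)) = b * (c * sinh (d * t)) := by ring
        _ ≤ b * (d * sinh (c * t)) :=
          mul_le_mul_of_nonneg_left (mul_sinh_mul_le_mul_sinh_mul hd hdc ht) hb
        _ ≤ 2 * κ * c * (d * sinh (c * t)) :=
          mul_le_mul_of_nonneg_right hbc (mul_nonneg hd (sinh_nonneg_iff.2 hct))
        _ = c * (2 * κ * d * sinh (c * t)) := by ring
    refine le_of_mul_le_mul_left ?_ hd0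
    calc d * c₂ t = c₁ 0 * exp (-(c * t)) * (b * sinh (d * t)) := hsol
      _ ≤ c₁ 0 * exp (-(c * t)) * (2 * κ * d * sinh (c * t)) :=
        mul_le_mul_of_nonneg_left hsinh (by positivity)
      _ = _ := by ring

end CoherenceTransfer

theorem Matrix.diag_nonpos_of_sum_col_eq_zero {n : Type*} [Fintype n] [DecidableEq n]
    {L : Matrix n n ℝ} (hLoff : ∀ x' x, x' ≠ x → 0 ≤ L x' x) (hLcol : ∀ x, ∑ x', L x' x = 0)
    (x : n) : L x x ≤ 0 := by
  have hsplit := Finset.add_sum_erase Finset.univ (fun x' => L x' x) (Finset.mem_univ x)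
  have hoff : 0 ≤ ∑ x' ∈ Finset.univ.erase x, L x' x :=
    Finset.sum_nonneg fun x' hx' => hLoff x' x (Finset.ne_of_mem_erase hx')
  rw [hLcol] at hsplit
  linarith

/-- **Optimal Markovian coherence transfer for a qutrit is bounded by `1/√2`.** For any
population transfer rate matrix `L` (3×3, nonnegative off-diagonal entries, zero column
sums), the solution of the optimal covariant Markovian coherence-transfer system
`c₁' = −γ₁₀ c₁ + √(L_{0|1}L_{1|2}) c₂`, `c₂' = √(L_{1|0}L_{2|1}) c₁ − γ₂₁ c₂` with
`c₁(0) ≥ 0` and `c₂(0) = 0` satisfies `c₂(t) ≤ c₁(0)/√2` for all `t ≥ 0`. -/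
theorem qutrit_coherence_transfer_bound
    (L : Matrix (Fin 3) (Fin 3) ℝ)
    (hLoff : ∀ x' x, x' ≠ x → 0 ≤ L x' x)
    (hLcol : ∀ x, ∑ x', L x' x = 0)
    (γ₁₀ γ₂₁ : ℝ)
    (hγ₁₀ : γ₁₀ = (|L 0 0| + |L 1 1|) / 2)
    (hγ₂₁ : γ₂₁ = (|L 1 1| + |L 2 2|) / 2)
    (c₁ c₂ : ℝ → ℝ)
    (hc₁ : ∀ t, HasDerivAt c₁ (-γ₁₀ * c₁ t + Real.sqrt (L 0 1 * L 1 2) * c₂ t) t)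
    (hc₂ : ∀ t, HasDerivAt c₂ (Real.sqrt (L 1 0 * L 2 1) * c₁ t - γ₂₁ * c₂ t) t)
    (hc₁0 : 0 ≤ c₁ 0)
    (hc₂0 : c₂ 0 = 0) :
    ∀ t ≥ (0 : ℝ), c₂ t ≤ c₁ 0 / Real.sqrt 2 := by
  intro t ht
  have hdiag := diag_nonpos_of_sum_col_eq_zero hLoff hLcol
  rw [abs_of_nonpos (hdiag 0), abs_of_nonpos (hdiag 1)] at hγ₁₀
  rw [abs_of_nonpos (hdiag 1), abs_of_nonpos (hdiag 2)] at hγ₂₁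
  have hcol : ∀ x, L 0 x + L 1 x + L 2 x = 0 := fun x => by
    simpa only [Fin.sum_univ_three] using hLcol x
  have h01 := hLoff 0 1 (by decide); have h02 := hLoff 0 2 (by decide)
  have h10 := hLoff 1 0 (by decide); have h12 := hLoff 1 2 (by decide)
  have h20 := hLoff 2 0 (by decide); have h21 := hLoff 2 1 (by decide)
  have ha : √(L 0 1 * L 1 2) ≤ γ₂₁ := (sqrt_le_left (by linarith [hcol 1, hcol 2])).2
    (by nlinarith [hcol 1, hcol 2, sq_nonneg (L 0 1 - L 1 2)])
  have hb : √(L 1 0 * L 2 1) ≤ γ₁₀ := (sqrt_le_left (by linarith [hcol 0, hcol 1])).2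
    (by nlinarith [hcol 0, hcol 1, sq_nonneg (L 1 0 - L 2 1)])
  -- `γ₁₀ + γ₂₁ ≥ L_{1|0}/2 + L_{2|1}`, and `2 L_{1|0} L_{2|1} ≤ (L_{1|0}/2 + L_{2|1})²`
  have hb2 : √(L 1 0 * L 2 1) ≤ 1 / √2 * (γ₁₀ + γ₂₁) := by
    rw [one_div_mul_eq_div, le_div_iff₀ (by positivity), ← sqrt_mul (mul_nonneg h10 h21)]
    exact (sqrt_le_left (by linarith [hcol 0, hcol 1, hcol 2])).2
      (by nlinarith [hcol 0, hcol 1, hcol 2, sq_nonneg (L 1 0 - 2 * L 2 1)])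
  have hbound := CoherenceTransfer.c₂_le_mul_c₁_zero hc₁ hc₂ hc₂0 (by positivity)
    (sqrt_nonneg _) ((mul_le_mul ha hb (sqrt_nonneg _) (by linarith [hcol 1, hcol 2])).trans_eq
      (mul_comm _ _)) (by linarith [hcol 0, hcol 1, hcol 2]) (by positivity) hb2 hc₁0 ht
  rwa [one_div_mul_eq_div] at hbound
end

section
/- Let d ≥ 1, ω : Fin d → ℝ, β ∈ ℝ, and let L be a real d×d matrix with L_{x'|x} ≥ 0 for x' ≠ x and Σ_{x'} L_{x'|x} = 0 for every column x, satisfying Σ_y L_{x'|y}·e^{−βω_y} = 0 for every x' (i.e., the Gibbs vector π_x = e^{−βω_x} is stationary). Then: (i) for all x' ≠ x, L_{x'|x} ≤ |L_{x'|x'}|·e^{−β(ω_{x'} − ω_x)}; and (ii) for all x, x', y, y' with x' ≠ x, y' ≠ y and ω_{x'} − ω_x = ω_{y'} − ω_y, the transport rate satisfies √(L_{x'|x}·L_{y'|y}) ≤ γ_{x'y'}·e^{−β(ω_{x'} − ω_x)}, where γ_{x'y'} := (|L_{x'|x'}| + |L_{y'|y'}|)/2. (Thermal bound on coherence transport rates.)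 -/
open Matrix

/-- **Thermal bound on coherence transport rates.** If the Gibbs vector
`π_x = e^{−βω_x}` is stationary for the population transfer rate matrix `L`, then
(i) `L_{x'|x} ≤ |L_{x'|x'}| e^{−β(ω_{x'}−ω_x)}` for `x' ≠ x`, and (ii) for mode-matched
indices the transport rates satisfy
`√(L_{x'|x}L_{y'|y}) ≤ γ_{x'y'} e^{−β(ω_{x'}−ω_x)}`. -/
theorem thermal_transport_rate_bound
    (d : ℕ) (hd : 1 ≤ d) (ω : Fin d → ℝ) (β : ℝ)
    (L : Matrix (Fin d) (Fin d) ℝ)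
    (hLoff : ∀ x' x, x' ≠ x → 0 ≤ L x' x)
    (hLcol : ∀ x, ∑ x', L x' x = 0)
    (hGibbs : ∀ x', ∑ y, L x' y * Real.exp (-β * ω y) = 0)
    (γ : Fin d → Fin d → ℝ)
    (hγ : ∀ x' y', γ x' y' = (|L x' x'| + |L y' y'|) / 2) :
    (∀ x' x : Fin d, x' ≠ x →
      L x' x ≤ |L x' x'| * Real.exp (-β * (ω x' - ω x))) ∧
    (∀ x x' y y' : Fin d, x' ≠ x → y' ≠ y → ω x' - ω x = ω y' - ω y →
      Real.sqrt (L x' x * L y' y) ≤ γ x' y' * Real.exp (-β * (ω x' - ω x))) := by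
  have key : ∀ x' x : Fin d, x' ≠ x →
      L x' x * Real.exp (-β * ω x) ≤ -L x' x' * Real.exp (-β * ω x') := by
    intro x' x hne
    have h := hGibbs x'
    rw [← Finset.add_sum_erase _ _ (Finset.mem_univ x')] at h
    have h2 : L x' x * Real.exp (-β * ω x)
        ≤ ∑ y ∈ Finset.univ.erase x', L x' y * Real.exp (-β * ω y) := by
      apply Finset.single_le_sum (f := fun y => L x' y * Real.exp (-β * ω y))
      · intro i hi
        exact mul_nonneg (hLoff x' i (Finset.ne_of_mem_erase hi).symm) (Real.exp_pos _).le
      · exact Finset.mem_erase.2 ⟨hne.symm, Finset.mem_univ x⟩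
    linarith
  have part1 : ∀ x' x : Fin d, x' ≠ x →
      L x' x ≤ |L x' x'| * Real.exp (-β * (ω x' - ω x)) := by
    intro x' x hne
    have hk := key x' x hne
    have hx : (0:ℝ) < Real.exp (-β * ω x) := Real.exp_pos _
    have hx' : (0:ℝ) < Real.exp (-β * ω x') := Real.exp_pos _
    have hnn : 0 ≤ L x' x * Real.exp (-β * ω x) :=
      mul_nonneg (hLoff x' x hne) hx.le
    have hdiag : L x' x' ≤ 0 := by nlinarith
    have habs : |L x' x'| = -L x' x' := abs_of_nonpos hdiag
    have hEdiv : Real.exp (-β * (ω x' - ω x)) = Real.exp (-β * ω x') / Real.exp (-β * ω x) := by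
      rw [← Real.exp_sub]; ring_nf
    rw [habs, hEdiv, ← mul_div_assoc, le_div_iff₀ hx]
    exact hk
  refine ⟨part1, ?_⟩
  intro x x' y y' hx hy hω
  have hA := part1 x' x hx
  have hB := part1 y' y hy
  rw [← hω] at hB
  set E := Real.exp (-β * (ω x' - ω x)) with hE
  have hEpos : 0 < E := Real.exp_pos _
  have ha : 0 ≤ L x' x := hLoff x' x hx
  have hb : 0 ≤ L y' y := hLoff y' y hy
  have hAnn : 0 ≤ |L x' x'| := abs_nonneg _
  have hBnn : 0 ≤ |L y' y'| := abs_nonneg _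
  have hsq : L x' x * L y' y ≤ (γ x' y' * E) ^ 2 := by
    rw [hγ]
    nlinarith [mul_le_mul hA hB hb (mul_nonneg hAnn hEpos.le), sq_nonneg ((|L x' x'| - |L y' y'|) * E)]
  have hγnn : 0 ≤ γ x' y' * E := by
    rw [hγ]; positivity
  calc Real.sqrt (L x' x * L y' y) ≤ Real.sqrt ((γ x' y' * E) ^ 2) := Real.sqrt_le_sqrt hsq
    _ = γ x' y' * E := Real.sqrt_sq hγnn
end

section
/- Let d ≥ 1, let ω : Fin d → ℝ be injective, let β ∈ ℝ, and let τ be the d×d diagonal matrix with τ_{xx} = e^{−βω_x}/Z, where Z = Σ_x e^{−βω_x}. Let L be a real d×d matrix with L_{x'|x} ≥ 0 for x' ≠ x and Σ_{x'} L_{x'|x} = 0 for every column x, satisfying detailed balance L_{x'|x}·e^{−βω_x} = L_{x|x'}·e^{−βω_{x'}}. For each ν ∈ ℝ, ν ≠ 0, define K_ν := Σ_{(x,y) : ω_x − ω_y = ν, x ≠ y} √(L_{x|y})·|x⟩⟨y|, and define the superoperator 𝓛 on d×d complex matrices by 𝓛(X) := Σ_ν ( K_ν X K_ν† − (1/2){K_ν†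 K_ν, X} ), the sum running over the finitely many ν ≠ 0 with K_ν ≠ 0. Then 𝓛 satisfies the quantum detailed balance condition: Tr[𝓛(X·τ)·Y] = Tr[𝓛(τ·Y)·X] for all d×d complex matrices X and Y. (The optimal covariant Markovian generator with detailed-balanced rates is a Davies map.) -/
open Matrix Finset

set_option maxHeartbeats 1000000

/-- **The optimal covariant Markovian generator with detailed-balanced rates satisfies
quantum detailed balance (is a Davies map).** With Kraus operators
`K_ν = Σ_{ω_x−ω_y=ν, x≠y} √(L_{x|y}) |x⟩⟨y|` built from a detailed-balanced population
transfer rate matrix `L`, the Lindbladian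
`𝓛(X) = Σ_ν (K_ν X K_ν† − (1/2){K_ν†K_ν, X})` satisfies
`Tr[𝓛(X·τ)·Y] = Tr[𝓛(τ·Y)·X]` for the Gibbs state `τ` and all matrices `X`, `Y`. -/
theorem davies_quantum_detailed_balance
    (d : ℕ) (hd : 1 ≤ d) (ω : Fin d → ℝ) (hω : Function.Injective ω) (β : ℝ)
    (L : Matrix (Fin d) (Fin d) ℝ)
    (hLoff : ∀ x' x, x' ≠ x → 0 ≤ L x' x)
    (hLcol : ∀ x, ∑ x', L x' x = 0)
    (hdb : ∀ x x' : Fin d, L x' x * Real.exp (-β * ω x) = L x x' * Real.exp (-β * ω x'))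
    (Z : ℝ) (hZ : Z = ∑ x, Real.exp (-β * ω x))
    (τ : Matrix (Fin d) (Fin d) ℂ)
    (hτ : τ = Matrix.diagonal (fun x => ((Real.exp (-β * ω x) / Z : ℝ) : ℂ)))
    (K : ℝ → Matrix (Fin d) (Fin d) ℂ)
    (hK : ∀ ν x y, K ν x y =
      if ω x - ω y = ν ∧ x ≠ y then ((Real.sqrt (L x y) : ℝ) : ℂ) else 0)
    (F : Finset ℝ)
    (hF : F = Finset.image (fun p : Fin d × Fin d => ω p.1 - ω p.2)
      (Finset.univ.filter (fun p : Fin d × Fin d => p.1 ≠ p.2)))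
    (𝓛 : Matrix (Fin d) (Fin d) ℂ → Matrix (Fin d) (Fin d) ℂ)
    (h𝓛 : ∀ X, 𝓛 X = ∑ ν ∈ F,
      (K ν * X * (K ν)ᴴ
        - (1 / 2 : ℂ) • ((K ν)ᴴ * K ν * X + X * ((K ν)ᴴ * K ν)))) :
    ∀ X Y : Matrix (Fin d) (Fin d) ℂ,
      (𝓛 (X * τ) * Y).trace = (𝓛 (τ * Y) * X).trace := by
  intro X Y
  have hstar : ∀ r : ℝ, star ((r : ℝ) : ℂ) = ((r : ℝ) : ℂ) := fun r => by
    simp [Complex.star_def, Complex.conj_ofReal]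
  -- `K (-ν)` is proportional to `(K ν)ᴴ` (KMS/detailed balance at the level of Kraus ops)
  have hKsymm : ∀ ν : ℝ, K (-ν) = ((Real.exp (β * ν / 2) : ℝ) : ℂ) • (K ν)ᴴ := by
    intro ν
    ext x y
    rw [Matrix.smul_apply, Matrix.conjTranspose_apply, hK, hK]
    by_cases h : ω x - ω y = -ν ∧ x ≠ y
    · have h' : ω y - ω x = ν ∧ y ≠ x := ⟨by linarith [h.1], fun e => h.2 e.symm⟩
      rw [if_pos h, if_pos h', hstar, smul_eq_mul, ← Complex.ofReal_mul,
        Complex.ofReal_inj]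
      have hL : L x y = Real.exp (β * ν) * L y x := by
        have h1 := hdb y x
        have he : Real.exp (-β * ω x) = Real.exp (β * ν) * Real.exp (-β * ω y) := by
          rw [← Real.exp_add]
          congr 1
          have hν : ν = ω y - ω x := by linarith [h.1]
          rw [hν]; ring
        have h2 : L x y * Real.exp (-β * ω y)
            = (Real.exp (β * ν) * L y x) * Real.exp (-β * ω y) := by
          rw [h1, he]; ring
        exact mul_right_cancel₀ (Real.exp_ne_zero _) h2
      have hsq : Real.sqrt (Real.exp (β * ν)) = Real.exp (β * ν / 2) := by
        rw [show Real.exp (β * ν) = Real.exp (β * ν / 2) * Real.exp (β * ν / 2) by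
          rw [← Real.exp_add]; ring_nf]
        exact Real.sqrt_mul_self (Real.exp_pos _).le
      rw [hL, Real.sqrt_mul (Real.exp_pos _).le, hsq]
    · have h' : ¬(ω y - ω x = ν ∧ y ≠ x) := fun hc =>
        h ⟨by linarith [hc.1], fun e => hc.2 e.symm⟩
      rw [if_neg h, if_neg h', star_zero, smul_zero]
  -- `(K ν)ᴴ * K ν` commutes with the (diagonal) Gibbs state
  have hDτ : ∀ ν : ℝ, ((K ν)ᴴ * K ν) * τ = τ * ((K ν)ᴴ * K ν) := by
    intro ν
    ext a b
    rw [hτ, Matrix.mul_diagonal, Matrix.diagonal_mul]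
    by_cases hab : a = b
    · subst hab; ring
    · have hzero : ((K ν)ᴴ * K ν) a b = 0 := by
        rw [Matrix.mul_apply]
        apply Finset.sum_eq_zero
        intro c _
        rw [Matrix.conjTranspose_apply, hK, hK]
        by_cases h1 : ω c - ω a = ν ∧ c ≠ a
        · by_cases h2 : ω c - ω b = ν ∧ c ≠ b
          · exact absurd (hω (show ω a = ω b by linarith [h1.1, h2.1])) hab
          · rw [if_neg h2, mul_zero]
        · rw [if_neg h1, star_zero, zero_mul]
      rw [hzero, zero_mul, mul_zero]
  -- commutation of `τ` past `(K ν)ᴴ`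
  have hτKH : ∀ ν : ℝ, τ * (K ν)ᴴ = ((Real.exp (β * ν) : ℝ) : ℂ) • ((K ν)ᴴ * τ) := by
    intro ν
    ext a b
    rw [hτ, Matrix.smul_apply, Matrix.diagonal_mul, Matrix.mul_diagonal,
      Matrix.conjTranspose_apply, hK]
    by_cases h : ω b - ω a = ν ∧ b ≠ a
    · rw [if_pos h, hstar, smul_eq_mul]
      have he : Real.exp (β * ν) * Real.exp (-β * ω b) = Real.exp (-β * ω a) := by
        rw [← Real.exp_add]
        congr 1
        have hν : ν = ω b - ω a := h.1.symm
        rw [hν]; ring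
      have hre : Real.exp (-β * ω a) / Z * Real.sqrt (L b a)
          = Real.exp (β * ν) * (Real.sqrt (L b a) * (Real.exp (-β * ω b) / Z)) := by
        rw [← he]; ring
      push_cast
      exact_mod_cast hre
    · rw [if_neg h]
      simp
  have cyc2 : ∀ A B : Matrix (Fin d) (Fin d) ℂ,
      Matrix.trace (A * B) = Matrix.trace (B * A) := fun A B => Matrix.trace_mul_comm A B
  -- key per-frequency identity for the "jump" part
  have key : ∀ ν : ℝ,
      Matrix.trace (K ν * (X * τ) * (K ν)ᴴ * Y)
        = Matrix.trace (K (-ν) * (τ * Y) * (K (-ν))ᴴ * X) := by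
    intro ν
    set c : ℂ := ((Real.exp (β * ν / 2) : ℝ) : ℂ) with hc
    have hcc : ((Real.exp (β * ν) : ℝ) : ℂ) = c * c := by
      rw [hc, ← Complex.ofReal_mul, ← Real.exp_add,
        show β * ν / 2 + β * ν / 2 = β * ν from by ring]
    rw [hKsymm ν, Matrix.conjTranspose_smul, Matrix.conjTranspose_conjTranspose, hstar]
    have lhs' : K ν * (X * τ) * (K ν)ᴴ * Y = (K ν * X) * (τ * (K ν)ᴴ) * Y := by
      simp only [mul_assoc]
    rw [lhs', hτKH ν, hcc]
    have tr : Matrix.trace ((K ν * X) * ((K ν)ᴴ * τ) * Y)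
        = Matrix.trace ((K ν)ᴴ * (τ * Y) * K ν * X) := by
      calc Matrix.trace ((K ν * X) * ((K ν)ᴴ * τ) * Y)
          = Matrix.trace ((K ν * X) * ((K ν)ᴴ * (τ * Y))) := by
            congr 1; simp only [mul_assoc]
        _ = Matrix.trace (((K ν)ᴴ * (τ * Y)) * (K ν * X)) := cyc2 _ _
        _ = Matrix.trace ((K ν)ᴴ * (τ * Y) * K ν * X) := by
            congr 1; simp only [mul_assoc]
    simp only [Matrix.smul_mul, Matrix.mul_smul, Matrix.trace_smul, smul_eq_mul, smul_smul]
    rw [tr]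
  -- expansion of the trace of each summand
  have expand : ∀ (W V : Matrix (Fin d) (Fin d) ℂ) (ν : ℝ),
      Matrix.trace ((K ν * W * (K ν)ᴴ
          - (1 / 2 : ℂ) • ((K ν)ᴴ * K ν * W + W * ((K ν)ᴴ * K ν))) * V)
        = Matrix.trace (K ν * W * (K ν)ᴴ * V)
          - (1 / 2 : ℂ) * (Matrix.trace ((K ν)ᴴ * K ν * W * V)
            + Matrix.trace (W * ((K ν)ᴴ * K ν) * V)) := by
    intro W V ν
    rw [sub_mul, Matrix.smul_mul, add_mul, Matrix.trace_sub, Matrix.trace_smul,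
      Matrix.trace_add, smul_eq_mul]
  rw [h𝓛, h𝓛, Finset.sum_mul, Finset.sum_mul, Matrix.trace_sum, Matrix.trace_sum]
  simp only [expand]
  rw [Finset.sum_sub_distrib, Finset.sum_sub_distrib]
  have hFneg : ∀ ν ∈ F, -ν ∈ F := by
    intro ν hν
    rw [hF] at hν ⊢
    simp only [Finset.mem_image, Finset.mem_filter, Finset.mem_univ, true_and] at hν ⊢
    obtain ⟨p, hp, hpν⟩ := hν
    exact ⟨(p.2, p.1), fun e => hp e.symm, show ω p.2 - ω p.1 = -ν by rw [← hpν]; ring⟩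
  congr 1
  · -- jump parts
    calc ∑ ν ∈ F, Matrix.trace (K ν * (X * τ) * (K ν)ᴴ * Y)
        = ∑ ν ∈ F, Matrix.trace (K (-ν) * (τ * Y) * (K (-ν))ᴴ * X) :=
          Finset.sum_congr rfl (fun ν _ => key ν)
      _ = ∑ ν ∈ F, Matrix.trace (K ν * (τ * Y) * (K ν)ᴴ * X) := by
          refine Finset.sum_nbij' (fun ν => -ν) (fun ν => -ν) ?_ ?_ ?_ ?_ ?_
          · intro ν hν; exact hFneg ν hν
          · intro ν hν; exact hFneg ν hν
          · intro ν _; simp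
          · intro ν _; simp
          · intro ν _; rfl
  · -- anticommutator parts
    refine Finset.sum_congr rfl (fun ν _ => ?_)
    have h1 : Matrix.trace ((K ν)ᴴ * K ν * (X * τ) * Y)
        = Matrix.trace ((τ * Y) * ((K ν)ᴴ * K ν) * X) := by
      calc Matrix.trace ((K ν)ᴴ * K ν * (X * τ) * Y)
          = Matrix.trace (((K ν)ᴴ * K ν * X) * (τ * Y)) := by
            congr 1; simp only [mul_assoc]
        _ = Matrix.trace ((τ * Y) * ((K ν)ᴴ * K ν * X)) := cyc2 _ _
        _ = Matrix.trace ((τ * Y) * ((K ν)ᴴ * K ν) * X) := by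
            congr 1; simp only [mul_assoc]
    have h2 : Matrix.trace ((X * τ) * ((K ν)ᴴ * K ν) * Y)
        = Matrix.trace ((K ν)ᴴ * K ν * (τ * Y) * X) := by
      calc Matrix.trace ((X * τ) * ((K ν)ᴴ * K ν) * Y)
          = Matrix.trace (X * (τ * ((K ν)ᴴ * K ν) * Y)) := by
            congr 1; simp only [mul_assoc]
        _ = Matrix.trace ((τ * ((K ν)ᴴ * K ν) * Y) * X) := cyc2 _ _
        _ = Matrix.trace ((K ν)ᴴ * K ν * (τ * Y) * X) := by
            congr 2
            rw [← hDτ ν]; simp only [mul_assoc]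
    rw [h1, h2, add_comm]
end

section
/- Let d ≥ 1, let ω : Fin d → ℝ be injective, and let π be a probability vector on Fin d (π_x ≥ 0, Σ_x π_x = 1). Define the linear map ℰ on d×d complex matrices by ℰ(ρ)_{xx} := π_x·(Σ_y ρ_{yy}) for all x, and ℰ(ρ)_{xy} := √(π_x π_y)·ρ_{xy} for all x ≠ y. Then: (i) ℰ is trace-preserving and completely positive, i.e., its Choi matrix Σ_{x,y} ℰ(|x⟩⟨y|) ⊗ |x⟩⟨y| is positive semidefinite; (ii) ℰ is time-translation covariant: ⟨x'|ℰ(|x⟩⟨y|)|y'⟩ = 0 whenever ω_{x'} − ω_x ≠ ω_{y'} − ω_y; (iii) ℰ fixes diag(π) and maps every density matrix to one with populations π; and (iv) |ℰ(ρ)_{xy}| = √(π_x π_y)·|ρ_{xy}| for all x ≠ y, so ℰ preserves the fraction √(π_x π_y) of every coherence element. (Existence of a non-Markovian covariant channel sustaining coherence while relaxing populations to a fixed point.) -/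
/-!
The Choi matrix of `ℰ` is `|u⟩⟨u| + D` with `u = ∑ₓ √πₓ |x x⟩` and `D` diagonal with entry `πₓ`
at `(x, y)` for `x ≠ y`, hence positive semidefinite. Covariance holds because `ℰ(|x⟩⟨y|)` is a
multiple of `|x⟩⟨y|` when `x ≠ y` and diagonal when `x = y`.
-/

open Matrix
open scoped ComplexOrder

namespace Matrix

variable {n : Type*} [Fintype n] [DecidableEq n]

noncomputable def relaxingChannel (p : n → ℝ) (ρ : Matrix n n ℂ) : Matrix n n ℂ :=
  of fun x y => if x = y then (p x : ℂ) * ρ.trace else (√(p x * p y) : ℂ) * ρ x y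

def choiMatrix (Φ : Matrix n n ℂ → Matrix n n ℂ) : Matrix (n × n) (n × n) ℂ :=
  of fun i j => Φ (single i.2 j.2 1) i.1 j.1

def IsCovariant (ω : n → ℝ) (Φ : Matrix n n ℂ → Matrix n n ℂ) : Prop :=
  ∀ x' x y' y, ω x' - ω x ≠ ω y' - ω y → Φ (single x y 1) x' y' = 0

variable {p : n → ℝ}

@[simp] lemma relaxingChannel_apply_self (p : n → ℝ) (ρ : Matrix n n ℂ) (x : n) :
    relaxingChannel p ρ x x = p x * ρ.trace := if_pos rfl

lemma relaxingChannel_apply_of_ne (p : n → ℝ) (ρ : Matrix n n ℂ) {x y : n} (h : x ≠ y) :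
    relaxingChannel p ρ x y = (√(p x * p y) : ℂ) * ρ x y := if_neg h

lemma trace_relaxingChannel (hp : ∑ x, p x = 1) (ρ : Matrix n n ℂ) :
    (relaxingChannel p ρ).trace = ρ.trace := by
  have hp' : ∑ x, (p x : ℂ) = 1 := by exact_mod_cast hp
  simp only [trace, diag_apply, relaxingChannel_apply_self, ← Finset.sum_mul, hp', one_mul]

lemma relaxingChannel_diagonal (hp : ∑ x, p x = 1) :
    relaxingChannel p (diagonal fun x => (p x : ℂ)) = diagonal fun x => (p x : ℂ) := by
  ext x y
  rcases eq_or_ne x y with rfl | h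
  · simp [trace_diagonal, ← Complex.ofReal_sum, hp]
  · simp [relaxingChannel_apply_of_ne _ _ h, h]

lemma norm_relaxingChannel_apply_of_ne (p : n → ℝ) (ρ : Matrix n n ℂ) {x y : n} (h : x ≠ y) :
    ‖relaxingChannel p ρ x y‖ = √(p x * p y) * ‖ρ x y‖ := by
  rw [relaxingChannel_apply_of_ne _ _ h, norm_mul, Complex.norm_real,
    Real.norm_of_nonneg (Real.sqrt_nonneg _)]

lemma isCovariant_relaxingChannel (ω : n → ℝ) (p : n → ℝ) :
    IsCovariant ω (relaxingChannel p) := by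
  intro x' x y' y h
  rcases eq_or_ne x' y' with rfl | h'
  · have hxy : x ≠ y := by rintro rfl; exact h rfl
    simp [trace_single_eq_of_ne _ _ _ hxy]
  · rw [relaxingChannel_apply_of_ne _ _ h', single_apply_of_ne, mul_zero]
    rintro ⟨rfl, rfl⟩
    exact h (by ring)

lemma choiMatrix_relaxingChannel (hp : 0 ≤ p) :
    choiMatrix (relaxingChannel p) =
      vecMulVec (fun i : n × n => if i.1 = i.2 then (√(p i.1) : ℂ) else 0)
        (star fun i : n × n => if i.1 = i.2 then (√(p i.1) : ℂ) else 0) +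
      diagonal fun i => if i.1 = i.2 then 0 else (p i.1 : ℂ) := by
  ext ⟨a, b⟩ ⟨c, e⟩
  simp only [choiMatrix, of_apply, add_apply, vecMulVec_apply, diagonal_apply, Pi.star_apply]
  rcases eq_or_ne a c with rfl | hac
  · simp only [relaxingChannel_apply_self]
    rcases eq_or_ne b e with rfl | hbe
    · rcases eq_or_ne a b with rfl | hab
      · simp [← Complex.ofReal_mul, Real.mul_self_sqrt (hp _)]
      · simp [hab]
    · rcases eq_or_ne a b with rfl | hab
      · simp [hbe, trace_single_eq_of_ne _ _ _ hbe]
      · simp [hab, hbe, trace_single_eq_of_ne _ _ _ hbe]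
  · rw [relaxingChannel_apply_of_ne _ _ hac, Real.sqrt_mul (hp a)]
    by_cases h : b = a ∧ e = c
    · obtain ⟨rfl, rfl⟩ := h
      simp [hac]
    · rw [single_apply, if_neg h, mul_zero]
      rcases not_and_or.mp h with hba | hec
      · simp [Ne.symm hba, hac]
      · simp [Ne.symm hec, hac]

lemma posSemidef_choiMatrix_relaxingChannel (hp : 0 ≤ p) :
    (choiMatrix (relaxingChannel p)).PosSemidef := by
  rw [choiMatrix_relaxingChannel hp]
  refine (posSemidef_vecMulVec_self_star _).add (posSemidef_diagonal_iff.mpr fun i => ?_)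
  split_ifs
  · exact le_rfl
  · exact_mod_cast hp i.1

end Matrix

theorem coherence_sustaining_covariant_channel_general
    (d : ℕ) (ω : Fin d → ℝ)
    (pr : Fin d → ℝ) (hprnn : ∀ x, 0 ≤ pr x) (hprsum : ∑ x, pr x = 1)
    (E : Matrix (Fin d) (Fin d) ℂ → Matrix (Fin d) (Fin d) ℂ)
    (hE : ∀ ρ x y, E ρ x y =
      if x = y then ((pr x : ℝ) : ℂ) * ∑ z, ρ z z
      else ((Real.sqrt (pr x * pr y) : ℝ) : ℂ) * ρ x y) :
    (∀ ρ, (E ρ).trace = ρ.trace) ∧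
    (Matrix.PosSemidef (Matrix.of fun p q : Fin d × Fin d =>
      E (Matrix.single p.2 q.2 (1 : ℂ)) p.1 q.1)) ∧
    (∀ x' x y' y : Fin d, ω x' - ω x ≠ ω y' - ω y →
      E (Matrix.single x y (1 : ℂ)) x' y' = 0) ∧
    (E (Matrix.diagonal fun x => ((pr x : ℝ) : ℂ)) =
      Matrix.diagonal fun x => ((pr x : ℝ) : ℂ)) ∧
    (∀ ρ : Matrix (Fin d) (Fin d) ℂ, ρ.PosSemidef → ρ.trace = 1 →
      ∀ x, E ρ x x = ((pr x : ℝ) : ℂ)) ∧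
    (∀ ρ : Matrix (Fin d) (Fin d) ℂ, ∀ x y, x ≠ y →
      ‖E ρ x y‖ = Real.sqrt (pr x * pr y) * ‖ρ x y‖) := by
  obtain rfl : E = relaxingChannel pr := funext fun ρ => ext (hE ρ)
  exact ⟨trace_relaxingChannel hprsum, posSemidef_choiMatrix_relaxingChannel hprnn,
    isCovariant_relaxingChannel ω pr, relaxingChannel_diagonal hprsum,
    fun ρ _ hρ x => by simp [hρ], fun ρ _ _ h => norm_relaxingChannel_apply_of_ne pr ρ h⟩

/-- **A non-Markovian covariant channel sustaining coherence while relaxing populations.**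
The map `ℰ` with `ℰ(ρ)_{xx} = π_x Tr ρ` and `ℰ(ρ)_{xy} = √(π_x π_y) ρ_{xy}` (for `x ≠ y`)
is trace-preserving and completely positive (its Choi matrix is positive semidefinite),
time-translation covariant, fixes `diag(π)` and maps every density matrix to one with
populations `π`, while preserving the fraction `√(π_x π_y)` of every coherence element. -/
theorem coherence_sustaining_covariant_channel
    (d : ℕ) (hd : 1 ≤ d) (ω : Fin d → ℝ) (hω : Function.Injective ω)
    (pr : Fin d → ℝ) (hprnn : ∀ x, 0 ≤ pr x) (hprsum : ∑ x, pr x = 1)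
    (E : Matrix (Fin d) (Fin d) ℂ → Matrix (Fin d) (Fin d) ℂ)
    (hE : ∀ ρ x y, E ρ x y =
      if x = y then ((pr x : ℝ) : ℂ) * ∑ z, ρ z z
      else ((Real.sqrt (pr x * pr y) : ℝ) : ℂ) * ρ x y) :
    (∀ ρ, (E ρ).trace = ρ.trace) ∧
    (Matrix.PosSemidef (Matrix.of fun p q : Fin d × Fin d =>
      E (Matrix.single p.2 q.2 (1 : ℂ)) p.1 q.1)) ∧
    (∀ x' x y' y : Fin d, ω x' - ω x ≠ ω y' - ω y →
      E (Matrix.single x y (1 : ℂ)) x' y' = 0) ∧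
    (E (Matrix.diagonal fun x => ((pr x : ℝ) : ℂ)) =
      Matrix.diagonal fun x => ((pr x : ℝ) : ℂ)) ∧
    (∀ ρ : Matrix (Fin d) (Fin d) ℂ, ρ.PosSemidef → ρ.trace = 1 →
      ∀ x, E ρ x x = ((pr x : ℝ) : ℂ)) ∧
    (∀ ρ : Matrix (Fin d) (Fin d) ℂ, ∀ x y, x ≠ y →
      ‖E ρ x y‖ = Real.sqrt (pr x * pr y) * ‖ρ x y‖) :=
  coherence_sustaining_covariant_channel_general d ω pr hprnn hprsum E hE
end

section
/- Let d ≥ 3 and q ∈ (0,1]. Let Π be the d×d cyclic permutation matrix (Π_{i+1 mod d, i} = 1 for all i, all other entries 0), and let T(q) := (1−q)·I + q·Π. Then: (i) the complex number λ := 1 − q + q·e^{2πi/d} is an eigenvalue of T(q), and writing λ = r·e^{iφ} with r ≥ 0 and φ ∈ (−π, π], it satisfies r > e^{−|φ|·tan(π/d)}; and consequently (ii) T(q) is not embeddable: there exist no column-stochastic d×d matrix C and α ≥ 0 such that T(q) = exp(α(C − I)). (Probabilistic rigid translations cannot be achieved by Markovian dynamics.) -/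
/-!
Let `ω = e^{2πi/d}`. The row vector `(ω^j)_j` is a left eigenvector of the cyclic shift `Π` with
eigenvalue `ω`, hence of `T(q)` with eigenvalue `λ = 1 - q + qω`.

With `t = π/d`, the point `λ` lies on the chord from `1` to `e^{2it}`, i.e. on the line
`Re z cos t + Im z sin t = cos t`, so `‖λ‖ cos (arg λ - t) = cos t`. Since
`cos (φ - t) < (1 + φ tan t) cos t ≤ e^{φ tan t} cos t` for `φ > 0` (because `sin φ < φ`),
this forces `‖λ‖ > e^{-arg λ tan t}`.

If `T = exp (α (C - I))`, then `T = Q²` with `Q = exp (α (C - I) / 2)`, which is entrywise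
nonnegative with positive diagonal. From `Q i j Q j j ≤ T i j`, the support of `Q` lies in that
of `T`, which forces `Q (j+1) j > 0`; but then `T (j+2) j ≥ Q (j+2) (j+1) Q (j+1) j > 0`,
whereas this entry of `T` vanishes when `d ≥ 3`.
-/

open Matrix

attribute [local instance] Matrix.linftyOpNormedAddCommGroup Matrix.linftyOpNormedRing
  Matrix.linftyOpNormedAlgebra

theorem Complex.chord_re_mul_cos_add_im_mul_sin (q t : ℝ) :
    (1 - q + q * exp ((2 * t : ℝ) * I)).re * Real.cos t
      + (1 - q + q * exp ((2 * t : ℝ) * I)).im * Real.sin t = Real.cos t := by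
  simp only [add_re, add_im, sub_re, sub_im, one_re, one_im, ofReal_re, ofReal_im,
    re_ofReal_mul, im_ofReal_mul, exp_ofReal_mul_I_re, exp_ofReal_mul_I_im, Real.cos_two_mul,
    Real.sin_two_mul]
  linear_combination (2 * q * Real.cos t) * Real.sin_sq_add_cos_sq t

open Real in
theorem Real.cos_sub_lt_exp_mul_tan_mul_cos {φ t : ℝ} (hφ : 0 < φ) (ht₀ : 0 < t)
    (ht : t < π / 2) : cos (φ - t) < exp (φ * tan t) * cos t := by
  have hcos : 0 < cos t := cos_pos_of_mem_Ioo ⟨by linarith, ht⟩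
  have hsin : 0 < sin t := sin_pos_of_pos_of_lt_pi ht₀ (by linarith)
  calc cos (φ - t) = cos φ * cos t + sin φ * sin t := cos_sub φ t
    _ < 1 * cos t + φ * sin t :=
      add_lt_add_of_le_of_lt (mul_le_mul_of_nonneg_right (cos_le_one φ) hcos.le)
        (mul_lt_mul_of_pos_right (sin_lt hφ) hsin)
    _ = (φ * tan t + 1) * cos t := by rw [tan_eq_sin_div_cos]; field_simp; ring
    _ ≤ exp (φ * tan t) * cos t := by gcongr; exact add_one_le_exp _

theorem Complex.exp_neg_abs_arg_mul_tan_lt_norm {z : ℂ} {t : ℝ} (ht₀ : 0 < t)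
    (ht : t < Real.pi / 2) (hz : z.re * Real.cos t + z.im * Real.sin t = Real.cos t)
    (him : 0 < z.im) : Real.exp (-|z.arg| * Real.tan t) < ‖z‖ := by
  have hz₀ : z ≠ 0 := fun h => by simp [h] at him
  have hnorm : 0 < ‖z‖ := norm_pos_iff.2 hz₀
  have harg : 0 < z.arg := by
    rw [arg_of_im_pos him, Real.arccos_pos, div_lt_one hnorm]
    exact (le_abs_self _).trans_lt (abs_re_lt_norm.2 him.ne')
  have hline : ‖z‖ * Real.cos (z.arg - t) = Real.cos t := by
    rw [Real.cos_sub, mul_add, ← mul_assoc, ← mul_assoc, cos_arg hz₀, sin_arg,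
      mul_div_cancel₀ _ hnorm.ne', mul_div_cancel₀ _ hnorm.ne', hz]
  have hcos : 0 < Real.cos (z.arg - t) :=
    pos_of_mul_pos_right (hline ▸ Real.cos_pos_of_mem_Ioo ⟨by linarith, ht⟩) hnorm.le
  rw [abs_of_pos harg]
  refine lt_of_mul_lt_mul_right ?_ hcos.le
  calc Real.exp (-z.arg * Real.tan t) * Real.cos (z.arg - t)
      < Real.exp (-z.arg * Real.tan t) * (Real.exp (z.arg * Real.tan t) * Real.cos t) := by
        gcongr; exact Real.cos_sub_lt_exp_mul_tan_mul_cos harg ht₀ ht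
    _ = ‖z‖ * Real.cos (z.arg - t) := by rw [hline, ← mul_assoc, ← Real.exp_add]; simp

theorem Complex.exp_neg_abs_arg_mul_tan_lt_norm_of_chord {q t : ℝ} (hq : 0 < q) (ht₀ : 0 < t)
    (ht : t < Real.pi / 2) :
    Real.exp (-|(1 - q + q * exp ((2 * t : ℝ) * I)).arg| * Real.tan t)
      < ‖1 - q + q * exp ((2 * t : ℝ) * I)‖ := by
  refine exp_neg_abs_arg_mul_tan_lt_norm ht₀ ht (chord_re_mul_cos_add_im_mul_sin q t) ?_
  simp only [add_im, sub_im, one_im, ofReal_im, im_ofReal_mul, exp_ofReal_mul_I_im, sub_zero,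
    zero_add]
  exact mul_pos hq (Real.sin_pos_of_pos_of_lt_pi (by positivity) (by linarith))

namespace Matrix

variable {n : Type*} [Fintype n] [DecidableEq n]

theorem eval_charpoly_eq_zero_of_vecMul_eq_smul {K : Type*} [Field K] {M : Matrix n n K}
    {v : n → K} {μ : K} (hv : v ≠ 0) (h : v ᵥ* M = μ • v) : M.charpoly.eval μ = 0 := by
  rw [eval_charpoly, ← exists_vecMul_eq_zero_iff]
  exact ⟨v, hv, by ext; simp [vecMul_sub, h]⟩

theorem apply_mul_apply_le_mul_apply {l m o R : Type*} [Fintype m] [Semiring R]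
    [PartialOrder R] [IsOrderedRing R] {A : Matrix l m R} {B : Matrix m o R}
    (hA : ∀ i j, 0 ≤ A i j) (hB : ∀ i j, 0 ≤ B i j) (i : l) (j : m) (k : o) :
    A i j * B j k ≤ (A * B) i k :=
  Finset.single_le_sum (f := fun j => A i j * B j k) (fun j _ => mul_nonneg (hA i j) (hB j k))
    (Finset.mem_univ j)

theorem one_apply_le_exp_apply {A : Matrix n n ℝ} (hA : ∀ i j, 0 ≤ A i j) (i j : n) :
    (1 : Matrix n n ℝ) i j ≤ NormedSpace.exp A i j := by
  have hs := NormedSpace.expSeries_summable' (𝕂 := ℝ) A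
  have hexp : NormedSpace.exp A i j = ∑' k : ℕ, ((k.factorial : ℝ)⁻¹ • A ^ k) i j := by
    rw [NormedSpace.exp_eq_tsum ℝ]
    exact (congrFun (tsum_apply hs) j).trans (tsum_apply (Pi.summable.1 hs i))
  calc (1 : Matrix n n ℝ) i j = (((0 : ℕ).factorial : ℝ)⁻¹ • A ^ 0) i j := by simp
    _ ≤ _ := (Pi.summable.1 (Pi.summable.1 hs i) j).le_tsum 0 fun k _ =>
        mul_nonneg (by positivity) (pow_apply_nonneg hA k i j)
    _ = NormedSpace.exp A i j := hexp.symm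

theorem exp_sub_smul_one (A : Matrix n n ℝ) (c : ℝ) :
    NormedSpace.exp (A - c • 1) = Real.exp (-c) • NormedSpace.exp A := by
  rw [sub_eq_add_neg, ← neg_smul, exp_add_of_commute _ _ ((Commute.one_right A).smul_right _),
    smul_one_eq_diagonal, exp_diagonal, Pi.exp_def, ← Real.exp_eq_exp_ℝ,
    ← smul_one_eq_diagonal, Matrix.mul_smul, mul_one]

theorem exists_mul_self_eq_exp_smul_sub_one {C : Matrix n n ℝ} (hC : ∀ i j, 0 ≤ C i j) {α : ℝ}
    (hα : 0 ≤ α) : ∃ Q : Matrix n n ℝ, (∀ i j, 0 ≤ Q i j) ∧ (∀ i, 0 < Q i i) ∧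
      NormedSpace.exp (α • (C - 1)) = Q * Q := by
  have hbound : ∀ i j, Real.exp (-(α / 2)) * (1 : Matrix n n ℝ) i j
      ≤ NormedSpace.exp ((α / 2) • (C - 1)) i j := fun i j => by
    rw [smul_sub, exp_sub_smul_one, smul_apply, smul_eq_mul]
    exact mul_le_mul_of_nonneg_left
      (one_apply_le_exp_apply (fun i j => mul_nonneg (by positivity) (hC i j)) i j)
      (Real.exp_pos _).le
  refine ⟨NormedSpace.exp ((α / 2) • (C - 1)), fun i j => ?_, fun i => ?_, ?_⟩
  · refine (mul_nonneg (Real.exp_pos _).le ?_).trans (hbound i j)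
    rw [one_apply]
    split_ifs <;> norm_num
  · have h := hbound i i
    rw [one_apply_eq, mul_one] at h
    exact (Real.exp_pos _).trans_le h
  · rw [← exp_add_of_commute _ _ (Commute.refl _), ← add_smul, add_halves]

def cyclicShift (R : Type*) [Zero R] [One R] (d : ℕ) [NeZero d] : Matrix (Fin d) (Fin d) R :=
  of fun i j => if i = j + 1 then 1 else 0

section CyclicShift

variable {d : ℕ} [NeZero d]

theorem vecMul_cyclicShift {R : Type*} [NonAssocSemiring R] (v : Fin d → R) :
    v ᵥ* cyclicShift R d = fun j => v (j + 1) := by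
  ext j
  simp [vecMul, dotProduct, cyclicShift]

theorem map_smul_one_add_smul_cyclicShift {R S : Type*} [Semiring R] [Semiring S] (f : R →+* S)
    (a b : R) : (a • 1 + b • cyclicShift R d).map f = f a • 1 + f b • cyclicShift S d := by
  ext i j
  simp [cyclicShift, one_apply, apply_ite f]

theorem eval_charpoly_cyclicShift {K : Type*} [Field K] (a b : K) {ω : K} (hω : ω ^ d = 1) :
    (a • 1 + b • cyclicShift K d).charpoly.eval (a + b * ω) = 0 := by
  have hv : (fun j : Fin d => ω ^ (j : ℕ)) ≠ 0 := fun h => by simpa using congrFun h 0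
  refine eval_charpoly_eq_zero_of_vecMul_eq_smul hv ?_
  ext j
  have hshift : ω ^ ((j + 1 : Fin d) : ℕ) = ω * ω ^ (j : ℕ) := by
    rw [Fin.val_add, Fin.val_one', Nat.add_mod_mod, ← pow_eq_pow_mod _ hω, pow_succ']
  simp only [vecMul_add, vecMul_smul, vecMul_one, vecMul_cyclicShift, hshift, Pi.add_apply,
    Pi.smul_apply, smul_eq_mul]
  ring

theorem smul_one_add_smul_cyclicShift_ne_mul_self (hd : 3 ≤ d) (a : ℝ)
    {b : ℝ} (hb : b ≠ 0) {Q : Matrix (Fin d) (Fin d) ℝ} (hQ : ∀ i j, 0 ≤ Q i j)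
    (hQd : ∀ i, 0 < Q i i) : a • 1 + b • cyclicShift ℝ d ≠ Q * Q := by
  intro hT
  have hne : ∀ j : Fin d, j + 1 ≠ j ∧ j + 1 + 1 ≠ j := fun j => by
    have h1 : ((1 : Fin d) : ℕ) = 1 := by rw [Fin.val_one', Nat.mod_eq_of_lt (by omega)]
    rw [add_assoc, Ne, Ne, add_eq_left, add_eq_left, Fin.ext_iff, Fin.ext_iff, Fin.val_add, h1,
      Fin.val_zero, Nat.mod_eq_of_lt (by omega)]
    omega
  have hT_apply : ∀ i j,
      (Q * Q) i j = (if i = j then a else 0) + (if i = j + 1 then b else 0) := fun i j => by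
    simp [← hT, cyclicShift, one_apply]
  have hsupp : ∀ i j, i ≠ j → i ≠ j + 1 → Q i j = 0 := fun i j h₁ h₂ => by
    have := apply_mul_apply_le_mul_apply hQ hQ i j j
    rw [hT_apply, if_neg h₁, if_neg h₂, add_zero] at this
    nlinarith [hQ i j, hQd j]
  have hsub : ∀ j, 0 < Q (j + 1) j := fun j => by
    refine (hQ _ _).lt_of_ne' fun h0 => hb ?_
    have hsum : (Q * Q) (j + 1) j = 0 := by
      rw [mul_apply]
      refine Finset.sum_eq_zero fun k _ => ?_
      by_cases hk : k = j
      · rw [hk, h0, zero_mul]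
      by_cases hk' : k = j + 1
      · rw [hk', h0, mul_zero]
      · rw [hsupp k j hk hk', mul_zero]
    simpa [hT_apply, (hne j).1] using hsum
  have h := apply_mul_apply_le_mul_apply hQ hQ (0 + 1 + 1) (0 + 1) 0
  rw [hT_apply, if_neg (hne 0).2, if_neg fun h => (hne (0 + 1)).1 h, add_zero] at h
  nlinarith [hsub 0, hsub (0 + 1)]

end CyclicShift

end Matrix

/-- **Probabilistic rigid translations are not embeddable (non-Markovian).** For `d ≥ 3`
and `q ∈ (0,1]`, the stochastic matrix `T(q) = (1−q)I + qΠ` with `Π` the cyclic permutation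
has the eigenvalue `λ = 1 − q + q e^{2πi/d}`, whose polar form `λ = r e^{iφ}` violates the
embeddability bound `r ≤ e^{−|φ| tan(π/d)}`; consequently `T(q)` is not of the form
`exp(α(C − I))` with `α ≥ 0` and `C` column-stochastic. -/
theorem rigid_translation_not_embeddable
    (d : ℕ) (hd : 3 ≤ d) (q : ℝ) (hq : q ∈ Set.Ioc (0 : ℝ) 1)
    (Pc : Matrix (Fin d) (Fin d) ℝ)
    (hPc : ∀ i j : Fin d, Pc i j = if (i : ℕ) = ((j : ℕ) + 1) % d then 1 else 0)
    (T : Matrix (Fin d) (Fin d) ℝ)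
    (hT : T = (1 - q) • (1 : Matrix (Fin d) (Fin d) ℝ) + q • Pc)
    (lam : ℂ)
    (hlam : lam = 1 - q + q * Complex.exp (2 * Real.pi * Complex.I / d)) :
    ((T.map Complex.ofReal).charpoly.eval lam = 0) ∧
    Real.exp (-|lam.arg| * Real.tan (Real.pi / d)) < ‖lam‖ ∧
    ¬∃ (C : Matrix (Fin d) (Fin d) ℝ) (α : ℝ),
      (∀ i j, 0 ≤ C i j) ∧ (∀ j, ∑ i, C i j = 1) ∧ 0 ≤ α ∧
      T = NormedSpace.exp (α • (C - 1)) := by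
  have : NeZero d := ⟨by omega⟩
  have hshift : Pc = cyclicShift ℝ d := by
    ext i j
    simp only [hPc, cyclicShift, of_apply, Fin.ext_iff, Fin.val_add, Fin.val_one',
      Nat.add_mod_mod]
  subst hshift hT
  refine ⟨?_, ?_, ?_⟩
  · have hω : Complex.exp (2 * Real.pi * Complex.I / d) ^ d = 1 :=
      (Complex.isPrimitiveRoot_exp d (by omega)).pow_eq_one
    rw [show (Complex.ofReal : ℝ → ℂ) = Complex.ofRealHom from rfl,
      map_smul_one_add_smul_cyclicShift, hlam]
    simp only [Complex.ofRealHom_eq_coe, Complex.ofReal_sub, Complex.ofReal_one]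
    exact eval_charpoly_cyclicShift _ _ hω
  · have ht : Real.pi / d < Real.pi / 2 := by gcongr; exact_mod_cast (by omega : 2 < d)
    have hangle : 2 * Real.pi * Complex.I / d = ((2 * (Real.pi / d) : ℝ) : ℂ) * Complex.I := by
      push_cast; ring
    rw [hlam, hangle]
    exact Complex.exp_neg_abs_arg_mul_tan_lt_norm_of_chord hq.1 (by positivity) ht
  · rintro ⟨C, α, hC, -, hα, hexp⟩
    obtain ⟨Q, hQ, hQd, hQQ⟩ := exists_mul_self_eq_exp_smul_sub_one hC hα
    exact smul_one_add_smul_cyclicShift_ne_mul_self hd _ hq.1.ne' hQ hQd (hexp.trans hQQ)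
end
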